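/- arXiv:2504.19911 — 7 statements merged into one kernel-verified Lean document; each statement's English description precedes it below -/
import Mathlib

section
/- Let n be a natural number and let μ be the Lebesgue (product) measure on the cube [0,1]^n, which is the joint law of n independent Uniform[0,1] stick lengths. Then the measure of the set of points x ∈ [0,1]^n such that no three of the coordinates can form a triangle — i.e., for every three pairwise distinct indices i, j, k one has x_i + x_j ≤ x_k, or x_i + x_k ≤ x_j, or x_j + x_k ≤ x_i — equals ∏_{i=1}^{n} 1/F_i, the reciprocal of the n-th Fibonorial. -/
open Finset MeasureTheory

namespace NoTriAux

def U (y : ℕ → ℝ) : ℕ → ℝ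
  | 0 => y 0
  | 1 => y 1 - y 0
  | (k+2) => y (k+2) - y (k+1) - y k

def V (y : ℕ → ℝ) : ℕ → ℝ
  | 0 => y 0
  | (k+1) => y (k+1) - y k

lemma U_add (y z : ℕ → ℝ) (k : ℕ) : U (y + z) k = U y k + U z k := by
  match k with
  | 0 => simp [U]
  | 1 => simp [U]; ring
  | (k+2) => simp [U]; ring

lemma U_smul (c : ℝ) (y : ℕ → ℝ) (k : ℕ) : U (c • y) k = c * U y k := by
  match k with
  | 0 => simp [U]
  | 1 => simp [U]; ring
  | (k+2) => simp [U]; ring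

lemma V_add (y z : ℕ → ℝ) (k : ℕ) : V (y + z) k = V y k + V z k := by
  match k with
  | 0 => simp [V]
  | (k+1) => simp [V]; ring

lemma V_smul (c : ℝ) (y : ℕ → ℝ) (k : ℕ) : V (c • y) k = c * V y k := by
  match k with
  | 0 => simp [V]
  | (k+1) => simp [V]; ring

def ext0 {n : ℕ} (x : Fin n → ℝ) : ℕ → ℝ := fun m => if h : m < n then x ⟨m, h⟩ else 0

lemma ext0_add {n : ℕ} (x z : Fin n → ℝ) : ext0 (x + z) = ext0 x + ext0 z := by
  funext m; simp only [ext0, Pi.add_apply]; split <;> simp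

lemma ext0_smul {n : ℕ} (c : ℝ) (x : Fin n → ℝ) : ext0 (c • x) = c • ext0 x := by
  funext m; simp only [ext0, Pi.smul_apply, smul_eq_mul]; split <;> simp

noncomputable def eMap (n : ℕ) : (Fin n → ℝ) →ₗ[ℝ] (Fin n → ℝ) where
  toFun x := fun k => (Nat.fib (n - k) : ℝ) * U (ext0 x) k
  map_add' x z := by
    funext k
    simp only [ext0_add, U_add, Pi.add_apply]
    ring
  map_smul' c x := by
    funext k
    simp only [ext0_smul, U_smul, Pi.smul_apply, smul_eq_mul, RingHom.id_apply]
    ring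

noncomputable def dMap (n : ℕ) : (Fin n → ℝ) →ₗ[ℝ] (Fin n → ℝ) where
  toFun x := fun k => V (ext0 x) k
  map_add' x z := by
    funext k
    simp only [ext0_add, V_add, Pi.add_apply]
  map_smul' c x := by
    funext k
    simp only [ext0_smul, V_smul, Pi.smul_apply, smul_eq_mul, RingHom.id_apply]

lemma eMap_apply {n : ℕ} (x : Fin n → ℝ) (k : Fin n) :
    eMap n x k = (Nat.fib (n - k) : ℝ) * U (ext0 x) k := rfl

lemma dMap_apply {n : ℕ} (x : Fin n → ℝ) (k : Fin n) :
    dMap n x k = V (ext0 x) k := rfl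

lemma ext0_delta {n : ℕ} (i : Fin n) :
    ext0 (fun j' => if j' = i then (1:ℝ) else 0) = fun m => if m = (i:ℕ) then 1 else 0 := by
  funext m
  by_cases h : m < n
  · rw [show ext0 (fun j' => if j' = i then (1:ℝ) else 0) m = if (⟨m,h⟩ : Fin n) = i then 1 else 0 from dif_pos h]
    by_cases h2 : m = (i:ℕ)
    · rw [if_pos (Fin.ext h2), if_pos h2]
    · rw [if_neg (fun hc => h2 (by rw [← hc])), if_neg h2]
  · rw [show ext0 (fun j' => if j' = i then (1:ℝ) else 0) m = 0 from dif_neg h,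
      if_neg (fun (h2 : m = (i:ℕ)) => h (h2.symm ▸ i.isLt))]

lemma U_ind_lt (c k : ℕ) (h : k < c) : U (fun m => if m = c then (1:ℝ) else 0) k = 0 := by
  match k with
  | 0 => simp only [U]; rw [if_neg (by omega)]
  | 1 => simp only [U]; rw [if_neg (by omega), if_neg (by omega)]; ring
  | (k+2) =>
    simp only [U]
    rw [if_neg (by omega), if_neg (by omega), if_neg (by omega)]
    ring

lemma U_ind_diag (c : ℕ) : U (fun m => if m = c then (1:ℝ) else 0) c = 1 := by
  match c with
  | 0 => simp [U]
  | 1 => simp only [U]; norm_num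
  | (c+2) =>
    simp only [U]
    norm_num

lemma V_ind_lt (c k : ℕ) (h : k < c) : V (fun m => if m = c then (1:ℝ) else 0) k = 0 := by
  match k with
  | 0 => simp only [V]; rw [if_neg (by omega)]
  | (k+1) =>
    simp only [V]
    rw [if_neg (by omega), if_neg (by omega)]
    ring

lemma V_ind_diag (c : ℕ) : V (fun m => if m = c then (1:ℝ) else 0) c = 1 := by
  match c with
  | 0 => simp [V]
  | (c+1) =>
    simp only [V]
    norm_num

lemma single_eq_ite {n : ℕ} (i : Fin n) :
    (Pi.single i (1:ℝ) : Fin n → ℝ) = fun j' => if j' = i then (1:ℝ) else 0 := by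
  funext j'; simp [Pi.single_apply]

lemma det_eMap (n : ℕ) : LinearMap.det (eMap n) = ∏ k : Fin n, (Nat.fib (n - k) : ℝ) := by
  rw [← LinearMap.det_toMatrix']
  rw [Matrix.det_of_lowerTriangular _ ?_]
  · apply Finset.prod_congr rfl
    intro k _
    rw [LinearMap.toMatrix'_apply, eMap_apply, single_eq_ite, ext0_delta, U_ind_diag, mul_one]
  · intro k i hki
    have h2 : (k:ℕ) < (i:ℕ) := hki
    rw [LinearMap.toMatrix'_apply, eMap_apply, single_eq_ite, ext0_delta, U_ind_lt _ _ h2, mul_zero]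

lemma det_dMap (n : ℕ) : LinearMap.det (dMap n) = 1 := by
  rw [← LinearMap.det_toMatrix']
  rw [Matrix.det_of_lowerTriangular _ ?_]
  · rw [Finset.prod_eq_one]
    intro k _
    rw [LinearMap.toMatrix'_apply, dMap_apply, single_eq_ite, ext0_delta, V_ind_diag]
  · intro k i hki
    have h2 : (k:ℕ) < (i:ℕ) := hki
    rw [LinearMap.toMatrix'_apply, dMap_apply, single_eq_ite, ext0_delta, V_ind_lt _ _ h2]

lemma key (y : ℕ → ℝ) : ∀ k, y k = ∑ i ∈ range (k+1), (Nat.fib (k+1-i) : ℝ) * U y i := by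
  intro k
  induction k using Nat.strong_induction_on with
  | _ k ih =>
    match k with
    | 0 => simp [U]
    | 1 =>
      rw [show (1:ℕ)+1 = 2 from rfl, Finset.sum_range_succ, Finset.sum_range_one]
      simp [U]
    | (k+2) =>
      have h1 : y (k+1) = ∑ i ∈ range (k+2), (Nat.fib (k+2-i) : ℝ) * U y i := ih (k+1) (by omega)
      have h0 : y k = ∑ i ∈ range (k+1), (Nat.fib (k+1-i) : ℝ) * U y i := ih k (by omega)
      rw [Finset.sum_range_succ]
      have hsplit : ∀ i ∈ range (k+2), (Nat.fib (k+3-i) : ℝ) * U y i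
          = (Nat.fib (k+2-i) : ℝ) * U y i + (Nat.fib (k+1-i) : ℝ) * U y i := by
        intro i hi
        rw [mem_range] at hi
        have : k+3-i = (k+1-i) + 1 + 1 := by omega
        rw [this]
        have h2 : k+2-i = (k+1-i)+1 := by omega
        rw [Nat.fib_add_two, h2]
        push_cast
        ring
      rw [show k+2+1 = k+3 from rfl, Finset.sum_congr rfl hsplit, Finset.sum_add_distrib]
      have hlast : ∑ i ∈ range (k+2), (Nat.fib (k+1-i) : ℝ) * U y i
          = ∑ i ∈ range (k+1), (Nat.fib (k+1-i) : ℝ) * U y i := by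
        rw [Finset.sum_range_succ]
        simp
      rw [hlast, ← h1, ← h0]
      have h3 : k+3-(k+2) = 1 := by omega
      rw [h3]
      simp only [U, Nat.fib_one, Nat.cast_one, one_mul]
      ring


lemma V_sum (y : ℕ → ℝ) : ∀ k, ∑ i ∈ range (k+1), V y i = y k := by
  intro k
  induction k with
  | zero => simp [V]
  | succ k ih => rw [Finset.sum_range_succ, ih]; simp [V]



open Finset Set

def simplexSet (n : ℕ) : Set (Fin n → ℝ) := {v | (∀ i, 0 ≤ v i) ∧ ∑ i, v i ≤ 1}

def cubeSet (n : ℕ) : Set (Fin n → ℝ) := {x | ∀ i, x i ∈ Set.Icc (0:ℝ) 1}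

def monoSet (n : ℕ) : Set (Fin n → ℝ) := {x | Monotone x}

def triSet (n : ℕ) : Set (Fin n → ℝ) :=
  {x | (∀ i, x i ∈ Set.Icc (0 : ℝ) 1) ∧
        ∀ i j k : Fin n, i ≠ j → i ≠ k → j ≠ k →
          (x i + x j ≤ x k ∨ x i + x k ≤ x j ∨ x j + x k ≤ x i)}

lemma ext0_lt {n : ℕ} (x : Fin n → ℝ) (m : ℕ) (h : m < n) : ext0 x m = x ⟨m, h⟩ := dif_pos h

lemma sum_V_fin (n : ℕ) (x : Fin n → ℝ) :
    ∑ k : Fin n, V (ext0 x) k = ext0 x (n-1) := by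
  match n with
  | 0 => simp [ext0]
  | (m+1) =>
    rw [Fin.sum_univ_eq_sum_range (fun k => V (ext0 x) k) (m+1), V_sum]
    norm_num

lemma sum_U_fin (n : ℕ) (x : Fin n → ℝ) :
    ∑ k : Fin n, (Nat.fib (n - (k:ℕ)) : ℝ) * U (ext0 x) k = ext0 x (n-1) := by
  match n with
  | 0 => simp [ext0]
  | (m+1) =>
    rw [Fin.sum_univ_eq_sum_range (fun k => (Nat.fib (m+1-k) : ℝ) * U (ext0 x) k) (m+1)]
    rw [show m+1-1 = m from rfl]
    exact (key (ext0 x) m).symm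

/-- monotonicity from nonneg steps -/
lemma mono_of_step {n : ℕ} {y : ℕ → ℝ} (hstep : ∀ k, k + 1 < n → y k ≤ y (k+1)) :
    ∀ c, c < n → ∀ a, a ≤ c → y a ≤ y c := by
  intro c
  induction c with
  | zero =>
    intro _ a ha
    have : a = 0 := Nat.le_zero.mp ha
    rw [this]
  | succ c ih =>
    intro hc a ha
    rcases Nat.eq_or_lt_of_le ha with h | h
    · rw [h]
    · exact le_trans (ih (by omega) a (by omega)) (hstep c hc)

lemma L1 (n : ℕ) : dMap n ⁻¹' simplexSet n = cubeSet n ∩ monoSet n := by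
  ext x
  have hyx : ∀ (m : ℕ) (h : m < n), ext0 x m = x ⟨m, h⟩ := fun m h => dif_pos h
  simp only [Set.mem_preimage, simplexSet, cubeSet, monoSet, Set.mem_setOf_eq, Set.mem_inter_iff]
  have hsum : ∑ k : Fin n, dMap n x k = ext0 x (n-1) := sum_V_fin n x
  constructor
  · rintro ⟨h0, hs⟩
    rw [hsum] at hs
    have hV : ∀ k, (h : k < n) → 0 ≤ V (ext0 x) k := fun k h => h0 ⟨k, h⟩
    have hstep : ∀ k, k + 1 < n → ext0 x k ≤ ext0 x (k+1) := by
      intro k h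
      have h2 := hV (k+1) h
      simp only [V] at h2
      linarith
    have hmono := mono_of_step hstep
    have hnn : ∀ m, (h : m < n) → 0 ≤ ext0 x m := by
      intro m h
      have h2 := hV 0 (by omega)
      simp only [V] at h2
      exact le_trans h2 (hmono m h 0 (by omega))
    have hub : ∀ m, (h : m < n) → ext0 x m ≤ 1 := by
      intro m h
      exact le_trans (hmono (n-1) (by omega) m (by omega)) hs
    refine ⟨fun i => ?_, fun a b hab => ?_⟩
    · rw [← hyx i.1 i.2]
      exact ⟨hnn i.1 i.2, hub i.1 i.2⟩
    · rw [← hyx a.1 a.2, ← hyx b.1 b.2]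
      exact hmono b.1 b.2 a.1 hab
  · rintro ⟨hcube, hmono⟩
    constructor
    · intro k
      obtain ⟨kv, hkn⟩ := k
      show 0 ≤ V (ext0 x) kv
      match kv, hkn with
      | 0, hkn =>
        simp only [V]
        rw [hyx 0 hkn]
        exact (hcube _).1
      | (m+1), hkn =>
        simp only [V]
        rw [hyx (m+1) hkn, hyx m (by omega)]
        have hle : (⟨m, by omega⟩ : Fin n) ≤ ⟨m+1, hkn⟩ := by
          simp [Fin.le_def]
        linarith [hmono hle]
    · rw [hsum]
      rcases Nat.eq_zero_or_pos n with h | h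
      · subst h; simp [ext0]
      · rw [hyx (n-1) (by omega)]
        exact (hcube _).2

lemma L2 (n : ℕ) : eMap n ⁻¹' simplexSet n = triSet n ∩ monoSet n := by
  ext x
  have hyx : ∀ (m : ℕ) (h : m < n), ext0 x m = x ⟨m, h⟩ := fun m h => dif_pos h
  simp only [Set.mem_preimage, simplexSet, triSet, monoSet, Set.mem_setOf_eq, Set.mem_inter_iff]
  have hsum : ∑ k : Fin n, eMap n x k = ext0 x (n-1) := sum_U_fin n x
  set y := ext0 x with hy
  constructor
  · rintro ⟨h0, hs⟩
    rw [hsum] at hs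
    have hU : ∀ k, k < n → 0 ≤ U y k := by
      intro k hk
      have h2 := h0 ⟨k, hk⟩
      have hf : (0:ℝ) < (Nat.fib (n - k) : ℝ) := by
        exact_mod_cast Nat.fib_pos.mpr (by omega)
      exact nonneg_of_mul_nonneg_right h2 hf
    have hnn : ∀ k, k < n → 0 ≤ y k := by
      intro k hk
      rw [key y k]
      apply Finset.sum_nonneg
      intro i hi
      rw [Finset.mem_range] at hi
      exact mul_nonneg (by positivity) (hU i (by omega))
    have hstep : ∀ k, k + 1 < n → y k ≤ y (k+1) := by
      intro k hk
      match k with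
      | 0 =>
        have := hU 1 hk
        simp only [U] at this
        linarith
      | (m+1) =>
        have h2 := hU (m+2) hk
        simp only [U] at h2
        have h3 := hnn m (by omega)
        linarith
    have hmono := mono_of_step hstep
    have hfib : ∀ m, m + 2 < n → y m + y (m+1) ≤ y (m+2) := by
      intro m hm
      have h2 := hU (m+2) hm
      simp only [U] at h2
      linarith
    have sorted3 : ∀ a b c : ℕ, a < b → b < c → c < n → y a + y b ≤ y c := by
      intro a b c hab hbc hcn
      have h1 : y a ≤ y (b-1) := hmono (b-1) (by omega) a (by omega)
      have h2 := hfib (b-1) (by omega)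
      rw [show b-1+1 = b from by omega, show b-1+2 = b+1 from by omega] at h2
      have h3 : y (b+1) ≤ y c := hmono c (by omega) (b+1) (by omega)
      linarith
    have aux : ∀ i j k : Fin n, (i:ℕ) < (j:ℕ) → (j:ℕ) < (k:ℕ) → x i + x j ≤ x k := by
      intro i j k h1 h2
      have := sorted3 i j k h1 h2 k.isLt
      rwa [hyx i.1 i.isLt, hyx j.1 j.isLt, hyx k.1 k.isLt] at this
      
    have hub : ∀ m, (h : m < n) → y m ≤ 1 := fun m h =>
      le_trans (hmono (n-1) (by omega) m (by omega)) hs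
    refine ⟨⟨fun i => ?_, fun i j k hij hik hjk => ?_⟩, fun a b hab => ?_⟩
    · rw [← hyx i.1 i.2]
      exact ⟨hnn i.1 i.2, hub i.1 i.2⟩
    · have hij' : (i:ℕ) ≠ (j:ℕ) := fun h => hij (Fin.ext h)
      have hik' : (i:ℕ) ≠ (k:ℕ) := fun h => hik (Fin.ext h)
      have hjk' : (j:ℕ) ≠ (k:ℕ) := fun h => hjk (Fin.ext h)
      rcases lt_trichotomy (i:ℕ) (j:ℕ) with h1 | h1 | h1
      · rcases lt_trichotomy (j:ℕ) (k:ℕ) with h2 | h2 | h2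
        · exact Or.inl (aux i j k h1 h2)
        · exact absurd h2 hjk'
        · rcases lt_trichotomy (i:ℕ) (k:ℕ) with h3 | h3 | h3
          · exact Or.inr (Or.inl (aux i k j h3 h2))
          · exact absurd h3 hik'
          · exact Or.inr (Or.inl (by linarith [aux k i j h3 h1]))
      · exact absurd h1 hij'
      · rcases lt_trichotomy (i:ℕ) (k:ℕ) with h2 | h2 | h2
        · exact Or.inl (by linarith [aux j i k h1 h2])
        · exact absurd h2 hik'
        · rcases lt_trichotomy (j:ℕ) (k:ℕ) with h3 | h3 | h3
          · exact Or.inr (Or.inr (aux j k i h3 h2))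
          · exact absurd h3 hjk'
          · exact Or.inr (Or.inr (by linarith [aux k j i h3 h1]))
    · rw [← hyx a.1 a.2, ← hyx b.1 b.2]
      exact hmono b.1 b.2 a.1 hab
  · rintro ⟨⟨hcube, htri⟩, hmono⟩
    have hynn : ∀ m, (h : m < n) → 0 ≤ y m := by
      intro m h
      rw [hyx m h]
      exact (hcube _).1
    have hymono : ∀ a c : ℕ, (hac : a ≤ c) → (h : c < n) → y a ≤ y c := by
      intro a c hac h
      rw [hyx a (by omega), hyx c h]
      exact hmono (by simp [Fin.le_def]; omega)
    have hU : ∀ k, (hk : k < n) → 0 ≤ U y k := by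
      intro k hk
      match k with
      | 0 => simpa only [U] using hynn 0 hk
      | 1 =>
        simp only [U]
        linarith [hymono 0 1 (by omega) hk]
      | (m+2) =>
        simp only [U]
        have d01 : ((⟨m, by omega⟩ : Fin n) : ℕ) ≠ ((⟨m+1, by omega⟩ : Fin n) : ℕ) := by simp
        have h1 := htri ⟨m, by omega⟩ ⟨m+1, by omega⟩ ⟨m+2, hk⟩
          (by simp [Fin.ext_iff]) (by simp [Fin.ext_iff]) (by simp [Fin.ext_iff])
        rw [← hyx m (by omega), ← hyx (m+1) (by omega), ← hyx (m+2) hk] at h1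
        have h2 := hynn m (by omega)
        have h3 := hymono m (m+1) (by omega) (by omega)
        have h4 := hymono (m+1) (m+2) (by omega) hk
        rcases h1 with h | h | h <;> linarith
    constructor
    · intro k
      exact mul_nonneg (by positivity) (hU k.1 k.isLt)
    · rw [hsum]
      rcases Nat.eq_zero_or_pos n with h | h
      · subst h; simp [y, ext0]
      · rw [hyx (n-1) (by omega)]
        exact (hcube _).2

lemma measurableSet_mono (n : ℕ) (σ : Equiv.Perm (Fin n)) :
    MeasurableSet {x : Fin n → ℝ | Monotone (x ∘ σ)} := by
  have : {x : Fin n → ℝ | Monotone (x ∘ σ)}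
      = ⋂ (i) (j), {x | i ≤ j → x (σ i) ≤ x (σ j)} := by
    ext x; simp [Monotone, Set.mem_iInter, Function.comp]
  rw [this]
  refine MeasurableSet.iInter fun i => MeasurableSet.iInter fun j => ?_
  by_cases h : i ≤ j
  · simp only [h, forall_true_left]
    exact measurableSet_le (measurable_pi_apply (σ i)) (measurable_pi_apply (σ j))
  · have : {x : Fin n → ℝ | i ≤ j → x (σ i) ≤ x (σ j)} = Set.univ := by
      ext x; simp [h]
    rw [this]; exact MeasurableSet.univ

lemma noninj_null (n : ℕ) :
    volume {x : Fin n → ℝ | ¬ Function.Injective x} = 0 := by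
  have hsub : {x : Fin n → ℝ | ¬ Function.Injective x}
      ⊆ ⋃ (p : Fin n × Fin n) (_ : p.1 ≠ p.2), {x | x p.1 = x p.2} := by
    intro x hx
    simp only [Function.Injective, not_forall] at hx
    obtain ⟨a, b, hab, hne⟩ := hx
    exact Set.mem_iUnion.2 ⟨(a, b), Set.mem_iUnion.2 ⟨hne, hab⟩⟩
  refine measure_mono_null hsub ?_
  refine measure_iUnion_null fun p => measure_iUnion_null fun hne => ?_
  have : {x : Fin n → ℝ | x p.1 = x p.2}
      = (LinearMap.ker ((LinearMap.proj p.1 : (Fin n → ℝ) →ₗ[ℝ] ℝ) - LinearMap.proj p.2) : Set (Fin n → ℝ)) := by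
    ext x
    simp [LinearMap.mem_ker, sub_eq_zero]
  rw [this]
  apply Measure.addHaar_submodule
  intro htop
  have h1 : (Pi.single p.1 1 : Fin n → ℝ) ∈ LinearMap.ker
      ((LinearMap.proj p.1 : (Fin n → ℝ) →ₗ[ℝ] ℝ) - LinearMap.proj p.2) := by
    rw [htop]; trivial
  simp [LinearMap.mem_ker, sub_eq_zero, Pi.single_apply, hne, Ne.symm hne] at h1

lemma perm_decomp {n : ℕ} (B : Set (Fin n → ℝ)) (hB : MeasurableSet B)
    (hinv : ∀ (σ : Equiv.Perm (Fin n)) x, x ∈ B → x ∘ σ ∈ B) :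
    volume B = (n.factorial : ENNReal) * volume (B ∩ {x | Monotone x}) := by
  classical
  set M : Equiv.Perm (Fin n) → Set (Fin n → ℝ) := fun σ => {x | Monotone (x ∘ σ)} with hM
  have hcover : B = ⋃ σ, B ∩ M σ := by
    ext x
    simp only [Set.mem_iUnion, Set.mem_inter_iff]
    exact ⟨fun hx => ⟨Tuple.sort x, hx, Tuple.monotone_sort x⟩, fun ⟨σ, hx, _⟩ => hx⟩
  have hae : Pairwise (Function.onFun (AEDisjoint volume) fun σ => B ∩ M σ) := by
    intro σ τ hst
    refine measure_mono_null ?_ (noninj_null n)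
    rintro x ⟨⟨_, hσ⟩, ⟨_, hτ⟩⟩
    · intro hinj
      apply hst
      have hσ' : StrictMono (x ∘ σ) := hσ.strictMono_of_injective (hinj.comp σ.injective)
      have hτ' : StrictMono (x ∘ τ) := hτ.strictMono_of_injective (hinj.comp τ.injective)
      have hr : Set.range (x ∘ σ) = Set.range (x ∘ τ) := by
        rw [Set.range_comp, Set.range_comp, σ.surjective.range_eq, τ.surjective.range_eq]
      haveI : WellFoundedLT (Fin n) := inferInstance
      have this : x ∘ ⇑σ = x ∘ ⇑τ := (hσ'.range_inj hτ').1 hr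
      ext i
      exact congrArg Fin.val (hinj (congrFun this i))
  have hmeas : ∀ σ, NullMeasurableSet (B ∩ M σ) volume := fun σ =>
    (hB.inter (measurableSet_mono n σ)).nullMeasurableSet
  have hval : ∀ σ : Equiv.Perm (Fin n), volume (B ∩ M σ) = volume (B ∩ M 1) := by
    intro σ
    have hmp := MeasureTheory.volume_measurePreserving_piCongrLeft (fun _ : Fin n => ℝ) σ.symm
    have happ : ∀ x : Fin n → ℝ, (MeasurableEquiv.piCongrLeft (fun _ => ℝ) σ.symm) x = x ∘ σ := by
      intro x; funext i
      simp [MeasurableEquiv.piCongrLeft, Equiv.piCongrLeft]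
    have hpre : (MeasurableEquiv.piCongrLeft (fun _ : Fin n => ℝ) σ.symm) ⁻¹' (B ∩ M 1)
        = B ∩ M σ := by
      ext x
      simp only [Set.mem_preimage, happ, Set.mem_inter_iff, hM, Set.mem_setOf_eq]
      constructor
      · rintro ⟨h1, h2⟩
        refine ⟨?_, by simpa using h2⟩
        have h3 := hinv σ.symm _ h1
        have h4 : (x ∘ σ) ∘ σ.symm = x := by funext i; simp
        rwa [h4] at h3
      · rintro ⟨h1, h2⟩
        exact ⟨hinv σ _ h1, by simpa using h2⟩
    rw [← hpre, hmp.measure_preimage (hB.inter (measurableSet_mono n 1)).nullMeasurableSet]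
  have hone : B ∩ M 1 = B ∩ {x | Monotone x} := by
    simp [hM]
  have huni : volume (⋃ σ, B ∩ M σ) = ∑' σ, volume (B ∩ M σ) := measure_iUnion₀ hae hmeas
  rw [← hcover] at huni
  calc volume B = ∑' σ, volume (B ∩ M σ) := huni
    _ = ∑ σ : Equiv.Perm (Fin n), volume (B ∩ M σ) := tsum_fintype _
    _ = ∑ _σ : Equiv.Perm (Fin n), volume (B ∩ {x | Monotone x}) := by
        refine Finset.sum_congr rfl fun σ _ => ?_
        rw [hval σ, hone]
    _ = (n.factorial : ENNReal) * volume (B ∩ {x | Monotone x}) := by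
        rw [Finset.sum_const, Finset.card_univ, Fintype.card_perm, Fintype.card_fin,
          nsmul_eq_mul]


lemma measurableSet_triSet (n : ℕ) : MeasurableSet (triSet n) := by
  have hrw : triSet n = (⋂ i, {x : Fin n → ℝ | x i ∈ Set.Icc (0:ℝ) 1}) ∩
      ⋂ (i) (j) (k), {x : Fin n → ℝ | i ≠ j → i ≠ k → j ≠ k →
        (x i + x j ≤ x k ∨ x i + x k ≤ x j ∨ x j + x k ≤ x i)} := by
    ext x
    simp only [triSet, Set.mem_setOf_eq, Set.mem_inter_iff, Set.mem_iInter]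
  rw [hrw]
  refine MeasurableSet.inter (MeasurableSet.iInter fun i => ?_)
    (MeasurableSet.iInter fun i => MeasurableSet.iInter fun j => MeasurableSet.iInter fun k => ?_)
  · exact measurableSet_Icc.preimage (measurable_pi_apply i)
  · by_cases hij : i ≠ j
    · by_cases hik : i ≠ k
      · by_cases hjk : j ≠ k
        · have : {x : Fin n → ℝ | i ≠ j → i ≠ k → j ≠ k →
              (x i + x j ≤ x k ∨ x i + x k ≤ x j ∨ x j + x k ≤ x i)}
            = {x : Fin n → ℝ | x i + x j ≤ x k} ∪ {x | x i + x k ≤ x j} ∪ {x | x j + x k ≤ x i} := by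
            ext x; simp [hij, hik, hjk, or_assoc]
          rw [this]
          refine MeasurableSet.union (MeasurableSet.union ?_ ?_) ?_ <;>
            exact measurableSet_le (by fun_prop) (by fun_prop)
        · have : {x : Fin n → ℝ | i ≠ j → i ≠ k → j ≠ k →
              (x i + x j ≤ x k ∨ x i + x k ≤ x j ∨ x j + x k ≤ x i)} = Set.univ := by
            ext x; simp [hjk]
          rw [this]; exact MeasurableSet.univ
      · have : {x : Fin n → ℝ | i ≠ j → i ≠ k → j ≠ k →
            (x i + x j ≤ x k ∨ x i + x k ≤ x j ∨ x j + x k ≤ x i)} = Set.univ := by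
          ext x; simp [hik]
        rw [this]; exact MeasurableSet.univ
    · have : {x : Fin n → ℝ | i ≠ j → i ≠ k → j ≠ k →
          (x i + x j ≤ x k ∨ x i + x k ≤ x j ∨ x j + x k ≤ x i)} = Set.univ := by
        ext x; simp [hij]
      rw [this]; exact MeasurableSet.univ

lemma triSet_inv (n : ℕ) : ∀ (σ : Equiv.Perm (Fin n)) x, x ∈ triSet n → x ∘ σ ∈ triSet n := by
  rintro σ x ⟨h1, h2⟩
  refine ⟨fun i => h1 (σ i), fun i j k hij hik hjk => ?_⟩
  exact h2 (σ i) (σ j) (σ k) (fun h => hij (σ.injective h)) (fun h => hik (σ.injective h))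
    (fun h => hjk (σ.injective h))

lemma measurableSet_cubeSet (n : ℕ) : MeasurableSet (cubeSet n) := by
  have : cubeSet n = Set.pi Set.univ (fun _ : Fin n => Set.Icc (0:ℝ) 1) := by
    ext x
    simp only [cubeSet, Set.mem_setOf_eq, Set.mem_pi, Set.mem_univ, forall_true_left,
      Set.mem_Icc]
  rw [this]
  exact MeasurableSet.univ_pi fun _ => measurableSet_Icc

lemma cube_volume (n : ℕ) : volume (cubeSet n) = 1 := by
  have : cubeSet n = Set.pi Set.univ (fun _ : Fin n => Set.Icc (0:ℝ) 1) := by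
    ext x
    simp only [cubeSet, Set.mem_setOf_eq, Set.mem_pi, Set.mem_univ, forall_true_left,
      Set.mem_Icc]
  rw [this, volume_pi_pi]
  simp [Real.volume_Icc]

lemma cube_inv (n : ℕ) : ∀ (σ : Equiv.Perm (Fin n)) x, x ∈ cubeSet n → x ∘ σ ∈ cubeSet n :=
  fun σ x h i => h (σ i)

lemma prod_fib (n : ℕ) :
    ∏ k : Fin n, (Nat.fib (n - (k:ℕ)) : ℝ) = ∏ i ∈ Finset.Icc 1 n, (Nat.fib i : ℝ) := by
  rw [Fin.prod_univ_eq_prod_range (fun k => (Nat.fib (n-k) : ℝ)) n]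
  have h1 : ∏ j ∈ Finset.range n, (Nat.fib (n-j) : ℝ)
      = ∏ j ∈ Finset.range n, (Nat.fib (j+1) : ℝ) := by
    rw [← Finset.prod_range_reflect (fun j => (Nat.fib (j+1) : ℝ)) n]
    refine Finset.prod_congr rfl fun j hj => ?_
    rw [Finset.mem_range] at hj
    rw [show n - 1 - j + 1 = n - j from by omega]
  rw [h1, ← Finset.Ico_add_one_right_eq_Icc, Finset.prod_Ico_eq_prod_range]
  refine Finset.prod_congr (by norm_num) fun j hj => ?_
  rw [Nat.add_comm 1 j]

end NoTriAux

open NoTriAux in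
/-- If `n` real numbers are chosen uniformly from `[0,1]`, the probability that no three
of them can form a triangle is the reciprocal of the `n`-th Fibonorial `F₁F₂⋯Fₙ`. -/
theorem no_triangle_prob_eq_inv_fibonorial (n : ℕ) :
    volume {x : Fin n → ℝ |
        (∀ i, x i ∈ Set.Icc (0 : ℝ) 1) ∧
        ∀ i j k : Fin n, i ≠ j → i ≠ k → j ≠ k →
          (x i + x j ≤ x k ∨ x i + x k ≤ x j ∨ x j + x k ≤ x i)} =
      ∏ i ∈ Finset.Icc 1 n, (1 / (Nat.fib i : ENNReal)) := by
  show volume (triSet n) = _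
  set F : ℝ := ∏ i ∈ Finset.Icc 1 n, (Nat.fib i : ℝ) with hF
  have hFpos : 0 < F := by
    apply Finset.prod_pos
    intro i hi
    rw [Finset.mem_Icc] at hi
    exact_mod_cast Nat.fib_pos.mpr (by omega)
  have hdet : LinearMap.det (eMap n) = F := by rw [det_eMap, prod_fib]
  have hdetd : LinearMap.det (dMap n) = 1 := det_dMap n
  -- volume of the intersections via the linear maps
  have hAm : volume (triSet n ∩ {x | Monotone x})
      = ENNReal.ofReal F⁻¹ * volume (simplexSet n) := by
    rw [show triSet n ∩ {x | Monotone x} = triSet n ∩ monoSet n from rfl, ← L2,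
      Measure.addHaar_preimage_linearMap volume (by rw [hdet]; exact ne_of_gt hFpos), hdet,
      abs_of_pos (inv_pos.mpr hFpos)]
  have hCm : volume (cubeSet n ∩ {x | Monotone x}) = volume (simplexSet n) := by
    rw [show cubeSet n ∩ {x | Monotone x} = cubeSet n ∩ monoSet n from rfl, ← L1,
      Measure.addHaar_preimage_linearMap volume (by rw [hdetd]; exact one_ne_zero), hdetd]
    norm_num
  have hcube := perm_decomp (cubeSet n) (measurableSet_cubeSet n) (cube_inv n)
  rw [cube_volume n, hCm] at hcube
  have htri := perm_decomp (triSet n) (measurableSet_triSet n) (triSet_inv n)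
  rw [hAm] at htri
  rw [htri, mul_comm (ENNReal.ofReal F⁻¹), ← mul_assoc, ← hcube, one_mul]
  -- now show ENNReal.ofReal F⁻¹ equals the RHS
  have hstep : ∀ i ∈ Finset.Icc 1 n, (1 / (Nat.fib i : ENNReal))
      = ENNReal.ofReal (1 / (Nat.fib i : ℝ)) := by
    intro i hi
    rw [Finset.mem_Icc] at hi
    have hp : (0:ℝ) < (Nat.fib i : ℝ) := by exact_mod_cast Nat.fib_pos.mpr (by omega)
    rw [ENNReal.ofReal_div_of_pos hp, ENNReal.ofReal_one, ENNReal.ofReal_natCast]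
  rw [Finset.prod_congr rfl hstep, ← ENNReal.ofReal_prod_of_nonneg
    (fun i _ => by positivity)]
  congr 1
  rw [hF, ← Finset.prod_inv_distrib]
  exact Finset.prod_congr rfl fun i _ => (one_div _).symm
end

section
/- Let n ≥ 1 and let D_n = { x ∈ ℝ^n : x_j ≥ 0 for all j, and x_1 + x_2 + ⋯ + x_i ≤ x_{i+2} for every 1 ≤ i ≤ n − 2 }. Then the Lebesgue integral ∫_{D_n} exp(−(x_1 + ⋯ + x_n)) dx equals ∏_{i=1}^{n} 1/F_i. -/
open MeasureTheory Real Set ENNReal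

namespace NoTriangleAux

/-- Fibonacci-type coefficient sequence starting from `a, b`. -/
noncomputable def coef : ℕ → ℝ → ℝ → ℝ
  | 0, a, _ => a
  | 1, _, b => b
  | (k+2), a, b => coef k a b + coef (k+1) a b

lemma coef_pos {a b : ℝ} (ha : 0 < a) (hb : 0 < b) : ∀ k, 0 < coef k a b := by
  intro k
  induction k using Nat.twoStepInduction with
  | zero => exact ha
  | one => exact hb
  | more k h1 h2 => exact add_pos h1 h2

lemma coef_two_step (k : ℕ) (a b : ℝ) : coef (k+2) a b = coef k a b + coef (k+1) a b := rfl

lemma coef_shift (a b : ℝ) : ∀ k, coef (k+1) a b = coef k b (a+b) := by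
  intro k
  induction k using Nat.twoStepInduction with
  | zero => rfl
  | one => show coef 0 a b + coef 1 a b = a + b; simp [coef]
  | more k h1 h2 =>
    show coef (k+1) a b + coef (k+2) a b = coef k b (a+b) + coef (k+1) b (a+b)
    rw [h1, h2]

lemma coef_one_one : ∀ k, coef k 1 1 = (Nat.fib (k+1) : ℝ) := by
  intro k
  induction k using Nat.twoStepInduction with
  | zero => simp [coef]
  | one => simp [coef]
  | more k h1 h2 =>
    rw [coef_two_step, h1, h2]
    push_cast [Nat.fib_add_two]
    ring

/-- The region of interest, with the trivial constraints included uniformly. -/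
def Reg (n : ℕ) : Set (Fin n → ℝ) :=
  {x | ∀ m : Fin n, 0 ≤ x m ∧
    (∑ j ∈ Finset.univ.filter (fun j : Fin n => (j : ℕ) + 1 < (m : ℕ)), x j) ≤ x m}

lemma measurableSet_Reg (n : ℕ) : MeasurableSet (Reg n) := by
  have : Reg n = ⋂ m : Fin n, ({x : Fin n → ℝ | 0 ≤ x m} ∩
      {x : Fin n → ℝ |
        (∑ j ∈ Finset.univ.filter (fun j : Fin n => (j : ℕ) + 1 < (m : ℕ)), x j) ≤ x m}) := by
    ext x
    simp only [Reg, Set.mem_setOf_eq, Set.mem_iInter, Set.mem_inter_iff]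
  rw [this]
  refine MeasurableSet.iInter fun m => MeasurableSet.inter ?_ ?_
  · exact measurableSet_le measurable_const (measurable_pi_apply m)
  · exact measurableSet_le (Finset.measurable_sum _ fun j _ => measurable_pi_apply j)
      (measurable_pi_apply m)

lemma sum_filter_snoc {n : ℕ} (y : Fin (n+1) → ℝ) (t : ℝ) {k : ℕ} (hk : k ≤ n + 1) :
    (∑ j ∈ Finset.univ.filter (fun j : Fin (n+2) => (j : ℕ) + 1 < k),
        (Fin.snoc y t : Fin (n+2) → ℝ) j)
      = ∑ j ∈ Finset.univ.filter (fun j : Fin (n+1) => (j : ℕ) + 1 < k), y j := by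
  rw [Finset.sum_filter, Finset.sum_filter, Fin.sum_univ_castSucc]
  have h : ¬ (n + 1 + 1 < k) := by omega
  simp [h, Fin.snoc_castSucc, Fin.snoc_last]

lemma sum_filter_lt {n : ℕ} (y : Fin (n+1) → ℝ) :
    (∑ j ∈ Finset.univ.filter (fun j : Fin (n+1) => (j : ℕ) + 1 < n + 1), y j)
      = ∑ j : Fin n, y j.castSucc := by
  rw [Finset.sum_filter, Fin.sum_univ_castSucc]
  have h : ¬ (n + 1 < n + 1) := by omega
  have h2 : ∀ j : Fin n, ((j.castSucc : ℕ) + 1 < n + 1) := by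
    intro j; simpa using j.is_lt
  simp [h, h2]

lemma snoc_mem_Reg_iff {n : ℕ} (y : Fin (n+1) → ℝ) (t : ℝ) :
    (Fin.snoc y t : Fin (n+2) → ℝ) ∈ Reg (n+2)
      ↔ y ∈ Reg (n+1) ∧ (∑ j : Fin n, y j.castSucc) ≤ t ∧ 0 ≤ t := by
  constructor
  · intro h
    refine ⟨fun m => ?_, ?_, ?_⟩
    · have h1 := h m.castSucc
      have hk : (m : ℕ) ≤ n + 1 := le_of_lt m.is_lt
      rw [Fin.snoc_castSucc] at h1
      refine ⟨h1.1, ?_⟩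
      have := h1.2
      rwa [show ((m.castSucc : Fin (n+2)) : ℕ) = (m : ℕ) from rfl,
        sum_filter_snoc y t hk] at this
    · have h2 := (h (Fin.last (n+1))).2
      rw [Fin.snoc_last] at h2
      rwa [show ((Fin.last (n+1) : Fin (n+2)) : ℕ) = n + 1 from rfl,
        sum_filter_snoc y t le_rfl, sum_filter_lt] at h2
    · have := (h (Fin.last (n+1))).1
      rwa [Fin.snoc_last] at this
  · rintro ⟨hy, hσ, ht⟩ m
    refine Fin.lastCases ?_ ?_ m
    · rw [Fin.snoc_last]
      refine ⟨ht, ?_⟩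
      rw [show ((Fin.last (n+1) : Fin (n+2)) : ℕ) = n + 1 from rfl,
        sum_filter_snoc y t le_rfl, sum_filter_lt]
      exact hσ
    · intro m'
      rw [Fin.snoc_castSucc]
      refine ⟨(hy m').1, ?_⟩
      rw [show ((m'.castSucc : Fin (n+2)) : ℕ) = (m' : ℕ) from rfl,
        sum_filter_snoc y t (le_of_lt m'.is_lt)]
      exact (hy m').2

lemma lintegral_exp_Ici (a c : ℝ) (ha : 0 < a) :
    (∫⁻ t in Ici c, ENNReal.ofReal (Real.exp (-(a * t))))
      = ENNReal.ofReal (Real.exp (-(a * c)) / a) := by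
  rw [← Measure.restrict_congr_set Ioi_ae_eq_Ici]
  rw [← ofReal_integral_eq_lintegral_ofReal]
  · congr 1
    have h := integral_comp_mul_left_Ioi (fun u => Real.exp (-u)) c ha
    rw [h, integral_exp_neg_Ioi, smul_eq_mul, div_eq_inv_mul]
  · have := exp_neg_integrableOn_Ioi c ha
    simpa [neg_mul, IntegrableOn] using this
  · exact Filter.Eventually.of_forall fun t => (Real.exp_pos _).le

lemma lintegral_exp_Ici' (a C σ : ℝ) (ha : 0 < a) :
    (∫⁻ t in Ici σ, ENNReal.ofReal (Real.exp (-(a * t + C))))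
      = ENNReal.ofReal (1 / a) * ENNReal.ofReal (Real.exp (-(a * σ + C))) := by
  have h1 : ∀ t : ℝ, Real.exp (-(a * t + C)) = Real.exp (-(a * t)) * Real.exp (-C) := by
    intro t; rw [← Real.exp_add]; ring_nf
  simp_rw [h1, ENNReal.ofReal_mul (Real.exp_pos _).le]
  rw [lintegral_mul_const' _ _ ENNReal.ofReal_ne_top, lintegral_exp_Ici a σ ha]
  rw [div_eq_inv_mul, ← one_div, ENNReal.ofReal_mul (by positivity), mul_assoc,
    ← ENNReal.ofReal_mul (Real.exp_pos _).le, ← Real.exp_add]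

lemma key : ∀ (n : ℕ) (a b : ℝ), 0 < a → 0 < b →
    (∫⁻ x in Reg (n+1), ENNReal.ofReal
        (Real.exp (-(a * x (Fin.last n) + b * ∑ j : Fin n, x j.castSucc))))
      = ∏ k ∈ Finset.range (n+1), ENNReal.ofReal (1 / coef k a b) := by
  intro n
  induction n with
  | zero =>
    intro a b ha hb
    set g : (Fin 1 → ℝ) → ℝ≥0∞ := fun x =>
      ENNReal.ofReal (Real.exp (-(a * x (Fin.last 0) + b * ∑ j : Fin 0, x j.castSucc))) with hg
    have step1 : (∫⁻ x in Reg 1, g x) = ∫⁻ x, (Reg 1).indicator g x :=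
      (lintegral_indicator (measurableSet_Reg 1) g).symm
    have mp := (volume_preserving_funUnique (Fin 1) ℝ).symm
    have step2 : (∫⁻ x, (Reg 1).indicator g x)
        = ∫⁻ t : ℝ, (Reg 1).indicator g ((MeasurableEquiv.funUnique (Fin 1) ℝ).symm t) :=
      (mp.lintegral_comp_emb (MeasurableEquiv.measurableEmbedding _) _).symm
    have step3 : ∀ t : ℝ, (Reg 1).indicator g ((MeasurableEquiv.funUnique (Fin 1) ℝ).symm t)
        = (Ici (0:ℝ)).indicator (fun t => ENNReal.ofReal (Real.exp (-(a * t)))) t := by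
      intro t
      have hx : ((MeasurableEquiv.funUnique (Fin 1) ℝ).symm t) = fun _ : Fin 1 => t := rfl
      rw [hx]
      have hmem : (fun _ : Fin 1 => t) ∈ Reg 1 ↔ 0 ≤ t := by
        constructor
        · intro h; exact (h 0).1
        · intro h m
          refine ⟨h, ?_⟩
          have : Finset.univ.filter (fun j : Fin 1 => (j : ℕ) + 1 < (m : ℕ)) = ∅ := by
            apply Finset.filter_false_of_mem
            intro j _
            omega
          rw [this, Finset.sum_empty]
          exact h
      by_cases ht : 0 ≤ t
      · rw [Set.indicator_of_mem (hmem.2 ht), Set.indicator_of_mem (Set.mem_Ici.2 ht), hg]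
        simp
      · rw [Set.indicator_of_notMem (fun h => ht (hmem.1 h)),
          Set.indicator_of_notMem (fun h => ht (Set.mem_Ici.1 h))]
    rw [step1, step2]
    simp_rw [step3]
    rw [lintegral_indicator measurableSet_Ici, lintegral_exp_Ici a 0 ha]
    simp [coef]
  | succ n IH =>
    intro a b ha hb
    set f : (Fin (n+2) → ℝ) → ℝ≥0∞ := fun x =>
      ENNReal.ofReal (Real.exp (-(a * x (Fin.last (n+1)) + b * ∑ j : Fin (n+1), x j.castSucc)))
      with hf
    have hmeas_f : Measurable f := by
      have hs : Measurable fun x : Fin (n+2) → ℝ => ∑ j : Fin (n+1), x j.castSucc :=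
        Finset.measurable_sum _ fun j _ => measurable_pi_apply j.castSucc
      have h1 : Measurable fun x : Fin (n+2) → ℝ =>
          a * x (Fin.last (n+1)) + b * ∑ j : Fin (n+1), x j.castSucc :=
        ((measurable_pi_apply (Fin.last (n+1))).const_mul a).add (hs.const_mul b)
      exact ENNReal.measurable_ofReal.comp (Real.measurable_exp.comp h1.neg)
    set e := MeasurableEquiv.piFinSuccAbove (fun _ : Fin (n+2) => ℝ) (Fin.last (n+1)) with he
    have mp := (volume_preserving_piFinSuccAbove (fun _ : Fin (n+2) => ℝ) (Fin.last (n+1))).symm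
    have hsymm : ∀ z : ℝ × (Fin (n+1) → ℝ), e.symm z = Fin.snoc z.2 z.1 := by
      intro z
      simp [he, MeasurableEquiv.piFinSuccAbove_symm_apply, Fin.insertNth_last', Fin.snocEquiv]
    have step1 : (∫⁻ x in Reg (n+2), f x) = ∫⁻ x, (Reg (n+2)).indicator f x :=
      (lintegral_indicator (measurableSet_Reg (n+2)) f).symm
    have step2 : (∫⁻ x, (Reg (n+2)).indicator f x)
        = ∫⁻ z : ℝ × (Fin (n+1) → ℝ), (Reg (n+2)).indicator f (e.symm z) :=
      (mp.lintegral_comp_emb (MeasurableEquiv.measurableEmbedding _) _).symm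
    have hmeas_ind : Measurable fun z : ℝ × (Fin (n+1) → ℝ) => (Reg (n+2)).indicator f (e.symm z) :=
      (hmeas_f.indicator (measurableSet_Reg _)).comp e.symm.measurable
    have step3 : (∫⁻ z : ℝ × (Fin (n+1) → ℝ), (Reg (n+2)).indicator f (e.symm z))
        = ∫⁻ y : Fin (n+1) → ℝ, ∫⁻ t : ℝ, (Reg (n+2)).indicator f (e.symm (t, y)) := by
      rw [show (volume : Measure (ℝ × (Fin (n+1) → ℝ))) = Measure.prod volume volume from rfl]
      exact lintegral_prod_symm _ hmeas_ind.aemeasurable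
    have key_inner : ∀ y : Fin (n+1) → ℝ,
        (∫⁻ t : ℝ, (Reg (n+2)).indicator f (e.symm (t, y)))
          = (Reg (n+1)).indicator (fun y => ENNReal.ofReal (1 / a) * ENNReal.ofReal
              (Real.exp (-(b * y (Fin.last n) + (a+b) * ∑ j : Fin n, y j.castSucc)))) y := by
      intro y
      by_cases hy : y ∈ Reg (n+1)
      · have hσ : 0 ≤ ∑ j : Fin n, y j.castSucc := Finset.sum_nonneg fun j _ => (hy _).1
        have hval : ∀ t : ℝ, (Reg (n+2)).indicator f (e.symm (t, y))
            = (Ici (∑ j : Fin n, y j.castSucc)).indicator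
                (fun t => ENNReal.ofReal
                  (Real.exp (-(a * t + b * ∑ j : Fin (n+1), y j)))) t := by
          intro t
          rw [hsymm]
          by_cases ht : (∑ j : Fin n, y j.castSucc) ≤ t
          · have hmem : (Fin.snoc y t : Fin (n+2) → ℝ) ∈ Reg (n+2) :=
              (snoc_mem_Reg_iff y t).2 ⟨hy, ht, le_trans hσ ht⟩
            rw [Set.indicator_of_mem hmem, Set.indicator_of_mem (Set.mem_Ici.2 ht), hf]
            simp [Fin.snoc_last, Fin.snoc_castSucc]
          · rw [Set.indicator_of_notMem
              (fun h => ht ((snoc_mem_Reg_iff y t).1 h).2.1),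
              Set.indicator_of_notMem (fun h => ht (Set.mem_Ici.1 h))]
        simp_rw [hval]
        rw [lintegral_indicator measurableSet_Ici,
          lintegral_exp_Ici' a (b * ∑ j : Fin (n+1), y j) (∑ j : Fin n, y j.castSucc) ha,
          Set.indicator_of_mem hy]
        congr 2
        rw [Fin.sum_univ_castSucc (f := fun j : Fin (n+1) => y j)]
        ring
      · have hval : ∀ t : ℝ, (Reg (n+2)).indicator f (e.symm (t, y)) = 0 := by
          intro t
          rw [hsymm]
          exact Set.indicator_of_notMem (fun h => hy ((snoc_mem_Reg_iff y t).1 h).1) _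
        simp [hval, Set.indicator_of_notMem hy]
    rw [step1, step2, step3]
    simp_rw [key_inner]
    rw [lintegral_indicator (measurableSet_Reg (n+1)),
      lintegral_const_mul' _ _ ENNReal.ofReal_ne_top,
      IH b (a+b) hb (by positivity)]
    conv_rhs => rw [Finset.prod_range_succ']
    simp only [coef_shift]
    rw [show coef 0 a b = a from rfl]
    exact mul_comm _ _

lemma prod_Icc_one (f : ℕ → ℝ) (n : ℕ) :
    (∏ i ∈ Finset.Icc 1 n, f i) = ∏ k ∈ Finset.range n, f (k+1) := by
  induction n with
  | zero => simp
  | succ n ih => rw [Finset.prod_Icc_succ_top (by omega), ih, Finset.prod_range_succ]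

end NoTriangleAux

open NoTriangleAux

/-- Let `Dₙ = {x ∈ ℝⁿ : x_j ≥ 0 for all j, and x₁ + ⋯ + x_i ≤ x_{i+2} for 1 ≤ i ≤ n-2}`
(written with 0-based indices: the sum of the first `m - 1` coordinates is at most the
`m`-th coordinate for every index `m ≥ 2`).  Then `∫_{Dₙ} exp(-(x₁+⋯+xₙ)) dx = ∏ 1/Fᵢ`. -/
theorem integral_no_triangle_region_eq_inv_fibonorial (n : ℕ) (hn : 1 ≤ n) :
    (∫ x in {x : Fin n → ℝ | (∀ j, 0 ≤ x j) ∧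
        ∀ m : Fin n, 2 ≤ (m : ℕ) →
          (∑ j ∈ Finset.univ.filter (fun j : Fin n => (j : ℕ) + 1 < (m : ℕ)), x j) ≤ x m},
      Real.exp (-(∑ j, x j))) =
    ∏ i ∈ Finset.Icc 1 n, (1 / (Nat.fib i : ℝ)) := by
  obtain ⟨m, rfl⟩ : ∃ m, n = m + 1 := ⟨n - 1, by omega⟩
  have hset : {x : Fin (m+1) → ℝ | (∀ j, 0 ≤ x j) ∧
      ∀ k : Fin (m+1), 2 ≤ (k : ℕ) →
        (∑ j ∈ Finset.univ.filter (fun j : Fin (m+1) => (j : ℕ) + 1 < (k : ℕ)), x j) ≤ x k}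
      = Reg (m+1) := by
    ext x
    simp only [Set.mem_setOf_eq, Reg]
    constructor
    · rintro ⟨h0, h2⟩ k
      refine ⟨h0 k, ?_⟩
      by_cases hk : 2 ≤ (k : ℕ)
      · exact h2 k hk
      · have hempty : Finset.univ.filter (fun j : Fin (m+1) => (j : ℕ) + 1 < (k : ℕ)) = ∅ := by
          apply Finset.filter_false_of_mem
          intro j _
          omega
        rw [hempty, Finset.sum_empty]
        exact h0 k
    · intro h
      exact ⟨fun j => (h j).1, fun k _ => (h k).2⟩
  rw [hset]
  have hmeas : Measurable fun x : Fin (m+1) → ℝ => Real.exp (-(∑ j, x j)) :=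
    Real.measurable_exp.comp (Finset.measurable_sum _ fun j _ => measurable_pi_apply j).neg
  rw [integral_eq_lintegral_of_nonneg_ae
    (Filter.Eventually.of_forall fun x => (Real.exp_pos _).le) hmeas.aestronglyMeasurable]
  have hexp : ∀ x : Fin (m+1) → ℝ,
      (-(∑ j, x j)) = -((1:ℝ) * x (Fin.last m) + 1 * ∑ j : Fin m, x j.castSucc) := by
    intro x
    rw [Fin.sum_univ_castSucc (f := fun j : Fin (m+1) => x j)]
    ring
  simp_rw [hexp]
  rw [key m 1 1 one_pos one_pos]
  simp_rw [coef_one_one]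
  rw [ENNReal.toReal_prod]
  have htr : ∀ k, (ENNReal.ofReal (1 / (Nat.fib (k+1) : ℝ))).toReal
      = 1 / (Nat.fib (k+1) : ℝ) := fun k => ENNReal.toReal_ofReal (by positivity)
  simp_rw [htr]
  rw [prod_Icc_one (fun i => 1 / (Nat.fib i : ℝ)) (m+1)]
end

section
/- Fix an integer i ≥ 1 and nonnegative real numbers a and b. Let E ⊆ ℝ^i be the set of points t = (t_1,…,t_i) satisfying: t_1 ≥ a; t_2 ≥ a + b (when i ≥ 2); and t_j ≥ a + b + t_1 + ⋯ + t_{j−2} for every 3 ≤ j ≤ i. Then the Lebesgue integral ∫_E exp(−(t_1 + ⋯ + t_i)) dt equals (∏_{k=1}^{i} 1/F_k) · exp(−((F_{i+2} − 1)·a + (F_{i+1} − 1)·b)). -/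
open MeasureTheory Real Set Finset

namespace NoTri

/-- The constraint set. -/
def E (i : ℕ) (a b : ℝ) : Set (Fin i → ℝ) :=
  {t : Fin i → ℝ | ∀ m : Fin i,
    ((m : ℕ) = 0 → a ≤ t m) ∧
    ((m : ℕ) = 1 → a + b ≤ t m) ∧
    (2 ≤ (m : ℕ) →
      a + b + (∑ j ∈ Finset.univ.filter (fun j : Fin i => (j : ℕ) + 1 < (m : ℕ)), t j)
        ≤ t m)}

lemma measurable_E (i : ℕ) (a b : ℝ) : MeasurableSet (E i a b) := by
  have : E i a b = ⋂ m : Fin i,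
      ({t : Fin i → ℝ | (m : ℕ) = 0 → a ≤ t m} ∩
       ({t : Fin i → ℝ | (m : ℕ) = 1 → a + b ≤ t m} ∩
        {t : Fin i → ℝ | 2 ≤ (m : ℕ) →
          a + b + (∑ j ∈ Finset.univ.filter (fun j : Fin i => (j : ℕ) + 1 < (m : ℕ)), t j)
            ≤ t m})) := by
    ext t; simp only [E, Set.mem_iInter, Set.mem_inter_iff, Set.mem_setOf_eq]
  rw [this]
  refine MeasurableSet.iInter fun m => ?_
  have hm : Measurable fun t : Fin i → ℝ => t m := measurable_pi_apply m
  refine MeasurableSet.inter ?_ (MeasurableSet.inter ?_ ?_)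
  · by_cases h : (m : ℕ) = 0
    · simp only [h, true_implies]; exact measurableSet_le measurable_const hm
    · simp only [h, false_implies]; simp
  · by_cases h : (m : ℕ) = 1
    · simp only [h, true_implies]; exact measurableSet_le measurable_const hm
    · simp only [h, false_implies]; simp
  · by_cases h : 2 ≤ (m : ℕ)
    · simp only [h, true_implies]
      exact measurableSet_le (measurable_const.add
        (Finset.measurable_sum _ fun j _ => measurable_pi_apply j)) hm
    · simp only [h, false_implies]; simp

noncomputable def g (p q : ℝ) (k : ℕ) : ℝ :=
  p * Nat.fib k + q * ((Nat.fib (k + 1) : ℝ) - Nat.fib k)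

lemma g_zero (p q : ℝ) : g p q 0 = q := by simp [g]

lemma g_pos {p q : ℝ} (hp : 0 < p) (hq : 0 < q) (k : ℕ) : 0 < g p q k := by
  rcases Nat.eq_zero_or_pos k with rfl | hk
  · simpa [g] using hq
  · have h1 : 1 ≤ Nat.fib k := Nat.fib_pos.mpr hk
    have h2 : Nat.fib k ≤ Nat.fib (k + 1) := Nat.fib_le_fib_succ
    have h3 : (0:ℝ) < p * Nat.fib k := by
      apply mul_pos hp
      exact_mod_cast h1
    have h4 : (0:ℝ) ≤ q * ((Nat.fib (k + 1) : ℝ) - Nat.fib k) := by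
      apply mul_nonneg hq.le
      have : (Nat.fib k : ℝ) ≤ Nat.fib (k + 1) := by exact_mod_cast h2
      linarith
    unfold g; linarith
  
lemma g_shift (p q : ℝ) (k : ℕ) : g (p + q) p k = g p q (k + 1) := by
  simp only [g, Nat.fib_add_two]
  push_cast
  ring

lemma g_one_one (k : ℕ) : g 1 1 k = Nat.fib (k + 1) := by simp [g]

lemma fib_sum_real (n : ℕ) :
    ∑ k ∈ Finset.range n, (Nat.fib (k + 1) : ℝ) = (Nat.fib (n + 2) : ℝ) - 1 := by
  induction n with
  | zero => simp
  | succ n ih =>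
    rw [Finset.sum_range_succ, ih]
    have : Nat.fib (n + 1 + 2) = Nat.fib (n + 1) + Nat.fib (n + 2) := by
      rw [Nat.fib_add_two]
    rw [this]
    push_cast
    ring


lemma sum_snoc_filter (i k : ℕ) (hk : k ≤ i + 1) (y : Fin i → ℝ) (x : ℝ) :
    ∑ j ∈ Finset.univ.filter (fun j : Fin (i+1) => (j : ℕ) + 1 < k), Fin.snoc y x j
      = ∑ j ∈ Finset.univ.filter (fun j : Fin i => (j : ℕ) + 1 < k), y j := by
  rw [Finset.sum_filter, Finset.sum_filter, Fin.sum_univ_castSucc]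
  simp only [Fin.coe_castSucc, Fin.snoc_castSucc, Fin.val_last]
  rw [if_neg (by omega)]
  simp

/-- last-coordinate sum constraint -/
noncomputable def σ (i : ℕ) (y : Fin i → ℝ) : ℝ :=
  ∑ j ∈ Finset.univ.filter (fun j : Fin i => (j : ℕ) + 1 < i), y j

lemma sum_split (i : ℕ) (hi : 1 ≤ i) (y : Fin i → ℝ) :
    ∑ j, y j = σ i y + y ⟨i - 1, by omega⟩ := by
  obtain ⟨n, rfl⟩ : ∃ n, i = n + 1 := ⟨i - 1, by omega⟩
  rw [Fin.sum_univ_castSucc]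
  congr 1
  · rw [σ, Finset.sum_filter, Fin.sum_univ_castSucc]
    simp only [Fin.coe_castSucc, Fin.snoc_castSucc, Fin.val_last]
    rw [if_neg (by omega)]
    rw [add_zero]
    apply Finset.sum_congr rfl
    intro j _
    rw [if_pos (by omega)]

lemma snoc_mem_iff (i : ℕ) (hi : 1 ≤ i) (a b x : ℝ) (y : Fin i → ℝ) :
    Fin.snoc y x ∈ E (i + 1) a b ↔ y ∈ E i a b ∧ a + b + σ i y ≤ x := by
  have hsplit : (∀ m : Fin (i+1), (((m : ℕ) = 0 → a ≤ (Fin.snoc y x : Fin (i+1) → ℝ) m) ∧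
      ((m : ℕ) = 1 → a + b ≤ (Fin.snoc y x : Fin (i+1) → ℝ) m) ∧
      (2 ≤ (m : ℕ) →
        a + b + (∑ j ∈ Finset.univ.filter (fun j : Fin (i+1) => (j : ℕ) + 1 < (m : ℕ)),
          (Fin.snoc y x : Fin (i+1) → ℝ) j) ≤ (Fin.snoc y x : Fin (i+1) → ℝ) m))) ↔
      ((∀ m : Fin i, (((m : ℕ) = 0 → a ≤ y m) ∧
      ((m : ℕ) = 1 → a + b ≤ y m) ∧
      (2 ≤ (m : ℕ) →
        a + b + (∑ j ∈ Finset.univ.filter (fun j : Fin i => (j : ℕ) + 1 < (m : ℕ)), y j)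
          ≤ y m))) ∧
      (((i : ℕ) = 0 → a ≤ x) ∧ ((i : ℕ) = 1 → a + b ≤ x) ∧
        (2 ≤ i → a + b + (∑ j ∈ Finset.univ.filter (fun j : Fin i => (j : ℕ) + 1 < i), y j)
          ≤ x))) := by
    constructor
    · intro h
      constructor
      · intro m
        have := h m.castSucc
        simpa [Fin.coe_castSucc, Fin.snoc_castSucc,
          sum_snoc_filter i (m : ℕ) (by omega) y x] using this
      · have := h (Fin.last i)
        simpa [Fin.val_last, Fin.snoc_last,
          sum_snoc_filter i i (by omega) y x] using this
    · rintro ⟨h1, h2⟩ m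
      refine Fin.lastCases ?_ ?_ m
      · simpa [Fin.val_last, Fin.snoc_last,
          sum_snoc_filter i i (by omega) y x] using h2
      · intro m
        have := h1 m
        simpa [Fin.coe_castSucc, Fin.snoc_castSucc,
          sum_snoc_filter i (m : ℕ) (by omega) y x] using this
  rw [show (Fin.snoc y x ∈ E (i+1) a b) ↔ _ from Iff.rfl, E, Set.mem_setOf_eq, hsplit]
  rw [E, Set.mem_setOf_eq, σ]
  constructor
  · rintro ⟨h1, h2⟩
    refine ⟨h1, ?_⟩
    rcases eq_or_lt_of_le hi with h | h
    · have : Finset.univ.filter (fun j : Fin i => (j : ℕ) + 1 < i) = ∅ := by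
        apply Finset.filter_false_of_mem
        intro j _
        omega
      rw [this]
      simpa using h2.2.1 h.symm
    · exact h2.2.2 (by omega)
  · rintro ⟨h1, h2⟩
    refine ⟨h1, ?_, ?_, ?_⟩
    · omega
    · intro h
      have : Finset.univ.filter (fun j : Fin i => (j : ℕ) + 1 < i) = ∅ := by
        apply Finset.filter_false_of_mem
        intro j _
        omega
      rw [this] at h2
      simpa using h2
    · intro _
      exact h2

lemma lint_Ici (q c L : ℝ) (hq : 0 < q) :
    ∫⁻ x in Set.Ici L, ENNReal.ofReal (Real.exp (-(c + q * x)))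
      = ENNReal.ofReal (Real.exp (-(c + q * L)) / q) := by
  rw [show (volume : Measure ℝ).restrict (Set.Ici L) = volume.restrict (Set.Ioi L) from
    Measure.restrict_congr_set Ioi_ae_eq_Ici.symm]
  have hInt : IntegrableOn (fun x => Real.exp (-(c + q * x))) (Set.Ioi L) := by
    have := (exp_neg_integrableOn_Ioi L hq).const_mul (Real.exp (-c))
    apply this.congr (ae_of_all _ fun x => ?_)
    show Real.exp (-c) * Real.exp (-q * x) = Real.exp (-(c + q * x))
    rw [← Real.exp_add]
    ring_nf
  rw [← ofReal_integral_eq_lintegral_ofReal hInt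
    (ae_of_all _ fun x => (Real.exp_pos _).le)]
  congr 1
  have h1 : ∀ x : ℝ, Real.exp (-(c + q * x)) = Real.exp (-c) * Real.exp (-(q * x)) := by
    intro x; rw [← Real.exp_add]; ring_nf
  simp only [h1]
  rw [MeasureTheory.integral_const_mul]
  have h2 : (∫ x in Set.Ioi L, Real.exp (-(q * x)))
      = q⁻¹ • ∫ x in Set.Ioi (q * L), Real.exp (-x) :=
    integral_comp_mul_left_Ioi (fun u => Real.exp (-u)) L hq
  rw [h2, integral_exp_neg_Ioi, smul_eq_mul]
  ring

lemma main (i : ℕ) (hi : 1 ≤ i) :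
    ∀ p q : ℝ, 0 < p → 0 < q → ∀ a b : ℝ,
    (∫⁻ t in E i a b, ENNReal.ofReal (Real.exp
        (-(p * σ i t + q * t ⟨i - 1, by omega⟩))))
      = ENNReal.ofReal ((∏ k ∈ Finset.range i, (1 / g p q k)) *
          Real.exp (-((∑ k ∈ Finset.range i, g p q k) * a
            + (∑ k ∈ Finset.range (i - 1), g p q k) * b))) := by
  induction i, hi using Nat.le_induction with
  | base =>
    intro p q hp hq a b
    have hE : MeasurableSet (E 1 a b) := measurable_E 1 a b
    have hσ : ∀ t : Fin 1 → ℝ, σ 1 t = 0 := by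
      intro t
      rw [σ, show Finset.univ.filter (fun j : Fin 1 => (j : ℕ) + 1 < 1) = ∅ from by decide]
      simp
    have hmem : ∀ t : Fin 1 → ℝ, t ∈ E 1 a b ↔ a ≤ t 0 := by
      intro t
      constructor
      · intro h; exact (h 0).1 rfl
      · intro h m
        have hm : m = 0 := Subsingleton.elim m 0
        subst hm
        exact ⟨fun _ => h, fun h1 => absurd h1 (by norm_num),
          fun h2 => absurd h2 (by norm_num)⟩
    rw [← lintegral_indicator hE]
    have mp := volume_preserving_funUnique (Fin 1) ℝ
    have hkey : ∀ t : Fin 1 → ℝ, (E 1 a b).indicator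
        (fun t => ENNReal.ofReal (Real.exp (-(p * σ 1 t + q * t ⟨1 - 1, by omega⟩)))) t
        = (Set.Ici a).indicator (fun x => ENNReal.ofReal (Real.exp (-(0 + q * x))))
            ((MeasurableEquiv.funUnique (Fin 1) ℝ) t) := by
      intro t
      have happ : (MeasurableEquiv.funUnique (Fin 1) ℝ) t = t 0 := rfl
      rw [happ]
      by_cases h : a ≤ t 0
      · rw [Set.indicator_of_mem ((hmem t).2 h), Set.indicator_of_mem (Set.mem_Ici.2 h)]
        rw [hσ]
        norm_num
      · rw [Set.indicator_of_notMem (fun hc => h ((hmem t).1 hc)),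
          Set.indicator_of_notMem (by simpa using h)]
    rw [lintegral_congr hkey]
    have hindmeas : Measurable fun x : ℝ =>
        (Set.Ici a).indicator (fun x => ENNReal.ofReal (Real.exp (-(0 + q * x)))) x := by
      apply Measurable.indicator _ measurableSet_Ici
      exact ENNReal.measurable_ofReal.comp (Real.measurable_exp.comp (by fun_prop))
    refine (mp.lintegral_comp hindmeas).trans ?_
    rw [lintegral_indicator measurableSet_Ici]
    rw [lint_Ici q 0 a hq]
    congr 1
    simp only [Finset.prod_range_one, Finset.sum_range_one, Finset.range_zero,
      Finset.sum_empty, g_zero, zero_add, zero_mul, add_zero]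
    ring
  | succ i hi ih =>
    intro p q hp hq a b
    have hE1 : MeasurableSet (E (i+1) a b) := measurable_E _ a b
    have hEi : MeasurableSet (E i a b) := measurable_E _ a b
    set f : (Fin (i+1) → ℝ) → ENNReal := fun t =>
      ENNReal.ofReal (Real.exp (-(p * σ (i+1) t + q * t ⟨i + 1 - 1, by omega⟩))) with hfdef
    have hσm : Measurable fun t : Fin (i+1) → ℝ => σ (i+1) t := by
      simp only [σ]
      exact Finset.measurable_sum _ fun j _ => measurable_pi_apply j
    have hfm : Measurable f := by
      apply ENNReal.measurable_ofReal.comp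
      apply Real.measurable_exp.comp
      exact ((measurable_const.mul hσm).add
        (measurable_const.mul (measurable_pi_apply _))).neg
    rw [← lintegral_indicator hE1]
    have mp := (volume_preserving_piFinSuccAbove (fun _ : Fin (i+1) => ℝ) (Fin.last i)).symm
    have hcomp : Measurable fun t : Fin (i+1) → ℝ => (E (i+1) a b).indicator f t :=
      hfm.indicator hE1
    rw [← mp.lintegral_comp hcomp]
    rw [Measure.volume_eq_prod]
    rw [lintegral_prod_symm (fun z : ℝ × (Fin i → ℝ) => (E (i+1) a b).indicator f
      ((MeasurableEquiv.piFinSuccAbove (fun _ : Fin (i+1) => ℝ) (Fin.last i)).symm z))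
      ((hcomp.comp (MeasurableEquiv.measurable _)).aemeasurable)]
    have hsymm : ∀ (x : ℝ) (y : Fin i → ℝ),
        (MeasurableEquiv.piFinSuccAbove (fun _ : Fin (i+1) => ℝ) (Fin.last i)).symm (x, y)
          = Fin.snoc y x := by
      intro x y
      rw [MeasurableEquiv.piFinSuccAbove_symm_apply]
      exact Fin.insertNth_last' x y
    have inner : ∀ y : Fin i → ℝ,
        (∫⁻ x : ℝ, (E (i+1) a b).indicator f
          ((MeasurableEquiv.piFinSuccAbove (fun _ : Fin (i+1) => ℝ) (Fin.last i)).symm (x, y)))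
        = (E i a b).indicator (fun y => ENNReal.ofReal ((Real.exp (-(q * (a + b))) / q) *
            Real.exp (-((p + q) * σ i y + p * y ⟨i - 1, by omega⟩)))) y := by
      intro y
      simp only [hsymm]
      by_cases hy : y ∈ E i a b
      · have hpt : ∀ x : ℝ, (E (i+1) a b).indicator f (Fin.snoc y x)
            = (Set.Ici (a + b + σ i y)).indicator
                (fun x => ENNReal.ofReal (Real.exp
                  (-(p * (σ i y + y ⟨i - 1, by omega⟩) + q * x)))) x := by
          intro x
          have hval : (Fin.snoc y x : Fin (i+1) → ℝ) ⟨i + 1 - 1, by omega⟩ = x := by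
            show (Fin.snoc y x : Fin (i+1) → ℝ) (Fin.last i) = x
            simp
          have hsum : σ (i+1) (Fin.snoc y x : Fin (i+1) → ℝ)
              = σ i y + y ⟨i - 1, by omega⟩ := by
            rw [σ, sum_snoc_filter i (i+1) le_rfl y x]
            rw [Finset.filter_true_of_mem (fun j _ => by omega)]
            exact sum_split i hi y
          by_cases hx : a + b + σ i y ≤ x
          · rw [Set.indicator_of_mem ((snoc_mem_iff i hi a b x y).2 ⟨hy, hx⟩),
              Set.indicator_of_mem (Set.mem_Ici.2 hx), hfdef]
            simp only [hsum, hval]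
          · rw [Set.indicator_of_notMem
                (fun hc => hx ((snoc_mem_iff i hi a b x y).1 hc).2),
              Set.indicator_of_notMem (by simpa using hx)]
        rw [lintegral_congr hpt]
        rw [lintegral_indicator measurableSet_Ici]
        rw [lint_Ici q (p * (σ i y + y ⟨i - 1, by omega⟩)) (a + b + σ i y) hq]
        rw [Set.indicator_of_mem hy]
        congr 1
        rw [div_mul_eq_mul_div, ← Real.exp_add]
        congr 2
        ring
      · have hpt : ∀ x : ℝ, (E (i+1) a b).indicator f (Fin.snoc y x) = 0 := fun x =>
          Set.indicator_of_notMem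
            (fun hc => hy ((snoc_mem_iff i hi a b x y).1 hc).1) _
        rw [lintegral_congr hpt, lintegral_zero, Set.indicator_of_notMem hy]
    rw [lintegral_congr inner]
    rw [lintegral_indicator hEi]
    have hc : (0:ℝ) ≤ Real.exp (-(q * (a + b))) / q := by positivity
    simp only [ENNReal.ofReal_mul hc]
    rw [lintegral_const_mul' _ _ ENNReal.ofReal_ne_top]
    rw [ih (p + q) p (by linarith) hp a b]
    rw [← ENNReal.ofReal_mul hc]
    congr 1
    simp only [g_shift]
    rw [Finset.prod_range_succ' (fun k => 1 / g p q k) i]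
    rw [Finset.sum_range_succ' (g p q) i]
    rw [show Finset.range (i + 1 - 1) = Finset.range ((i - 1) + 1) from by
      congr 1; omega]
    rw [Finset.sum_range_succ' (g p q) (i - 1)]
    rw [g_zero]
    rw [show -((∑ x ∈ Finset.range i, g p q (x + 1) + q) * a
        + (∑ x ∈ Finset.range (i - 1), g p q (x + 1) + q) * b)
      = -(q * (a + b)) + -((∑ x ∈ Finset.range i, g p q (x + 1)) * a
        + (∑ x ∈ Finset.range (i - 1), g p q (x + 1)) * b) from by ring,
      Real.exp_add]
    ring

end NoTri

/-- Closed form of the iterated integral `I_i`: for `i ≥ 1` and `a, b ≥ 0`, with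
`E = {t ∈ ℝ^i : t₁ ≥ a, t₂ ≥ a + b, and t_j ≥ a + b + t₁ + ⋯ + t_{j-2} for 3 ≤ j ≤ i}`
(written with 0-based indices `m = j - 1`), we have
`∫_E exp(-(t₁+⋯+t_i)) dt = (∏_{k=1}^i 1/F_k) · exp(-((F_{i+2}-1)a + (F_{i+1}-1)b))`. -/
theorem iterated_integral_no_triangle (i : ℕ) (hi : 1 ≤ i) (a b : ℝ)
    (ha : 0 ≤ a) (hb : 0 ≤ b) :
    (∫ t in {t : Fin i → ℝ | ∀ m : Fin i,
        ((m : ℕ) = 0 → a ≤ t m) ∧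
        ((m : ℕ) = 1 → a + b ≤ t m) ∧
        (2 ≤ (m : ℕ) →
          a + b + (∑ j ∈ Finset.univ.filter (fun j : Fin i => (j : ℕ) + 1 < (m : ℕ)), t j)
            ≤ t m)},
      Real.exp (-(∑ j, t j))) =
    (∏ k ∈ Finset.Icc 1 i, (1 / (Nat.fib k : ℝ))) *
      Real.exp (-(((Nat.fib (i + 2) : ℝ) - 1) * a + ((Nat.fib (i + 1) : ℝ) - 1) * b)) := by
  show (∫ t in NoTri.E i a b, Real.exp (-(∑ j, t j))) = _
  have hmeas : Measurable fun t : Fin i → ℝ => Real.exp (-(∑ j, t j)) :=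
    Real.measurable_exp.comp (Finset.measurable_sum _ fun j _ => measurable_pi_apply j).neg
  rw [MeasureTheory.integral_eq_lintegral_of_nonneg_ae
    (ae_of_all _ fun t => (Real.exp_pos _).le) hmeas.aestronglyMeasurable]
  have hptw : ∀ t : Fin i → ℝ,
      ENNReal.ofReal (Real.exp (-(∑ j, t j)))
        = ENNReal.ofReal (Real.exp (-((1:ℝ) * NoTri.σ i t + (1:ℝ) * t ⟨i - 1, by omega⟩))) := by
    intro t
    rw [NoTri.sum_split i hi t]
    norm_num
  rw [lintegral_congr_ae (ae_of_all _ fun t => hptw t)]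
  rw [NoTri.main i hi 1 1 one_pos one_pos a b]
  simp only [NoTri.g_one_one]
  rw [ENNReal.toReal_ofReal (by positivity)]
  have hprod : (∏ k ∈ Finset.range i, (1 / (Nat.fib (k + 1) : ℝ)))
      = ∏ k ∈ Finset.Icc 1 i, (1 / (Nat.fib k : ℝ)) := by
    have himg : Finset.Icc 1 i = Finset.image (fun k => k + 1) (Finset.range i) := by
      ext k
      simp only [Finset.mem_Icc, Finset.mem_image, Finset.mem_range]
      constructor
      · intro ⟨h1, h2⟩; exact ⟨k - 1, by omega, by omega⟩
      · rintro ⟨m, hm, rfl⟩; omega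
    rw [himg, Finset.prod_image (fun x _ y _ h => by omega)]
  have hsa : (∑ k ∈ Finset.range i, (Nat.fib (k + 1) : ℝ)) = (Nat.fib (i + 2) : ℝ) - 1 :=
    NoTri.fib_sum_real i
  have hsb : (∑ k ∈ Finset.range (i - 1), (Nat.fib (k + 1) : ℝ))
      = (Nat.fib (i + 1) : ℝ) - 1 := by
    rw [NoTri.fib_sum_real (i - 1), show i - 1 + 2 = i + 1 from by omega]
  rw [hprod, hsa, hsb]
end

section
/- Let n ≥ 3 and let μ be the Lebesgue (product) measure on the cube [0,1]^n, which is the joint law of n independent Uniform[0,1] stick lengths. Then the measure of the set of points x ∈ [0,1]^n such that no four of the coordinates can form a quadrilateral — i.e., for every four pairwise distinct indices i, j, k, l, one of the four values x_i, x_j, x_k, x_l is at least the sum of the other three — equals (1/(T_n − T_{n−2})) · ∏_{i=1}^{n−1} 1/T_i. -/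
open MeasureTheory

/-- The Tribonacci numbers: `trib 1 = 1`, `trib 2 = 1`, `trib 3 = 2`, and
`trib k = trib (k-1) + trib (k-2) + trib (k-3)` for `k > 3` (with `trib 0 = 0`). -/
def trib : ℕ → ℕ
  | 0 => 0
  | 1 => 1
  | 2 => 1
  | (k + 3) => trib (k + 2) + trib (k + 1) + trib k


open Finset
open scoped ENNReal

namespace NoQuad

lemma trib_pos : ∀ k, 0 < trib (k + 1)
  | 0 => Nat.one_pos
  | 1 => Nat.one_pos
  | 2 => by simp [trib]
  | (k + 3) => by
      rw [show k + 3 + 1 = (k + 1) + 3 by ring, trib]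
      have := trib_pos k
      omega

lemma trib_mono : Monotone trib := by
  have h : ∀ k, trib k ≤ trib (k + 1) := by
    intro k
    match k with
    | 0 => simp [trib]
    | 1 => simp [trib]
    | 2 => simp [trib]
    | (k + 3) =>
      rw [show k + 3 + 1 = (k + 1) + 3 by ring]
      conv_rhs => rw [trib]
      simp only [show k+1+2 = k+3 by ring, show k+1+1 = k+2 by ring]
      omega
  exact monotone_nat_of_le_succ h

/-- coefficient of the `j`-th gap variable in the `m`-th sorted value -/
def c : ℕ → ℕ → ℕ
  | 0, j => if j = 0 then 1 else 0
  | 1, j => (if j = 1 then 1 else 0) + c 0 j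
  | 2, j => (if j = 2 then 1 else 0) + c 1 j
  | (m+3), j => (if j = m+3 then 1 else 0) + c (m+2) j + c (m+1) j + c m j

lemma c_eq_zero : ∀ m j, m < j → c m j = 0
  | 0, j, h => by simp [c]; omega
  | 1, j, h => by have := c_eq_zero 0 j (by omega); simp [c, this]; omega
  | 2, j, h => by have := c_eq_zero 1 j (by omega); simp [c, this]; omega
  | (m+3), j, h => by
      have h0 := c_eq_zero m j (by omega)
      have h1 := c_eq_zero (m+1) j (by omega)
      have h2 := c_eq_zero (m+2) j (by omega)
      simp [c, h0, h1, h2]; omega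

lemma c_diag : ∀ m, c m m = 1
  | 0 => by simp [c]
  | 1 => by simp [c, c_eq_zero 0 1 (by omega)]
  | 2 => by simp [c, c_eq_zero 1 2 (by omega)]
  | (m+3) => by
      simp [c, c_eq_zero m (m+3) (by omega), c_eq_zero (m+1) (m+3) (by omega),
        c_eq_zero (m+2) (m+3) (by omega)]

lemma c_zero : ∀ m, c m 0 = trib (m + 1) - trib (m - 1)
  | 0 => by simp [c, trib]
  | 1 => by simp [c, trib]
  | 2 => by simp [c, trib]
  | (m+3) => by
      match m with
      | 0 => decide
      | (k+1) =>
        have h0 := c_zero (k+1)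
        have h1 := c_zero (k+2)
        have h2 := c_zero (k+3)
        have e4 : trib (k+5) = trib (k+4) + trib (k+3) + trib (k+2) := by
          rw [show k + 5 = (k+2) + 3 by ring, trib]
        have e2 : trib (k+3) = trib (k+2) + trib (k+1) + trib k := by rw [trib]
        have m1 : trib k ≤ trib (k + 2) := trib_mono (by omega)
        have m2 : trib (k+1) ≤ trib (k + 3) := trib_mono (by omega)
        have m3 : trib (k+2) ≤ trib (k + 4) := trib_mono (by omega)
        show (if (0:ℕ) = k+1+3 then 1 else 0) + c (k+1+2) 0 + c (k+1+1) 0 + c (k+1) 0 = _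
        rw [if_neg (by omega), show k+1+2 = k+3 by ring, show k+1+1 = k+2 by ring, h0, h1, h2]
        simp only [show k+3+1 = k+4 by ring, show k+2+1=k+3 by ring, show k+1+1 = k+2 by ring,
          show k+3-1 = k+2 by omega, show k+2-1=k+1 by omega, show k+1-1 = k by omega,
          show k+1+3+1 = k+5 by ring, show k+1+3-1 = k+3 by omega]
        omega

lemma c_col : ∀ m j, 1 ≤ j → j ≤ m → c m j = trib (m - j + 1)
  | 0, j, h1, h2 => by omega
  | 1, j, h1, h2 => by
      have hj : j = 1 := by omega
      subst hj; simpa [trib] using c_diag 1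
  | 2, j, h1, h2 => by
      interval_cases j
      · simp [c, c_diag 1, c_eq_zero 0 1 (by omega), c_eq_zero 1 2 (by omega), trib]
      · simpa [trib] using c_diag 2
  | (m+3), j, h1, h2 => by
      rcases Nat.lt_or_ge j (m+1) with hj | hj
      · have h0 := c_col m j h1 (by omega)
        have hh1 := c_col (m+1) j h1 (by omega)
        have hh2 := c_col (m+2) j h1 (by omega)
        have e : trib (m - j + 4) = trib (m - j + 3) + trib (m - j + 2) + trib (m - j + 1) := by
          rw [show m - j + 4 = (m - j + 1) + 3 by ring, trib]
        simp only [c, if_neg (by omega : ¬ j = m + 3)]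
        rw [h0, hh1, hh2, show m + 1 - j + 1 = m - j + 2 by omega,
          show m + 2 - j + 1 = m - j + 3 by omega, show m + 3 - j + 1 = m - j + 4 by omega]
        omega
      · -- j = m+1, m+2, or m+3
        rcases (by omega : j = m + 1 ∨ j = m + 2 ∨ j = m + 3) with rfl | rfl | rfl
        · simp only [c, if_neg (by omega : ¬ m+1 = m + 3)]
          rw [c_diag (m+1), c_col (m+2) (m+1) (by omega) (by omega),
            c_eq_zero m (m+1) (by omega), show m+2-(m+1)+1 = 2 by omega,
            show m+3-(m+1)+1 = 3 by omega]
          simp [trib]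
        · simp only [c, if_neg (by omega : ¬ m+2 = m + 3)]
          rw [c_diag (m+2), c_eq_zero (m+1) (m+2) (by omega),
            c_eq_zero m (m+2) (by omega), show m+3-(m+2)+1 = 2 by omega]
          simp [trib]
        · simpa [show m+3-(m+3)+1 = 1 by omega, trib] using c_diag (m+3)

lemma trib_lt : ∀ k, trib k < trib (k + 2)
  | 0 => by decide
  | (k+1) => by
      rw [show k + 1 + 2 = k + 3 by ring, trib]
      have h1 : 0 < trib (k + 2) := trib_pos (k + 1)
      have h2 : trib (k+1) ≤ trib (k+2) := trib_mono (by omega)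
      omega

lemma c_pos : ∀ m j, j ≤ m → 0 < c m j := by
  intro m j hj
  rcases Nat.eq_zero_or_pos j with rfl | h1
  · rw [c_zero]
    rcases Nat.eq_zero_or_pos m with rfl | hm
    · decide
    · obtain ⟨k, rfl⟩ : ∃ k, m = k + 1 := ⟨m - 1, by omega⟩
      have h := trib_lt k
      simp only [Nat.add_sub_cancel, show k + 1 + 1 = k + 2 by ring]
      omega
  · rw [c_col m j h1 hj]
    exact trib_pos (m - j)


variable {n : ℕ}

/-- the gap variables of a sequence -/
def gap (Y : ℕ → ℝ) : ℕ → ℝ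
  | 0 => Y 0
  | 1 => Y 1 - Y 0
  | 2 => Y 2 - Y 1
  | (k+3) => Y (k+3) - Y (k+2) - Y (k+1) - Y k

variable {n : ℕ}

/-- extend a tuple by zero -/
def ext (y : Fin n → ℝ) : ℕ → ℝ := fun k => if h : k < n then y ⟨k, h⟩ else 0

lemma ext_add (y z : Fin n → ℝ) : ext (y + z) = ext y + ext z := by
  funext k; simp only [ext, Pi.add_apply]; split <;> simp

lemma ext_smul (r : ℝ) (y : Fin n → ℝ) : ext (r • y) = r • (ext y) := by
  funext k; simp only [ext, Pi.smul_apply, smul_eq_mul]; split <;> simp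

lemma gap_add (Y Z : ℕ → ℝ) (j : ℕ) : gap (Y + Z) j = gap Y j + gap Z j := by
  match j with
  | 0 => simp [gap]
  | 1 => simp [gap]; ring
  | 2 => simp [gap]; ring
  | (k+3) => simp [gap]; ring

lemma gap_smul (r : ℝ) (Y : ℕ → ℝ) (j : ℕ) : gap (r • Y) j = r * gap Y j := by
  match j with
  | 0 => simp [gap]
  | 1 => simp [gap]; ring
  | 2 => simp [gap]; ring
  | (k+3) => simp [gap]; ring

/-- the key telescoping identity -/
lemma sum_c_gap (Y : ℕ → ℝ) : ∀ m, ∑ j ∈ range (m+1), (c m j : ℝ) * gap Y j = Y m := by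
  intro m
  induction m using Nat.strong_induction_on with
  | _ m ih =>
    have drop : ∀ m' N, m' < N → ∑ j ∈ range N, (c m' j : ℝ) * gap Y j
        = ∑ j ∈ range (m'+1), (c m' j : ℝ) * gap Y j := by
      intro m' N hN
      rw [← Finset.sum_subset (Finset.range_subset_range.2 hN)]
      intro j _ hj
      rw [c_eq_zero m' j (by simp at hj ⊢; omega)]
      simp
    match m with
    | 0 => simp [c, gap]
    | 1 =>
      simp only [show (1:ℕ)+1 = 2 from rfl]
      simp only [show ∀ j, c 1 j = (if j = 1 then 1 else 0) + c 0 j from fun j => rfl]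
      push_cast
      simp only [add_mul, Finset.sum_add_distrib, ite_mul, one_mul, zero_mul]
      rw [Finset.sum_ite_eq' (range 2) 1 (fun j => gap Y j)]
      rw [drop 0 2 (by omega), ih 0 (by omega)]
      simp [gap]
    | 2 =>
      simp only [show (2:ℕ)+1 = 3 from rfl]
      simp only [show ∀ j, c 2 j = (if j = 2 then 1 else 0) + c 1 j from fun j => rfl]
      push_cast
      simp only [add_mul, Finset.sum_add_distrib, ite_mul, one_mul, zero_mul]
      rw [Finset.sum_ite_eq' (range 3) 2 (fun j => gap Y j)]
      rw [drop 1 3 (by omega), ih 1 (by omega)]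
      simp [gap]
    | (m+3) =>
      simp only [show ∀ j, c (m+3) j = (if j = m+3 then 1 else 0) + c (m+2) j + c (m+1) j + c m j
        from fun j => rfl]
      push_cast
      simp only [add_mul, Finset.sum_add_distrib, ite_mul, one_mul, zero_mul]
      rw [Finset.sum_ite_eq' (range (m+3+1)) (m+3) (fun j => gap Y j)]
      rw [drop (m+2) (m+3+1) (by omega), ih (m+2) (by omega)]
      rw [drop (m+1) (m+3+1) (by omega), ih (m+1) (by omega)]
      rw [drop m (m+3+1) (by omega), ih m (by omega),
        if_pos (Finset.mem_range.2 (by omega))]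
      simp [gap]
      ring

/-- the comparison linear map -/
def Θ (n : ℕ) : (Fin n → ℝ) →ₗ[ℝ] (Fin n → ℝ) where
  toFun y := fun k => ∑ j ∈ range ((k : ℕ)+1), (c (n-1) j : ℝ) * gap (ext y) j
  map_add' y z := by
    funext k
    simp only [ext_add, Pi.add_apply]
    rw [← Finset.sum_add_distrib]
    congr 1; funext j
    rw [gap_add]; ring
  map_smul' r y := by
    funext k
    simp only [ext_smul, RingHom.id_apply, Pi.smul_apply, smul_eq_mul, Finset.mul_sum]
    congr 1; funext j
    rw [gap_smul]; ring

lemma Θ_apply (n : ℕ) (y : Fin n → ℝ) (k : Fin n) :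
    Θ n y k = ∑ j ∈ range ((k : ℕ)+1), (c (n-1) j : ℝ) * gap (ext y) j := rfl

/-- gap only depends on small coordinates -/
lemma gap_eq_zero_of_small {Y : ℕ → ℝ} (J : ℕ) (hY : ∀ k, k ≤ J → Y k = 0) :
    gap Y J = 0 := by
  match J with
  | 0 => simp [gap, hY 0 le_rfl]
  | 1 => simp [gap, hY 0 (by omega), hY 1 le_rfl]
  | 2 => simp [gap, hY 1 (by omega), hY 2 le_rfl]
  | (k+3) => simp [gap, hY k (by omega), hY (k+1) (by omega), hY (k+2) (by omega),
      hY (k+3) le_rfl]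

def E (J : ℕ) : ℕ → ℝ := fun k => if k = J then 1 else 0

lemma gap_E_of_lt {j J : ℕ} (h : j < J) : gap (E J) j = 0 :=
  gap_eq_zero_of_small j (fun k hk => by simp only [E]; rw [if_neg (by omega)])

lemma gap_E_self (J : ℕ) : gap (E J) J = 1 := by
  match J with
  | 0 => simp [gap, E]
  | 1 => simp [gap, E]
  | 2 => simp [gap, E]
  | (k+3) => simp [gap, E]

lemma det_Θ : LinearMap.det (Θ n) = ∏ i : Fin n, (c (n-1) (i : ℕ) : ℝ) := by
  rw [← LinearMap.det_toMatrix' (Θ n)]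
  rw [Matrix.det_of_lowerTriangular]
  · apply Finset.prod_congr rfl
    intro i _
    rw [LinearMap.toMatrix'_apply]
    rw [show (Pi.single i (1:ℝ) : Fin n → ℝ) = fun j' => if j' = i then 1 else 0 from
      funext fun j' => Pi.single_apply _ _ _]
    show ∑ j ∈ range ((i:ℕ)+1), (c (n-1) j : ℝ) * gap (ext (fun j' => if j' = i then 1 else 0)) j
        = _
    have hext : ext (fun j' : Fin n => if j' = i then (1:ℝ) else 0) = E (i : ℕ) := by
      funext k
      simp only [ext, E]
      split
      · rename_i h
        simp only [Fin.ext_iff]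
      · rename_i h
        rw [if_neg (by omega : ¬ k = (i:ℕ))]
    rw [hext, Finset.sum_range_succ, gap_E_self]
    rw [Finset.sum_eq_zero, zero_add, mul_one]
    intro j hj
    rw [gap_E_of_lt (by simp at hj; omega)]
    ring
  · intro i j hij
    simp only [OrderDual.toDual_lt_toDual] at hij
    rw [LinearMap.toMatrix'_apply]
    rw [show (Pi.single j (1:ℝ) : Fin n → ℝ) = fun k => if k = j then 1 else 0 from
      funext fun k => Pi.single_apply _ _ _]
    show ∑ j' ∈ range ((i:ℕ)+1), (c (n-1) j' : ℝ) * gap (ext (fun k => if k = j then 1 else 0)) j'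
        = 0
    have hext : ext (fun j' : Fin n => if j' = j then (1:ℝ) else 0) = E (j : ℕ) := by
      funext k
      simp only [ext, E]
      split
      · simp only [Fin.ext_iff]
      · rw [if_neg (by rename_i h; omega : ¬ k = (j:ℕ))]
    rw [hext]
    apply Finset.sum_eq_zero
    intro j' hj'
    rw [gap_E_of_lt (by simp at hj'; exact lt_of_le_of_lt (by omega) hij)]
    ring


lemma hyperplane_null (i j : Fin n) (hij : i ≠ j) :
    volume {x : Fin n → ℝ | x i = x j} = 0 := by
  have hset : {x : Fin n → ℝ | x i = x j} =
      ↑(LinearMap.ker ((LinearMap.proj i : (Fin n → ℝ) →ₗ[ℝ] ℝ) - LinearMap.proj j)) := by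
    ext x
    simp [LinearMap.mem_ker, sub_eq_zero, eq_comm]
  rw [hset]
  apply Measure.addHaar_submodule
  intro h
  have hmem : (Pi.single i 1 : Fin n → ℝ) ∈
      LinearMap.ker ((LinearMap.proj i : (Fin n → ℝ) →ₗ[ℝ] ℝ) - LinearMap.proj j) := by
    rw [h]; trivial
  rw [LinearMap.mem_ker] at hmem
  simp only [LinearMap.sub_apply, LinearMap.proj_apply] at hmem
  rw [Pi.single_eq_same, Pi.single_eq_of_ne (Ne.symm hij)] at hmem
  norm_num at hmem

lemma notInj_eq : {x : Fin n → ℝ | ¬ Function.Injective x} =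
    ⋃ (p : Fin n × Fin n) (_ : p.1 ≠ p.2), {x : Fin n → ℝ | x p.1 = x p.2} := by
  ext x
  simp only [Set.mem_setOf_eq, Set.mem_iUnion, Function.Injective]
  constructor
  · intro h
    push_neg at h
    obtain ⟨a, b, hab, hne⟩ := h
    exact ⟨(a, b), hne, hab⟩
  · rintro ⟨⟨a, b⟩, hne, heq⟩ h
    exact hne (h heq)

lemma notInj_null : volume {x : Fin n → ℝ | ¬ Function.Injective x} = 0 := by
  rw [notInj_eq]
  refine measure_iUnion_null fun p => measure_iUnion_null fun hp => hyperplane_null _ _ hp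

lemma measurableSet_notInj : MeasurableSet {x : Fin n → ℝ | ¬ Function.Injective x} := by
  rw [notInj_eq]
  refine MeasurableSet.iUnion fun p => MeasurableSet.iUnion fun hp =>
    measurableSet_eq_fun (measurable_pi_apply _) (measurable_pi_apply _)

lemma measurableSet_inj : MeasurableSet {x : Fin n → ℝ | Function.Injective x} := by
  have : {x : Fin n → ℝ | Function.Injective x} = {x : Fin n → ℝ | ¬ Function.Injective x}ᶜ := by
    ext x; simp
  rw [this]
  exact measurableSet_notInj.compl

lemma measurableSet_mono (σ : Equiv.Perm (Fin n)) :
    MeasurableSet {x : Fin n → ℝ | Monotone (x ∘ σ)} := by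
  have hset : {x : Fin n → ℝ | Monotone (x ∘ σ)} =
      ⋂ (p : Fin n × Fin n), {x | p.1 ≤ p.2 → x (σ p.1) ≤ x (σ p.2)} := by
    ext x
    simp only [Set.mem_setOf_eq, Set.mem_iInter]
    exact ⟨fun h p hp => h hp, fun h a b hab => h (a, b) hab⟩
  rw [hset]
  refine MeasurableSet.iInter fun p => ?_
  by_cases hp : p.1 ≤ p.2
  · simp only [hp, forall_true_left]
    exact measurableSet_le (measurable_pi_apply _) (measurable_pi_apply _)
  · simp only [hp, false_implies]
    exact MeasurableSet.univ

lemma measurePreserving_perm (σ : Equiv.Perm (Fin n)) :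
    MeasurePreserving (fun x : Fin n → ℝ => x ∘ σ) volume volume := by
  have h := volume_measurePreserving_piCongrLeft (fun _ : Fin n => ℝ) σ.symm
  have hcoe : ⇑(MeasurableEquiv.piCongrLeft (fun _ : Fin n => ℝ) σ.symm)
      = fun x : Fin n → ℝ => x ∘ σ := by
    funext x
    funext i
    rw [MeasurableEquiv.coe_piCongrLeft]
    conv_lhs => rw [show i = σ.symm (σ i) from (Equiv.symm_apply_apply σ i).symm]
    rw [Equiv.piCongrLeft_apply_apply]
    rfl
  rwa [hcoe] at h

lemma perm_decomp (A : Set (Fin n → ℝ)) (hA : MeasurableSet A)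
    (hsymm : ∀ (σ : Equiv.Perm (Fin n)) (x : Fin n → ℝ), x ∈ A → x ∘ σ ∈ A) :
    volume A = (Nat.factorial n) *
      volume (A ∩ {x | Monotone x} ∩ {x | Function.Injective x}) := by
  classical
  set I : Set (Fin n → ℝ) := {x | Function.Injective x} with hI
  have step1 : volume A = volume (A ∩ I) := by
    have : A ∩ I = A \ Iᶜ := by rw [Set.diff_compl]
    rw [this, measure_diff_null]
    have : Iᶜ = {x : Fin n → ℝ | ¬ Function.Injective x} := by ext x; simp [hI]
    rw [this]; exact notInj_null
  have hmeas : ∀ σ : Equiv.Perm (Fin n),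
      MeasurableSet (A ∩ I ∩ {x | Monotone (x ∘ σ)}) := fun σ =>
    (hA.inter measurableSet_inj).inter (measurableSet_mono σ)
  have cover : A ∩ I = ⋃ σ : Equiv.Perm (Fin n), (A ∩ I ∩ {x | Monotone (x ∘ σ)}) := by
    ext x
    simp only [Set.mem_iUnion, Set.mem_inter_iff, Set.mem_setOf_eq]
    constructor
    · rintro ⟨hxA, hxI⟩
      exact ⟨Tuple.sort x, ⟨hxA, hxI⟩, Tuple.monotone_sort x⟩
    · rintro ⟨σ, ⟨hxA, hxI⟩, _⟩
      exact ⟨hxA, hxI⟩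
  have key : ∀ σ τ : Equiv.Perm (Fin n), ∀ x : Fin n → ℝ, Function.Injective x →
      Monotone (x ∘ σ) → σ = Tuple.sort x := by
    intro σ τ x hxI hmono
    rw [Tuple.eq_sort_iff]
    refine ⟨hmono, fun i j hij heq => absurd (hxI heq) ?_⟩
    intro h
    rw [σ.injective h] at hij
    exact lt_irrefl _ hij
  have disj : Pairwise (Function.onFun Disjoint
      fun σ : Equiv.Perm (Fin n) => A ∩ I ∩ {x | Monotone (x ∘ σ)}) := by
    intro σ τ hst
    rw [Function.onFun, Set.disjoint_left]
    rintro x ⟨⟨hxA, hxI⟩, hmσ⟩ ⟨⟨_, _⟩, hmτ⟩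
    exact hst ((key σ τ x hxI hmσ).trans (key τ σ x hxI hmτ).symm)
  have heach : ∀ σ : Equiv.Perm (Fin n),
      volume (A ∩ I ∩ {x | Monotone (x ∘ σ)}) =
      volume (A ∩ I ∩ {x | Monotone x}) := by
    intro σ
    have hp := measurePreserving_perm (n := n) σ
    have hpre : (fun x : Fin n → ℝ => x ∘ σ) ⁻¹' (A ∩ I ∩ {x | Monotone x})
        = A ∩ I ∩ {x | Monotone (x ∘ σ)} := by
      ext x
      simp only [Set.mem_preimage, Set.mem_inter_iff, Set.mem_setOf_eq, hI]
      have hxs : (x ∘ σ) ∘ σ.symm = x := by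
        funext i; simp
      constructor
      · rintro ⟨⟨hxA, hxI⟩, hm⟩
        refine ⟨⟨?_, ?_⟩, hm⟩
        · have := hsymm σ.symm (x ∘ σ) hxA
          rwa [hxs] at this
        · have : x = (x ∘ σ) ∘ σ.symm := hxs.symm
          rw [this]
          exact hxI.comp σ.symm.injective
      · rintro ⟨⟨hxA, hxI⟩, hm⟩
        exact ⟨⟨hsymm σ x hxA, hxI.comp σ.injective⟩, hm⟩
    have hmono1 : MeasurableSet {x : Fin n → ℝ | Monotone x} := by
      have h1 := measurableSet_mono (n := n) 1
      simpa [Function.comp] using h1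
    rw [← hpre, hp.measure_preimage ((hA.inter measurableSet_inj).inter hmono1).nullMeasurableSet]
  rw [step1, cover, measure_iUnion disj hmeas]
  rw [tsum_fintype]
  have : ∀ σ : Equiv.Perm (Fin n), volume (A ∩ I ∩ {x | Monotone (x ∘ σ)})
      = volume (A ∩ {x | Monotone x} ∩ I) := by
    intro σ
    rw [heach σ]
    congr 1
    ext x
    simp only [Set.mem_inter_iff, Set.mem_setOf_eq]
    tauto
  rw [Finset.sum_congr rfl (fun σ _ => this σ), Finset.sum_const]
  simp [Fintype.card_perm, Fintype.card_fin, mul_comm]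


lemma ext_lt (y : Fin n → ℝ) {k : ℕ} (h : k < n) : ext y k = y ⟨k, h⟩ := dif_pos h

/-- the chamber set -/
def B (n : ℕ) : Set (Fin n → ℝ) :=
  {y | (∀ j : Fin n, 0 ≤ gap (ext y) (j : ℕ)) ∧ ext y (n-1) ≤ 1}

def cube (n : ℕ) : Set (Fin n → ℝ) := {x | ∀ i, x i ∈ Set.Icc (0:ℝ) 1}

lemma volume_cube (n : ℕ) : volume (cube n) = 1 := by
  have : cube n = Set.pi Set.univ (fun _ : Fin n => Set.Icc (0:ℝ) 1) := by
    ext x; simp [cube, Set.pi]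
  rw [this, volume_pi_pi]
  simp

lemma measurableSet_cube (n : ℕ) : MeasurableSet (cube n) := by
  have : cube n = ⋂ i, (fun x : Fin n → ℝ => x i) ⁻¹' (Set.Icc 0 1) := by
    ext x; simp [cube]
  rw [this]
  exact MeasurableSet.iInter fun i => (measurable_pi_apply i) measurableSet_Icc

/-- helper: monotone from adjacent comparisons -/
lemma monotone_of_adj {w : Fin n → ℝ}
    (h : ∀ k : ℕ, (hk : k + 1 < n) → w ⟨k, by omega⟩ ≤ w ⟨k+1, hk⟩) : Monotone w := by
  have key : ∀ (j : ℕ) (hj : j < n) (i : ℕ) (hi : i ≤ j), w ⟨i, by omega⟩ ≤ w ⟨j, hj⟩ := by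
    intro j
    induction j with
    | zero => intro hj i hi; interval_cases i; exact le_rfl
    | succ j ihj =>
      intro hj i hi
      rcases Nat.lt_or_ge i (j+1) with hij | hij
      · exact le_trans (ihj (by omega) i (by omega)) (h j hj)
      · have : i = j + 1 := by omega
        subst this; exact le_rfl
  intro a b hab
  have := key (b : ℕ) b.isLt (a : ℕ) hab
  simpa using this

/-- The map Θ sends B to the monotone part of the cube, and conversely. -/
lemma theta_preimage (hn : 1 ≤ n) :
    (Θ n) ⁻¹' (cube n ∩ {x | Monotone x}) = B n := by
  have hgap0 : ∀ y : Fin n → ℝ, Θ n y ⟨0, by omega⟩ = (c (n-1) 0 : ℝ) * gap (ext y) 0 := by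
    intro y; rw [Θ_apply]; simp
  have hdiff : ∀ (y : Fin n → ℝ) (k : ℕ) (hk : k + 1 < n),
      Θ n y ⟨k+1, hk⟩ - Θ n y ⟨k, by omega⟩ = (c (n-1) (k+1) : ℝ) * gap (ext y) (k+1) := by
    intro y k hk
    rw [Θ_apply, Θ_apply]
    simp only [Finset.sum_range_succ]
    ring
  have hlast : ∀ y : Fin n → ℝ, Θ n y ⟨n-1, by omega⟩ = ext y (n-1) := by
    intro y
    rw [Θ_apply]
    exact sum_c_gap (ext y) (n-1)
  have cpos : ∀ j : ℕ, j ≤ n - 1 → (0:ℝ) < (c (n-1) j : ℝ) := by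
    intro j hj; exact_mod_cast c_pos (n-1) j hj
  ext y
  simp only [Set.mem_preimage, Set.mem_inter_iff, Set.mem_setOf_eq, B, cube]
  constructor
  · rintro ⟨hicc, hmono⟩
    refine ⟨?_, ?_⟩
    · intro j
      rcases Nat.eq_zero_or_pos (j : ℕ) with hj0 | hjpos
      · rw [hj0]
        have h0 := (hicc ⟨0, by omega⟩).1
        rw [hgap0 y] at h0
        nlinarith [h0, cpos 0 (by omega : (0:ℕ) ≤ n - 1)]
      · obtain ⟨k, hk⟩ : ∃ k, (j : ℕ) = k + 1 := ⟨(j:ℕ) - 1, by omega⟩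
        have hkn : k + 1 < n := hk ▸ j.isLt
        have hm : Θ n y ⟨k, by omega⟩ ≤ Θ n y ⟨k+1, hkn⟩ :=
          hmono (by simp [Fin.le_def])
        have := hdiff y k hkn
        rw [hk]
        have hcp := cpos (k+1) (by omega)
        nlinarith [this, hm]
    · have := (hicc ⟨n-1, by omega⟩).2
      rwa [hlast y] at this
  · rintro ⟨hgap, hlast1⟩
    have hmono : Monotone (Θ n y) := by
      apply monotone_of_adj
      intro k hk
      have hd := hdiff y k hk
      have hg := hgap ⟨k+1, hk⟩
      simp only [] at hg
      have hcp := cpos (k+1) (by omega)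
      nlinarith
    have h0 : 0 ≤ Θ n y ⟨0, by omega⟩ := by
      rw [hgap0 y]
      have hg := hgap ⟨0, by omega⟩
      have hcp := cpos 0 (by omega)
      positivity
    have hl : Θ n y ⟨n-1, by omega⟩ ≤ 1 := by rw [hlast y]; exact hlast1
    refine ⟨fun i => ⟨?_, ?_⟩, hmono⟩
    · exact le_trans h0 (hmono (by simp [Fin.le_def]))
    · refine le_trans (hmono (a := i) (b := ⟨n-1, by omega⟩) ?_) hl
      simp [Fin.le_def]
      omega


def S (n : ℕ) : Set (Fin n → ℝ) :=
  {x : Fin n → ℝ |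
        (∀ i, x i ∈ Set.Icc (0 : ℝ) 1) ∧
        ∀ i j k l : Fin n, i ≠ j → i ≠ k → i ≠ l → j ≠ k → j ≠ l → k ≠ l →
          (x i + x j + x k ≤ x l ∨ x i + x j + x l ≤ x k ∨
            x i + x k + x l ≤ x j ∨ x j + x k + x l ≤ x i)}

lemma S_symm (σ : Equiv.Perm (Fin n)) (x : Fin n → ℝ) (hx : x ∈ S n) : x ∘ σ ∈ S n := by
  obtain ⟨hicc, hquad⟩ := hx
  refine ⟨fun i => hicc (σ i), fun i j k l hij hik hil hjk hjl hkl => ?_⟩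
  exact hquad (σ i) (σ j) (σ k) (σ l) (fun h => hij (σ.injective h))
    (fun h => hik (σ.injective h)) (fun h => hil (σ.injective h))
    (fun h => hjk (σ.injective h)) (fun h => hjl (σ.injective h))
    (fun h => hkl (σ.injective h))

lemma measurableSet_S : MeasurableSet (S n) := by
  have hS : S n = cube n ∩ ⋂ (i : Fin n) (j : Fin n) (k : Fin n) (l : Fin n),
      {x : Fin n → ℝ | i ≠ j → i ≠ k → i ≠ l → j ≠ k → j ≠ l → k ≠ l →
          (x i + x j + x k ≤ x l ∨ x i + x j + x l ≤ x k ∨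
            x i + x k + x l ≤ x j ∨ x j + x k + x l ≤ x i)} := by
    ext x
    simp only [S, cube, Set.mem_inter_iff, Set.mem_setOf_eq, Set.mem_iInter]
  rw [hS]
  refine (measurableSet_cube n).inter ?_
  refine MeasurableSet.iInter fun i => MeasurableSet.iInter fun j =>
    MeasurableSet.iInter fun k => MeasurableSet.iInter fun l => ?_
  by_cases h : i ≠ j ∧ i ≠ k ∧ i ≠ l ∧ j ≠ k ∧ j ≠ l ∧ k ≠ l
  · obtain ⟨h1, h2, h3, h4, h5, h6⟩ := h
    have : {x : Fin n → ℝ | i ≠ j → i ≠ k → i ≠ l → j ≠ k → j ≠ l → k ≠ l →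
          (x i + x j + x k ≤ x l ∨ x i + x j + x l ≤ x k ∨
            x i + x k + x l ≤ x j ∨ x j + x k + x l ≤ x i)}
        = {x : Fin n → ℝ | x i + x j + x k ≤ x l} ∪ {x | x i + x j + x l ≤ x k}
          ∪ {x | x i + x k + x l ≤ x j} ∪ {x | x j + x k + x l ≤ x i} := by
      ext x
      simp only [Set.mem_setOf_eq, Set.mem_union, h1, h2, h3, h4, h5, h6,
        forall_true_left, ne_eq, not_false_eq_true]
      tauto
    rw [this]
    have m3 : ∀ a b d e : Fin n, MeasurableSet {x : Fin n → ℝ | x a + x b + x d ≤ x e} :=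
      fun a b d e => measurableSet_le
        (((measurable_pi_apply a).add (measurable_pi_apply b)).add (measurable_pi_apply d))
        (measurable_pi_apply e)
    exact (((m3 i j k l).union (m3 i j l k)).union (m3 i k l j)).union (m3 j k l i)
  · have : {x : Fin n → ℝ | i ≠ j → i ≠ k → i ≠ l → j ≠ k → j ≠ l → k ≠ l →
          (x i + x j + x k ≤ x l ∨ x i + x j + x l ≤ x k ∨
            x i + x k + x l ≤ x j ∨ x j + x k + x l ≤ x i)} = Set.univ := by
      ext x
      simp only [Set.mem_setOf_eq, Set.mem_univ, iff_true]
      intro h1 h2 h3 h4 h5 h6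
      exact absurd ⟨h1, h2, h3, h4, h5, h6⟩ h
    rw [this]
    exact MeasurableSet.univ

lemma nat_cases3 (a : ℕ) : a = 0 ∨ a = 1 ∨ a = 2 ∨ ∃ m, a = m + 3 := by
  rcases Nat.lt_or_ge a 3 with h | h
  · rcases (by omega : a = 0 ∨ a = 1 ∨ a = 2) with h | h | h
    exacts [Or.inl h, Or.inr (Or.inl h), Or.inr (Or.inr (Or.inl h))]
  · exact Or.inr (Or.inr (Or.inr ⟨a - 3, by omega⟩))

lemma nat_cases2 (a : ℕ) : a = 0 ∨ a = 1 ∨ ∃ m, a = m + 2 := by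
  rcases Nat.lt_or_ge a 2 with h | h
  · rcases (by omega : a = 0 ∨ a = 1) with h | h
    exacts [Or.inl h, Or.inr (Or.inl h)]
  · exact Or.inr (Or.inr ⟨a - 2, by omega⟩)

lemma chamber_eq (hn : 3 ≤ n) :
    S n ∩ {x | Monotone x} ∩ {x | Function.Injective x}
      = B n ∩ {x | Function.Injective x} := by
  ext x
  simp only [Set.mem_inter_iff, Set.mem_setOf_eq, S, B]
  constructor
  · rintro ⟨⟨⟨hicc, hquad⟩, hmono⟩, hinj⟩
    have hsm : StrictMono x := hmono.strictMono_of_injective hinj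
    refine ⟨⟨?_, ?_⟩, hinj⟩
    · intro j
      rcases nat_cases3 (j:ℕ) with h | h | h | ⟨m, h⟩
      · rw [h]
        show 0 ≤ ext x 0
        rw [ext_lt x (show 0 < n by omega)]
        exact (hicc _).1
      · rw [h]
        show 0 ≤ ext x 1 - ext x 0
        have hj1 : (1:ℕ) < n := h ▸ j.isLt
        rw [ext_lt x hj1, ext_lt x (show 0 < n by omega)]
        have := hsm (show (⟨0, by omega⟩ : Fin n) < ⟨1, hj1⟩ by simp [Fin.lt_def])
        linarith
      · rw [h]
        show 0 ≤ ext x 2 - ext x 1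
        have hj2 : (2:ℕ) < n := h ▸ j.isLt
        rw [ext_lt x hj2, ext_lt x (show 1 < n by omega)]
        have := hsm (show (⟨1, by omega⟩ : Fin n) < ⟨2, hj2⟩ by simp [Fin.lt_def])
        linarith
      · rw [h]
        have hj3 : m + 3 < n := h ▸ j.isLt
        show 0 ≤ ext x (m+3) - ext x (m+2) - ext x (m+1) - ext x m
        rw [ext_lt x hj3, ext_lt x (show m+2 < n by omega), ext_lt x (show m+1 < n by omega),
          ext_lt x (show m < n by omega)]
        set a : Fin n := ⟨m, by omega⟩
        set b : Fin n := ⟨m+1, by omega⟩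
        set d : Fin n := ⟨m+2, by omega⟩
        set e : Fin n := ⟨m+3, hj3⟩
        have hab : a < b := by simp [a, b, Fin.lt_def]
        have hbd : b < d := by simp [b, d, Fin.lt_def]
        have hde : d < e := by simp [d, e, Fin.lt_def]
        have h1 := hsm hab
        have h2 := hsm hbd
        have h3 := hsm hde
        have ha0 : 0 ≤ x a := (hicc a).1
        have hb0 : 0 ≤ x b := (hicc b).1
        have hq := hquad a b d e (ne_of_lt hab) (ne_of_lt (hab.trans hbd))
          (ne_of_lt ((hab.trans hbd).trans hde)) (ne_of_lt hbd)
          (ne_of_lt (hbd.trans hde)) (ne_of_lt hde)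
        rcases hq with hq | hq | hq | hq <;> linarith
    · rw [ext_lt x (show n - 1 < n by omega)]
      exact (hicc _).2
  · rintro ⟨⟨hgap, hlast⟩, hinj⟩
    have Ynn : ∀ k, k < n → 0 ≤ ext x k := by
      intro k
      induction k using Nat.strong_induction_on with
      | _ k ih =>
        intro hk
        rcases nat_cases3 k with rfl | rfl | rfl | ⟨m, rfl⟩
        · exact hgap ⟨0, hk⟩
        · have h1 : (0:ℝ) ≤ ext x 1 - ext x 0 := hgap ⟨1, hk⟩
          have h0 := ih 0 (by omega) (by omega)
          linarith
        · have h1 : (0:ℝ) ≤ ext x 2 - ext x 1 := hgap ⟨2, hk⟩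
          have h0 := ih 1 (by omega) (by omega)
          linarith
        · have h1 : (0:ℝ) ≤ ext x (m+3) - ext x (m+2) - ext x (m+1) - ext x m :=
            hgap ⟨m+3, hk⟩
          have h2 := ih (m+2) (by omega) (by omega)
          have h3 := ih (m+1) (by omega) (by omega)
          have h4 := ih m (by omega) (by omega)
          linarith
    have adj : ∀ k, k + 1 < n → ext x k ≤ ext x (k+1) := by
      intro k hk
      rcases nat_cases2 k with rfl | rfl | ⟨m, rfl⟩
      · have h1 : (0:ℝ) ≤ ext x 1 - ext x 0 := hgap ⟨1, hk⟩
        linarith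
      · have h1 : (0:ℝ) ≤ ext x 2 - ext x 1 := hgap ⟨2, hk⟩
        linarith
      · have h1 : (0:ℝ) ≤ ext x (m+3) - ext x (m+2) - ext x (m+1) - ext x m :=
          hgap ⟨m+3, by omega⟩
        have h2 := Ynn (m+1) (by omega)
        have h3 := Ynn m (by omega)
        linarith
    have hmono : Monotone x := by
      refine monotone_of_adj (w := x) (fun k hk => ?_)
      have h2 := adj k hk
      rw [ext_lt x (show k < n by omega), ext_lt x hk] at h2
      exact h2
    have key4 : ∀ p q r s : Fin n, p < q → q < r → r < s → x p + x q + x r ≤ x s := by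
      intro p q r s hpq hqr hrs
      have hpq' : (p:ℕ) < (q:ℕ) := hpq
      have hqr' : (q:ℕ) < (r:ℕ) := hqr
      have hrs' : (r:ℕ) < (s:ℕ) := hrs
      obtain ⟨m, hm⟩ : ∃ m, (s:ℕ) = m + 3 := ⟨(s:ℕ) - 3, by omega⟩
      have hg : (0:ℝ) ≤ gap (ext x) ((s:ℕ)) := hgap s
      rw [hm] at hg
      have hsn : m + 3 < n := hm ▸ s.isLt
      have hg' : (0:ℝ) ≤ ext x (m+3) - ext x (m+2) - ext x (m+1) - ext x m := hg
      rw [ext_lt x hsn, ext_lt x (show m+2 < n by omega), ext_lt x (show m+1 < n by omega),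
        ext_lt x (show m < n by omega)] at hg'
      have h1 : x p ≤ x ⟨m, by omega⟩ := hmono (by simp [Fin.le_def]; omega)
      have h2 : x q ≤ x ⟨m+1, by omega⟩ := hmono (by simp [Fin.le_def]; omega)
      have h3 : x r ≤ x ⟨m+2, by omega⟩ := hmono (by simp [Fin.le_def]; omega)
      have hs : x s = x ⟨m+3, hsn⟩ := by congr 1; exact Fin.ext hm
      linarith
    refine ⟨⟨⟨fun i => ⟨?_, ?_⟩, ?_⟩, hmono⟩, hinj⟩
    · have := Ynn (i : ℕ) i.isLt
      rwa [ext_lt x i.isLt, Fin.eta] at this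
    · have h1 : x i ≤ x ⟨n-1, by omega⟩ := hmono (by simp [Fin.le_def]; omega)
      have h2 : ext x (n-1) ≤ 1 := hlast
      rw [ext_lt x (show n - 1 < n by omega)] at h2
      linarith
    · intro i j k l hij hik hil hjk hjl hkl
      set f : Fin 4 → Fin n := ![i, j, k, l] with hf
      have hfinj : Function.Injective f := by
        intro a b hab
        fin_cases a <;> fin_cases b <;> simp_all [f]
      set σ := Tuple.sort f with hσ
      have hg : StrictMono (f ∘ σ) :=
        (Tuple.monotone_sort f).strictMono_of_injective (hfinj.comp σ.injective)
      have h01 : f (σ 0) < f (σ 1) := hg (show (0:Fin 4) < 1 by decide)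
      have h12 : f (σ 1) < f (σ 2) := hg (show (1:Fin 4) < 2 by decide)
      have h23 : f (σ 2) < f (σ 3) := hg (show (2:Fin 4) < 3 by decide)
      have hkey := key4 _ _ _ _ h01 h12 h23
      have hsum : x (f (σ 0)) + x (f (σ 1)) + x (f (σ 2)) + x (f (σ 3))
          = x i + x j + x k + x l := by
        have h := Equiv.sum_comp σ (fun t => x (f t))
        rw [Fin.sum_univ_four, Fin.sum_univ_four] at h
        simpa [f] using h
      have hmem : ∀ t : Fin 4, f t = i ∨ f t = j ∨ f t = k ∨ f t = l := by
        intro t; fin_cases t <;> simp [f]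
      rcases hmem (σ 3) with h | h | h | h <;> rw [h] at hkey hsum
      · right; right; right; linarith
      · right; right; left; linarith
      · right; left; linarith
      · left; linarith

lemma volume_inter_inj (X : Set (Fin n → ℝ)) :
    volume (X ∩ {x | Function.Injective x}) = volume X := by
  have : X ∩ {x | Function.Injective x} = X \ {x : Fin n → ℝ | ¬ Function.Injective x} := by
    ext x; simp [Set.mem_diff]
  rw [this, measure_diff_null notInj_null]

theorem main_vol (hn : 3 ≤ n) :
    volume (S n) = (∏ i : Fin n, (c (n-1) (i : ℕ) : ENNReal))⁻¹ := by
  have hfact0 : ((Nat.factorial n : ℕ) : ℝ≥0∞) ≠ 0 := by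
    simp [Nat.factorial_ne_zero]
  have hfactT : ((Nat.factorial n : ℕ) : ℝ≥0∞) ≠ ⊤ := ENNReal.natCast_ne_top _
  -- volume of the monotone chamber of the cube
  have h2 : (1 : ℝ≥0∞) = (Nat.factorial n) *
      volume (cube n ∩ {x | Monotone x} ∩ {x | Function.Injective x}) := by
    rw [← volume_cube n]
    exact perm_decomp (cube n) (measurableSet_cube n) (fun σ x hx i => hx (σ i))
  have hV : volume (cube n ∩ {x | Monotone x} ∩ {x | Function.Injective x})
      = ((Nat.factorial n : ℕ) : ℝ≥0∞)⁻¹ := by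
    rw [← one_mul (volume _), ← ENNReal.inv_mul_cancel hfact0 hfactT, mul_assoc, ← h2, mul_one]
  have hW : volume (cube n ∩ {x | Monotone x}) = ((Nat.factorial n : ℕ) : ℝ≥0∞)⁻¹ := by
    rw [← volume_inter_inj (cube n ∩ {x | Monotone x}), hV]
  -- determinant
  have hdpos : (0:ℝ) < ∏ i : Fin n, (c (n-1) (i:ℕ) : ℝ) := by
    apply Finset.prod_pos
    intro i _
    exact_mod_cast c_pos (n-1) (i:ℕ) (by omega)
  have hdet_ne : LinearMap.det (Θ n) ≠ 0 := by
    rw [det_Θ]; exact ne_of_gt hdpos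
  have hB : volume (B n) = ENNReal.ofReal |(LinearMap.det (Θ n))⁻¹|
      * volume (cube n ∩ {x | Monotone x}) := by
    rw [← theta_preimage (by omega : 1 ≤ n)]
    exact Measure.addHaar_preimage_linearMap volume hdet_ne _
  have hS : volume (S n) = (Nat.factorial n) *
      volume (S n ∩ {x | Monotone x} ∩ {x | Function.Injective x}) :=
    perm_decomp (S n) measurableSet_S S_symm
  rw [hS, chamber_eq hn, volume_inter_inj, hB, hW]
  have habs : |(LinearMap.det (Θ n))⁻¹| = (∏ i : Fin n, (c (n-1) (i:ℕ) : ℝ))⁻¹ := by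
    rw [det_Θ, abs_of_pos (inv_pos.2 hdpos)]
  rw [habs, ENNReal.ofReal_inv_of_pos hdpos]
  have hcast : ENNReal.ofReal (∏ i : Fin n, (c (n-1) (i:ℕ) : ℝ))
      = ∏ i : Fin n, (c (n-1) (i:ℕ) : ℝ≥0∞) := by
    rw [show (∏ i : Fin n, (c (n-1) (i:ℕ) : ℝ)) = ((∏ i : Fin n, c (n-1) (i:ℕ) : ℕ) : ℝ) by
      push_cast; ring, ENNReal.ofReal_natCast]
    push_cast
    ring
  rw [hcast]
  rw [show ((Nat.factorial n : ℕ) : ℝ≥0∞) = (Nat.factorial n : ℝ≥0∞) from rfl]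
  rw [← mul_assoc, mul_comm ((Nat.factorial n : ℝ≥0∞)), mul_assoc,
    ENNReal.mul_inv_cancel hfact0 hfactT, mul_one]

theorem final (hn : 3 ≤ n) :
    volume (S n) =
      (1 / ((trib n - trib (n - 2) : ℕ) : ENNReal)) *
        ∏ i ∈ Finset.Icc 1 (n - 1), (1 / (trib i : ENNReal)) := by
  rw [main_vol hn]
  -- compute the product over ℕ
  have hP : (∏ i : Fin n, c (n-1) (i : ℕ))
      = (trib n - trib (n - 2)) * ∏ i ∈ Finset.Icc 1 (n - 1), trib i := by
    have hcol : ∏ i ∈ Finset.Ico 1 n, c (n-1) i = ∏ i ∈ Finset.Ico 1 n, trib (n - i) :=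
      Finset.prod_congr rfl (fun i hi => by
        rw [Finset.mem_Ico] at hi
        rw [c_col (n-1) i hi.1 (by omega)]
        congr 1
        omega)
    have hrefl : ∏ i ∈ Finset.Ico 1 n, trib (n - i) = ∏ i ∈ Finset.Ico 1 n, trib i :=
      Finset.prod_nbij' (fun i => n - i) (fun i => n - i)
        (fun a ha => by simp only [Finset.mem_Ico] at ha ⊢; omega)
        (fun a ha => by simp only [Finset.mem_Ico] at ha ⊢; omega)
        (fun a ha => by simp only [Finset.mem_Ico] at ha; show n - (n - a) = a; omega)
        (fun a ha => by simp only [Finset.mem_Ico] at ha; show n - (n - a) = a; omega)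
        (fun a ha => rfl)
    rw [Fin.prod_univ_eq_prod_range (fun i => c (n-1) i) n]
    rw [Finset.range_eq_Ico, Finset.prod_eq_prod_Ico_succ_bot (by omega : 0 < n)]
    rw [c_zero, show n-1+1 = n by omega, show n-1-1 = n-2 by omega, hcol, hrefl,
      show Finset.Ico 1 n = Finset.Icc 1 (n-1) by rw [← Finset.Ico_add_one_right_eq_Icc]; congr 1; omega]
  have hcast : (∏ i : Fin n, (c (n-1) (i : ℕ) : ℝ≥0∞))
      = (((trib n - trib (n - 2)) : ℕ) : ℝ≥0∞) * ∏ i ∈ Finset.Icc 1 (n - 1), (trib i : ℝ≥0∞) := by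
    rw [show (∏ i : Fin n, (c (n-1) (i:ℕ) : ℝ≥0∞)) = ((∏ i : Fin n, c (n-1) (i:ℕ) : ℕ) : ℝ≥0∞) by
      push_cast; ring]
    rw [hP]
    push_cast
    ring
  rw [hcast]
  rw [ENNReal.mul_inv (Or.inr (by exact (ENNReal.prod_ne_top (fun i _ => ENNReal.natCast_ne_top _))))
    (Or.inl (ENNReal.natCast_ne_top _))]
  rw [ENNReal.prod_inv_distrib (fun i _ j _ _ => Or.inr (ENNReal.natCast_ne_top _))]
  simp only [one_div]


end NoQuad

/-- If `n ≥ 3` real numbers are chosen uniformly from `[0,1]`, the probability that no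
four of them can form a quadrilateral is `(1/(Tₙ - T_{n-2})) · ∏_{i=1}^{n-1} 1/Tᵢ`. -/
theorem no_quadrilateral_prob_eq (n : ℕ) (hn : 3 ≤ n) :
    volume {x : Fin n → ℝ |
        (∀ i, x i ∈ Set.Icc (0 : ℝ) 1) ∧
        ∀ i j k l : Fin n, i ≠ j → i ≠ k → i ≠ l → j ≠ k → j ≠ l → k ≠ l →
          (x i + x j + x k ≤ x l ∨ x i + x j + x l ≤ x k ∨
            x i + x k + x l ≤ x j ∨ x j + x k + x l ≤ x i)} =
      (1 / ((trib n - trib (n - 2) : ℕ) : ENNReal)) *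
        ∏ i ∈ Finset.Icc 1 (n - 1), (1 / (trib i : ENNReal)) := by
  exact NoQuad.final hn
end

section
/- Let n ≥ 3 and let D_n = { x ∈ ℝ^n : x_j ≥ 0 for all j, and 2(x_1 + ⋯ + x_i) + x_{i+1} ≤ x_{i+3} for every 1 ≤ i ≤ n − 3 }. Then the Lebesgue integral ∫_{D_n} exp(−(x_1 + ⋯ + x_n)) dx equals (1/(T_n − T_{n−2})) · ∏_{i=1}^{n−1} 1/T_i. -/
open MeasureTheory

open Set Finset Real ENNReal

section helpers

lemma trib_pos (i : ℕ) : 0 < trib (i+1) := by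
  induction i using Nat.strong_induction_on with
  | _ i ih =>
    match i with
    | 0 => simp [trib]
    | 1 => simp [trib]
    | (j+2) =>
      have h := ih (j+1) (by omega)
      rw [show j+1+1 = j+2 from rfl] at h
      simp only [trib]
      omega

lemma snoc_lt {m : ℕ} (x : Fin m → ℝ) (t : ℝ) (j : Fin (m+1)) (h : (j:ℕ) < m) :
    (Fin.snoc x t : Fin (m+1) → ℝ) j = x ⟨j, h⟩ := by
  have hj : j = Fin.castSucc ⟨j, h⟩ := Fin.ext rfl
  conv_lhs => rw [hj]
  rw [Fin.snoc_castSucc]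

lemma sum_filter_snoc {m q : ℕ} (hq : q ≤ m) (x : Fin m → ℝ) (t : ℝ) :
    ∑ j ∈ Finset.univ.filter (fun j : Fin (m+1) => (j:ℕ) < q), (Fin.snoc x t : Fin (m+1) → ℝ) j
      = ∑ j ∈ Finset.univ.filter (fun j : Fin m => (j:ℕ) < q), x j := by
  rw [Finset.sum_filter, Finset.sum_filter, Fin.sum_univ_castSucc]
  simp only [Fin.coe_castSucc, Fin.snoc_castSucc, Fin.val_last]
  rw [if_neg (by omega)]
  simp

lemma sum_filter_succ {m q : ℕ} (h : q < m) (x : Fin m → ℝ) :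
    ∑ j ∈ Finset.univ.filter (fun j : Fin m => (j:ℕ) < q+1), x j
      = (∑ j ∈ Finset.univ.filter (fun j : Fin m => (j:ℕ) < q), x j) + x ⟨q, h⟩ := by
  rw [show Finset.univ.filter (fun j : Fin m => (j:ℕ) < q+1)
      = insert ⟨q, h⟩ (Finset.univ.filter (fun j : Fin m => (j:ℕ) < q)) by
    ext j; simp [Fin.ext_iff]; omega]
  rw [Finset.sum_insert (by simp)]
  ring

lemma integral_exp_neg_mul_Ioi {D : ℝ} (hD : 0 < D) (B : ℝ) :
    ∫ t in Set.Ioi B, Real.exp (-(D * t)) = Real.exp (-(D * B)) / D := by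
  have h := integral_Ioi_of_hasDerivAt_of_tendsto (a := B)
    (f := fun t => -Real.exp (-(D * t)) / D) (f' := fun t => Real.exp (-(D * t)))
    (m := 0) ?_ ?_ ?_ ?_
  · rw [h]; ring
  · exact ((((hasDerivAt_id B).const_mul D).neg.exp.neg.div_const D).continuousAt).continuousWithinAt
  · intro x hx
    have h0 := (((hasDerivAt_id x).const_mul D).neg.exp.neg.div_const D)
    simp only [id_eq, Pi.neg_apply] at h0
    have he : (-(Real.exp (-(D * x)) * -(D * 1)) / D) = Real.exp (-(D * x)) := by
      field_simp
    rw [he] at h0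
    exact h0
  · have := exp_neg_integrableOn_Ioi B hD
    simpa [neg_mul] using this
  · have : Filter.Tendsto (fun t => -Real.exp (-(D * t)) / D) Filter.atTop (nhds (-0 / D)) := by
      refine Filter.Tendsto.div_const (Filter.Tendsto.neg ?_) _
      have : Filter.Tendsto (fun t : ℝ => -(D * t)) Filter.atTop Filter.atBot := by
        simpa [neg_mul] using (Filter.tendsto_id.const_mul_atTop_of_neg (r := -D) (by linarith))
      exact Real.tendsto_exp_atBot.comp this
    simpa using this

lemma lintegral_exp_neg_Ici {D : ℝ} (hD : 0 < D) (c B : ℝ) :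
    ∫⁻ t in Set.Ici B, ENNReal.ofReal (Real.exp (-(c + D * t)))
      = ENNReal.ofReal (Real.exp (-(c + D * B)) / D) := by
  rw [← Measure.restrict_congr_set Ioi_ae_eq_Ici]
  rw [← ofReal_integral_eq_lintegral_ofReal]
  · congr 1
    have h : ∀ t : ℝ, Real.exp (-(c + D * t)) = Real.exp (-c) * Real.exp (-(D * t)) := by
      intro t; rw [← Real.exp_add]; ring_nf
    simp_rw [h]
    rw [MeasureTheory.integral_const_mul, integral_exp_neg_mul_Ioi hD, ← Real.exp_add]
    rw [Real.exp_add]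
    ring
  · have h : ∀ t : ℝ, Real.exp (-(c + D * t)) = Real.exp (-c) * Real.exp (-(D * t)) := by
      intro t; rw [← Real.exp_add]; ring_nf
    simp_rw [h]
    have hint : IntegrableOn (fun t => Real.exp (-(D * t))) (Set.Ioi B) := by
      simpa [neg_mul] using exp_neg_integrableOn_Ioi B hD
    exact hint.const_mul _
  · exact Filter.Eventually.of_forall fun t => (Real.exp_pos _).le

lemma lintegral_split (m : ℕ) (H : (Fin (m+1) → ℝ) → ℝ≥0∞) (hH : Measurable H) :
    ∫⁻ x, H x = ∫⁻ x' : Fin m → ℝ, ∫⁻ t : ℝ, H (Fin.snoc x' t) := by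
  have hvp := volume_preserving_piFinSuccAbove (fun _ : Fin (m+1) => ℝ) (Fin.last m)
  have h1 : (volume : Measure (Fin (m+1) → ℝ))
      = Measure.map (MeasurableEquiv.piFinSuccAbove (fun _ : Fin (m+1) => ℝ) (Fin.last m)).symm
        volume := (hvp.symm _).map_eq.symm
  rw [h1, lintegral_map_equiv]
  rw [Measure.volume_eq_prod, lintegral_prod_symm
    (f := fun z : ℝ × (Fin m → ℝ) =>
      H ((MeasurableEquiv.piFinSuccAbove (fun _ : Fin (m+1) => ℝ) (Fin.last m)).symm z))
    ((hH.comp (MeasurableEquiv.piFinSuccAbove _ _).symm.measurable).aemeasurable)]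
  congr 1
  ext x'
  congr 1
  ext t
  congr 1
  simp [MeasurableEquiv.piFinSuccAbove_symm_apply, Fin.insertNthEquiv, Fin.insertNth_last']

end helpers

section orthant

lemma measurableSet_orthant (m : ℕ) : MeasurableSet {x : Fin m → ℝ | ∀ j, 0 ≤ x j} := by
  rw [Set.setOf_forall]
  exact MeasurableSet.iInter fun j => measurableSet_le measurable_const (measurable_pi_apply j)

lemma lintegral_orthant : ∀ (m : ℕ) (w : Fin m → ℝ), (∀ j, 0 < w j) →
    ∫⁻ x in {x : Fin m → ℝ | ∀ j, 0 ≤ x j},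
        ENNReal.ofReal (Real.exp (-(∑ j, w j * x j)))
      = ENNReal.ofReal (∏ j, 1/(w j)) := by
  intro m
  induction m with
  | zero =>
    intro w hw
    have h0 : {x : Fin 0 → ℝ | ∀ j, 0 ≤ x j} = Set.univ := by
      ext x; simp [Fin.forall_fin_zero_pi]
    rw [h0]
    simp only [Finset.univ_eq_empty, Finset.sum_empty, Finset.prod_empty, neg_zero,
      Real.exp_zero, Measure.restrict_univ, lintegral_const, ENNReal.ofReal_one, one_mul]
    rw [show (volume : Measure (Fin 0 → ℝ)) = Measure.pi (fun _ => volume) from volume_pi]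
    rw [Measure.pi_univ]
    simp
  | succ m ihm =>
    intro w hw
    have hmeasf : Measurable fun x : Fin (m+1) → ℝ =>
        ENNReal.ofReal (Real.exp (-(∑ j, w j * x j))) := by
      refine ENNReal.measurable_ofReal.comp (Real.measurable_exp.comp (Measurable.neg ?_))
      exact Finset.measurable_sum _ fun j _ => (measurable_pi_apply j).const_mul _
    set H : (Fin (m+1) → ℝ) → ℝ≥0∞ := fun x =>
      ({x : Fin (m+1) → ℝ | ∀ j, 0 ≤ x j}).indicator
        (fun x => ENNReal.ofReal (Real.exp (-(∑ j, w j * x j)))) x with hHdef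
    rw [← lintegral_indicator (measurableSet_orthant (m+1)), ← hHdef]
    rw [lintegral_split m H (hmeasf.indicator (measurableSet_orthant (m+1)))]
    have hpt : ∀ x' : Fin m → ℝ, (∫⁻ t, H (Fin.snoc x' t)) =
        ({y : Fin m → ℝ | ∀ j, 0 ≤ y j}).indicator
          (fun y => ENNReal.ofReal
            (Real.exp (-(∑ j : Fin m, w j.castSucc * y j)) * (1 / w (Fin.last m)))) x' := by
      intro x'
      have hsum : ∀ t : ℝ, (∑ j : Fin (m+1), w j * (Fin.snoc x' t : Fin (m+1) → ℝ) j)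
          = (∑ j : Fin m, w j.castSucc * x' j) + w (Fin.last m) * t := by
        intro t
        rw [Fin.sum_univ_castSucc]
        simp [Fin.snoc_castSucc, Fin.snoc_last]
      by_cases hx : ∀ j, 0 ≤ x' j
      · rw [Set.indicator_of_mem (by exact hx)]
        have hHt : ∀ t : ℝ, H (Fin.snoc x' t) = (Set.Ici (0:ℝ)).indicator
            (fun t => ENNReal.ofReal
              (Real.exp (-((∑ j : Fin m, w j.castSucc * x' j) + w (Fin.last m) * t)))) t := by
          intro t
          by_cases ht : (0:ℝ) ≤ t
          · simp only [hHdef]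
            rw [Set.indicator_of_mem (s := Set.Ici (0:ℝ)) ht]
            rw [Set.indicator_of_mem, hsum t]
            intro j
            by_cases hj : (j:ℕ) < m
            · rw [snoc_lt x' t j hj]; exact hx _
            · have hj2 : j = Fin.last m := by
                apply Fin.ext
                rw [Fin.val_last]
                have := j.isLt
                omega
              rw [hj2, Fin.snoc_last]; exact ht
          · simp only [hHdef]
            rw [Set.indicator_of_notMem (s := Set.Ici (0:ℝ)) ht]
            rw [Set.indicator_of_notMem]
            intro hmem
            exact ht (by simpa [Fin.snoc_last] using hmem (Fin.last m))
        rw [lintegral_congr hHt, lintegral_indicator measurableSet_Ici]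
        rw [lintegral_exp_neg_Ici (hw (Fin.last m))]
        rw [mul_zero, add_zero, div_eq_mul_one_div]
      · rw [Set.indicator_of_notMem (by exact hx)]
        have hHt : ∀ t : ℝ, H (Fin.snoc x' t) = 0 := by
          intro t
          simp only [hHdef]
          rw [Set.indicator_of_notMem]
          intro hmem
          refine hx fun j => ?_
          have := hmem (Fin.castSucc j)
          rwa [Fin.snoc_castSucc] at this
        simp [hHt]
    rw [lintegral_congr hpt, lintegral_indicator (measurableSet_orthant m)]
    have hnn : ∀ x : Fin m → ℝ, (0:ℝ) ≤ Real.exp (-(∑ j : Fin m, w j.castSucc * x j)) :=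
      fun x => (Real.exp_pos _).le
    have hsplit : ∀ y : Fin m → ℝ, ENNReal.ofReal
        (Real.exp (-(∑ j : Fin m, w j.castSucc * y j)) * (1 / w (Fin.last m)))
        = ENNReal.ofReal (Real.exp (-(∑ j : Fin m, w j.castSucc * y j)))
          * ENNReal.ofReal (1 / w (Fin.last m)) := fun y => ENNReal.ofReal_mul (hnn y)
    rw [lintegral_congr hsplit]
    rw [lintegral_mul_const' _ _ ENNReal.ofReal_ne_top]
    rw [ihm (fun j => w j.castSucc) (fun j => hw _)]
    rw [← ENNReal.ofReal_mul (Finset.prod_nonneg fun j _ => by have := hw j.castSucc; positivity)]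
    congr 1
    rw [Fin.prod_univ_castSucc]

end orthant

section main

def Sreg (n : ℕ) : Set (Fin n → ℝ) :=
  {x | (∀ j, 0 ≤ x j) ∧
    ∀ p m : Fin n, 1 ≤ (p : ℕ) → (p : ℕ) + 2 = (m : ℕ) →
      2 * (∑ j ∈ Finset.univ.filter (fun j : Fin n => (j : ℕ) < (p : ℕ)), x j) + x p ≤ x m}

lemma measurableSet_Sreg (n : ℕ) : MeasurableSet (Sreg n) := by
  rw [Sreg, Set.setOf_and]
  refine MeasurableSet.inter (measurableSet_orthant n) ?_
  rw [Set.setOf_forall]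
  refine MeasurableSet.iInter fun p => ?_
  rw [Set.setOf_forall]
  refine MeasurableSet.iInter fun m => ?_
  rw [Set.setOf_forall]
  refine MeasurableSet.iInter fun _ => ?_
  rw [Set.setOf_forall]
  refine MeasurableSet.iInter fun _ => ?_
  refine measurableSet_le ?_ (measurable_pi_apply m)
  exact ((Finset.measurable_sum _ fun j _ => measurable_pi_apply j).const_mul 2).add
    (measurable_pi_apply p)

def expo (k : ℕ) (A C D : ℝ) (x : Fin (k+3) → ℝ) : ℝ :=
  A * ∑ j ∈ Finset.univ.filter (fun j : Fin (k+3) => (j:ℕ) < k+1), x j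
    + C * x ⟨k+1, by omega⟩ + D * x ⟨k+2, by omega⟩

lemma measurable_expo (k : ℕ) (A C D : ℝ) : Measurable (expo k A C D) := by
  have h1 : Measurable fun x : Fin (k+3) → ℝ =>
      ∑ j ∈ Finset.univ.filter (fun j : Fin (k+3) => (j:ℕ) < k+1), x j :=
    Finset.measurable_sum _ fun j _ => measurable_pi_apply j
  have h2 : Measurable fun x : Fin (k+3) → ℝ => x ⟨k+1, by omega⟩ := measurable_pi_apply _
  have h3 : Measurable fun x : Fin (k+3) → ℝ => x ⟨k+2, by omega⟩ := measurable_pi_apply _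
  exact ((h1.const_mul A).add (h2.const_mul C)).add (h3.const_mul D)

noncomputable def Fval : ℕ → ℝ → ℝ → ℝ → ℝ
  | 0, A, C, D => 1/(A*C*D)
  | (k+1), A, C, D => (1/D) * Fval k (A+2*D) (A+D) C

lemma Fval_pos : ∀ (k : ℕ) (A C D : ℝ), 0 < A → 0 < C → 0 < D → 0 < Fval k A C D
  | 0, A, C, D, hA, hC, hD => by
    simp only [Fval]; positivity
  | (k+1), A, C, D, hA, hC, hD => by
    have h := Fval_pos k (A+2*D) (A+D) C (by linarith) (by linarith) hC
    simp only [Fval]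
    have : (0:ℝ) < 1/D := by positivity
    exact mul_pos this h

lemma snoc_mem_Sreg_iff {k : ℕ} (x : Fin (k+3) → ℝ) (t : ℝ) :
    (Fin.snoc x t : Fin (k+4) → ℝ) ∈ Sreg (k+4) ↔
      x ∈ Sreg (k+3) ∧
        2 * (∑ j ∈ Finset.univ.filter (fun j : Fin (k+3) => (j:ℕ) < k+1), x j)
          + x ⟨k+1, by omega⟩ ≤ t := by
  constructor
  · rintro ⟨h0, hc⟩
    refine ⟨⟨fun j => ?_, fun p m hp hm => ?_⟩, ?_⟩
    · have := h0 (Fin.castSucc j)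
      rwa [Fin.snoc_castSucc] at this
    · have h := hc (Fin.castSucc p) (Fin.castSucc m) (by simpa using hp) (by simpa using hm)
      rwa [Fin.snoc_castSucc, Fin.snoc_castSucc,
        sum_filter_snoc (by simpa using le_of_lt p.isLt) x t] at h
    · have h := hc ⟨k+1, by omega⟩ ⟨k+3, by omega⟩ (by simp) (by simp)
      rw [show (⟨k+3, by omega⟩ : Fin (k+4)) = Fin.last (k+3) from Fin.ext rfl,
        Fin.snoc_last] at h
      rw [snoc_lt x t ⟨k+1, by omega⟩ (by simp)] at h
      rwa [sum_filter_snoc (by omega) x t] at h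
  · rintro ⟨⟨h0, hc⟩, hb⟩
    constructor
    · intro j
      by_cases hj : (j:ℕ) < k+3
      · rw [snoc_lt x t j hj]; exact h0 _
      · have hj2 : j = Fin.last (k+3) := by
          apply Fin.ext; rw [Fin.val_last]; have := j.isLt; omega
        rw [hj2, Fin.snoc_last]
        have hs : (0:ℝ) ≤ ∑ j ∈ Finset.univ.filter (fun j : Fin (k+3) => (j:ℕ) < k+1), x j :=
          Finset.sum_nonneg fun j _ => h0 j
        have := h0 ⟨k+1, by omega⟩
        linarith
    · intro p m hp hm
      by_cases hmlt : (m:ℕ) < k+3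
      · have hplt : (p:ℕ) < k+3 := by omega
        have h := hc ⟨(p:ℕ), hplt⟩ ⟨(m:ℕ), hmlt⟩ (by simpa using hp) (by simpa using hm)
        rw [snoc_lt x t p hplt, snoc_lt x t m hmlt, sum_filter_snoc (le_of_lt hplt) x t]
        exact h
      · have hm3 : (m:ℕ) = k+3 := by have := m.isLt; omega
        have hp1 : (p:ℕ) = k+1 := by omega
        have hml : m = Fin.last (k+3) := Fin.ext (by rw [Fin.val_last]; exact hm3)
        rw [hml, Fin.snoc_last]
        have hplt : (p:ℕ) < k+3 := by omega
        rw [snoc_lt x t p hplt, sum_filter_snoc (le_of_lt hplt) x t]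
        have h1 : (⟨(p:ℕ), hplt⟩ : Fin (k+3)) = ⟨k+1, by omega⟩ := Fin.ext hp1
        rw [h1]
        have h2 : Finset.univ.filter (fun j : Fin (k+3) => (j:ℕ) < (p:ℕ))
            = Finset.univ.filter (fun j : Fin (k+3) => (j:ℕ) < k+1) := by
          ext j; simp [hp1]
        rw [h2]
        exact hb

lemma key (k : ℕ) : ∀ A C D : ℝ, 0 < A → 0 < C → 0 < D →
    ∫⁻ x in Sreg (k+3), ENNReal.ofReal (Real.exp (-(expo k A C D x)))
      = ENNReal.ofReal (Fval k A C D) := by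
  induction k with
  | zero =>
    intro A C D hA hC hD
    have hS : Sreg 3 = {x : Fin 3 → ℝ | ∀ j, 0 ≤ x j} := by
      ext x
      simp only [Sreg, Set.mem_setOf_eq, and_iff_left_iff_imp]
      intro _ p m hp hm
      exact absurd hm (by have := m.isLt; omega)
    have hE : ∀ x : Fin 3 → ℝ, expo 0 A C D x = ∑ j, (![A, C, D] : Fin 3 → ℝ) j * x j := by
      intro x
      rw [Fin.sum_univ_three, expo]
      rw [show Finset.univ.filter (fun j : Fin 3 => (j:ℕ) < 0+1) = {0} by decide]
      rw [Finset.sum_singleton]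
      rw [show (⟨0+1, by omega⟩ : Fin 3) = 1 by decide,
        show (⟨0+2, by omega⟩ : Fin 3) = 2 by decide]
      simp [Matrix.cons_val_zero, Matrix.cons_val_one, Matrix.head_cons]
    simp_rw [hS, hE]
    rw [lintegral_orthant 3 (![A, C, D]) (by
      intro j; fin_cases j <;> simpa using by assumption)]
    congr 1
    rw [Fin.prod_univ_three]
    simp only [Matrix.cons_val_zero, Matrix.cons_val_one, Matrix.head_cons]
    simp only [Fval]
    rw [div_mul_div_comm, div_mul_div_comm, one_mul, one_mul]
    norm_num [show ((2:Fin 3)) = ⟨2, by omega⟩ by decide, show (![A, C, D] : Fin 3 → ℝ) 2 = D from rfl]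
  | succ k ih =>
    intro A C D hA hC hD
    have hmeasf : Measurable fun x : Fin (k+4) → ℝ =>
        ENNReal.ofReal (Real.exp (-(expo (k+1) A C D x))) :=
      ENNReal.measurable_ofReal.comp (Real.measurable_exp.comp (measurable_expo _ A C D).neg)
    set H : (Fin (k+4) → ℝ) → ℝ≥0∞ := fun x =>
      (Sreg (k+4)).indicator (fun x => ENNReal.ofReal (Real.exp (-(expo (k+1) A C D x)))) x
      with hHdef
    rw [← lintegral_indicator (measurableSet_Sreg (k+4)), ← hHdef]
    rw [lintegral_split (k+3) H (hmeasf.indicator (measurableSet_Sreg (k+4)))]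
    have hpt : ∀ x' : Fin (k+3) → ℝ, (∫⁻ t, H (Fin.snoc x' t)) =
        (Sreg (k+3)).indicator (fun y => ENNReal.ofReal
          (Real.exp (-(expo k (A+2*D) (A+D) C y)) * (1/D))) x' := by
      intro x'
      set B : ℝ := 2 * (∑ j ∈ Finset.univ.filter (fun j : Fin (k+3) => (j:ℕ) < k+1), x' j)
          + x' ⟨k+1, by omega⟩ with hBdef
      set c : ℝ := A * (∑ j ∈ Finset.univ.filter (fun j : Fin (k+3) => (j:ℕ) < k+2), x' j)
          + C * x' ⟨k+2, by omega⟩ with hcdef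
      have hexpo : ∀ t : ℝ, expo (k+1) A C D (Fin.snoc x' t) = c + D * t := by
        intro t
        rw [expo, sum_filter_snoc (by omega) x' t,
          snoc_lt x' t ⟨k+2, by omega⟩ (by simp),
          show (⟨k+3, by omega⟩ : Fin (k+4)) = Fin.last (k+3) from Fin.ext rfl,
          Fin.snoc_last, hcdef]
      by_cases hx : x' ∈ Sreg (k+3)
      · rw [Set.indicator_of_mem hx]
        have hHt : ∀ t : ℝ, H (Fin.snoc x' t) = (Set.Ici B).indicator
            (fun t => ENNReal.ofReal (Real.exp (-(c + D * t)))) t := by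
          intro t
          by_cases ht : B ≤ t
          · simp only [hHdef]
            rw [Set.indicator_of_mem (s := Set.Ici B) ht]
            rw [Set.indicator_of_mem ((snoc_mem_Sreg_iff x' t).2 ⟨hx, ht⟩), hexpo t]
          · simp only [hHdef]
            rw [Set.indicator_of_notMem (s := Set.Ici B) ht]
            rw [Set.indicator_of_notMem]
            intro hmem
            exact ht ((snoc_mem_Sreg_iff x' t).1 hmem).2
        rw [lintegral_congr hHt, lintegral_indicator measurableSet_Ici]
        rw [lintegral_exp_neg_Ici hD c B]
        congr 1
        have harg : c + D * B = expo k (A+2*D) (A+D) C x' := by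
          rw [hcdef, hBdef, expo, sum_filter_succ (show k+1 < k+3 by omega) x']
          ring
        rw [harg, div_eq_mul_one_div]
      · rw [Set.indicator_of_notMem hx]
        have hHt : ∀ t : ℝ, H (Fin.snoc x' t) = 0 := by
          intro t
          simp only [hHdef]
          rw [Set.indicator_of_notMem]
          intro hmem
          exact hx ((snoc_mem_Sreg_iff x' t).1 hmem).1
        simp [hHt]
    rw [lintegral_congr hpt, lintegral_indicator (measurableSet_Sreg (k+3))]
    have hsplit : ∀ y : Fin (k+3) → ℝ, ENNReal.ofReal
        (Real.exp (-(expo k (A+2*D) (A+D) C y)) * (1/D))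
        = ENNReal.ofReal (Real.exp (-(expo k (A+2*D) (A+D) C y))) * ENNReal.ofReal (1/D) :=
      fun y => ENNReal.ofReal_mul (Real.exp_pos _).le
    rw [lintegral_congr hsplit]
    rw [lintegral_mul_const' _ _ ENNReal.ofReal_ne_top]
    rw [ih (A+2*D) (A+D) C (by linarith) (by linarith) hC]
    rw [← ENNReal.ofReal_mul (le_of_lt (Fval_pos k (A+2*D) (A+D) C (by linarith) (by linarith) hC))]
    congr 1
    rw [show Fval (k+1) A C D = (1/D) * Fval k (A+2*D) (A+D) C from rfl, mul_comm]

end main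

section arith

lemma sum_filter_succ' {m q q' : ℕ} (h : q < m) (hq' : q' = q + 1) (x : Fin m → ℝ) :
    ∑ j ∈ Finset.univ.filter (fun j : Fin m => (j:ℕ) < q'), x j
      = (∑ j ∈ Finset.univ.filter (fun j : Fin m => (j:ℕ) < q), x j) + x ⟨q, h⟩ := by
  subst hq'; exact sum_filter_succ h x

lemma sum_eq_expo (k : ℕ) (x : Fin (k+3) → ℝ) : (∑ j, x j) = expo k 1 1 1 x := by
  have h1 : (Finset.univ : Finset (Fin (k+3)))
      = Finset.univ.filter (fun j : Fin (k+3) => (j:ℕ) < k+3) := by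
    ext j; simpa using j.isLt
  conv_lhs => rw [h1]
  rw [sum_filter_succ' (show k+2 < k+3 by omega) rfl x]
  rw [sum_filter_succ' (show k+1 < k+3 by omega) rfl x]
  rw [expo]
  ring

lemma Fval_trib (k : ℕ) : ∀ s : ℕ,
    Fval k ((trib (s+2) : ℝ) + trib s) (trib (s+2)) (trib (s+1))
      = (∏ i ∈ Finset.Icc (s+1) (s+k), 1/(trib i : ℝ))
        * (1/((trib (k+s+2):ℝ) + (trib (k+s) : ℝ)) * (1/(trib (k+s+2):ℝ)) * (1/(trib (k+s+1):ℝ))) := by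
  induction k with
  | zero =>
    intro s
    simp only [Fval, Nat.zero_add]
    rw [Finset.Icc_eq_empty (by omega), Finset.prod_empty, one_mul]
    rw [one_div, one_div, one_div, one_div, mul_inv, mul_inv]
  | succ k ih =>
    intro s
    have h3 : (trib (s+3) : ℝ) = (trib (s+2) : ℝ) + (trib (s+1) : ℝ) + (trib s : ℝ) := by
      rw [show trib (s+3) = trib (s+2) + trib (s+1) + trib s from rfl]; push_cast; ring
    rw [show Fval (k+1) ((trib (s+2) : ℝ) + trib s) (trib (s+2)) (trib (s+1))
        = (1/(trib (s+1):ℝ)) * Fval k (((trib (s+2) : ℝ) + trib s) + 2*(trib (s+1):ℝ))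
            (((trib (s+2) : ℝ) + trib s) + (trib (s+1):ℝ)) (trib (s+2)) from rfl]
    have hA : ((trib (s+2) : ℝ) + trib s) + 2*(trib (s+1):ℝ)
        = (trib (s+1+2) : ℝ) + trib (s+1) := by
      rw [show s+1+2 = s+3 from rfl, h3]; ring
    have hC : ((trib (s+2) : ℝ) + trib s) + (trib (s+1):ℝ) = (trib (s+1+2) : ℝ) := by
      rw [show s+1+2 = s+3 from rfl, h3]; ring
    have hD : (trib (s+2) : ℝ) = (trib (s+1+1) : ℝ) := by norm_num
    rw [hA, hC, hD, ih (s+1)]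
    rw [show Finset.Icc (s+1) (s+(k+1)) = insert (s+1) (Finset.Icc (s+1+1) (s+1+k)) by
      ext i; simp [Finset.mem_Icc]; omega]
    rw [Finset.prod_insert (by simp [Finset.mem_Icc])]
    rw [show k+(s+1) = k+1+s from by omega]
    ring

end arith

/-- Let `n ≥ 3` and `Dₙ = {x ∈ ℝⁿ : x_j ≥ 0 for all j, and
2(x₁ + ⋯ + x_i) + x_{i+1} ≤ x_{i+3} for every 1 ≤ i ≤ n-3}` (written with 0-based
indices: `2·(x₀ + ⋯ + x_{p-1}) + x_p ≤ x_m` whenever `p + 2 = m` and `p ≥ 1`).  Then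
`∫_{Dₙ} exp(-(x₁+⋯+xₙ)) dx = (1/(Tₙ - T_{n-2})) · ∏_{i=1}^{n-1} 1/Tᵢ`. -/
theorem integral_no_quadrilateral_region_eq (n : ℕ) (hn : 3 ≤ n) :
    (∫ x in {x : Fin n → ℝ | (∀ j, 0 ≤ x j) ∧
        ∀ p m : Fin n, 1 ≤ (p : ℕ) → (p : ℕ) + 2 = (m : ℕ) →
          2 * (∑ j ∈ Finset.univ.filter (fun j : Fin n => (j : ℕ) < (p : ℕ)), x j) + x p
            ≤ x m},
      Real.exp (-(∑ j, x j))) =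
    (1 / ((trib n - trib (n - 2) : ℕ) : ℝ)) *
      ∏ i ∈ Finset.Icc 1 (n - 1), (1 / (trib i : ℝ)) := by
  obtain ⟨k, rfl⟩ : ∃ k, n = k + 3 := ⟨n - 3, by omega⟩
  have hset : {x : Fin (k+3) → ℝ | (∀ j, 0 ≤ x j) ∧
      ∀ p m : Fin (k+3), 1 ≤ (p : ℕ) → (p : ℕ) + 2 = (m : ℕ) →
        2 * (∑ j ∈ Finset.univ.filter (fun j : Fin (k+3) => (j : ℕ) < (p : ℕ)), x j) + x p
          ≤ x m} = Sreg (k+3) := rfl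
  rw [hset]
  have hcont : Continuous fun x : Fin (k+3) → ℝ => Real.exp (-(∑ j, x j)) := by
    exact Real.continuous_exp.comp (continuous_finset_sum _ fun j _ => continuous_apply j).neg
  rw [integral_eq_lintegral_of_nonneg_ae
    (Filter.Eventually.of_forall fun x => (Real.exp_pos _).le)
    hcont.aestronglyMeasurable]
  have hrw : ∀ x : Fin (k+3) → ℝ, ENNReal.ofReal (Real.exp (-(∑ j, x j)))
      = ENNReal.ofReal (Real.exp (-(expo k 1 1 1 x))) := by
    intro x; rw [sum_eq_expo k x]
  rw [lintegral_congr hrw]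
  rw [key k 1 1 1 one_pos one_pos one_pos]
  rw [ENNReal.toReal_ofReal (le_of_lt (Fval_pos k 1 1 1 one_pos one_pos one_pos))]
  have h110 : Fval k 1 1 1 = Fval k ((trib (0+2) : ℝ) + trib 0) (trib (0+2)) (trib (0+1)) := by
    norm_num [trib]
  rw [h110, Fval_trib k 0]
  have hsub : trib (k+3) - trib (k+3-2) = trib (k+2) + trib k := by
    rw [show k+3-2 = k+1 from rfl, show trib (k+3) = trib (k+2) + trib (k+1) + trib k from rfl]
    omega
  rw [hsub]
  push_cast
  rw [show Finset.Icc 1 (k+2) = insert (k+2) (Finset.Icc 1 (k+1)) by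
    ext i; simp [Finset.mem_Icc]; omega]
  rw [Finset.prod_insert (by simp [Finset.mem_Icc])]
  rw [show Finset.Icc 1 (k+1) = insert (k+1) (Finset.Icc 1 k) by
    ext i; simp [Finset.mem_Icc]; omega]
  rw [Finset.prod_insert (by simp [Finset.mem_Icc])]
  rw [show (0:ℕ)+k = k from by omega, show k+0+2 = k+2 from by omega,
    show k+0+1 = k+1 from by omega, show k+0 = k from rfl]
  ring
end

section
/- Define sequences (R_k), (S_k), (T_k) for k ≥ 2 by R_2 = 3, S_2 = 2, T_2 = 1, together with T_1 = 1, and the coupled recurrences R_k = R_{k−1} + 2 T_{k−1}, S_k = R_{k−1} + T_{k−1}, T_k = S_{k−1} for k ≥ 3. Fix an integer i ≥ 1 and nonnegative real numbers a, b, c. Let E ⊆ ℝ^i be the set of points t = (t_1,…,t_i) satisfying: t_1 ≥ 2a + b; t_2 ≥ 2(a + b) + c (when i ≥ 2); t_3 ≥ 2(a + b + c) + t_1 (when i ≥ 3); and t_j ≥ 2(a + b + c + t_1 + ⋯ + t_{j−3}) + t_{j−2} for every 4 ≤ j ≤ i. Then the Lebesgue integral ∫_E exp(−(t_1 + ⋯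 + t_i)) dt equals (∏_{k=1}^{i} 1/T_k) · exp(−((R_{i+1} − 1)·a + (S_{i+1} − 1)·b + (T_{i+1} − 1)·c)). -/
open MeasureTheory Set

noncomputable section




def Eset (i : ℕ) (a b c : ℝ) : Set (Fin i → ℝ) :=
  {t : Fin i → ℝ | ∀ m : Fin i,
        ((m : ℕ) = 0 → 2 * a + b ≤ t m) ∧
        ((m : ℕ) = 1 → 2 * (a + b) + c ≤ t m) ∧
        (∀ p : Fin i, (p : ℕ) + 2 = (m : ℕ) →
          2 * (a + b + c +
              ∑ j ∈ Finset.univ.filter (fun j : Fin i => (j : ℕ) + 2 < (m : ℕ)), t j) +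
            t p ≤ t m)}

lemma measurableSet_Eset (i : ℕ) (a b c : ℝ) : MeasurableSet (Eset i a b c) := by
  have : Eset i a b c = ⋂ m : Fin i,
      ({t : Fin i → ℝ | (m : ℕ) = 0 → 2 * a + b ≤ t m} ∩
        ({t : Fin i → ℝ | (m : ℕ) = 1 → 2 * (a + b) + c ≤ t m} ∩
          ⋂ p : Fin i, {t : Fin i → ℝ | (p : ℕ) + 2 = (m : ℕ) →
            2 * (a + b + c +
              ∑ j ∈ Finset.univ.filter (fun j : Fin i => (j : ℕ) + 2 < (m : ℕ)), t j) +
              t p ≤ t m})) := by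
    ext t
    simp [Eset, Set.mem_iInter, forall_and]
  rw [this]
  refine MeasurableSet.iInter fun m => (MeasurableSet.inter ?_ (MeasurableSet.inter ?_
    (MeasurableSet.iInter fun p => ?_)))
  · by_cases h : (m : ℕ) = 0
    · simp only [h, forall_true_left]
      exact measurableSet_le measurable_const (measurable_pi_apply m)
    · simp [h]
  · by_cases h : (m : ℕ) = 1
    · simp only [h, forall_true_left]
      exact measurableSet_le measurable_const (measurable_pi_apply m)
    · simp [h]
  · by_cases h : (p : ℕ) + 2 = (m : ℕ)
    · simp only [h, forall_true_left]
      refine measurableSet_le ?_ (measurable_pi_apply m)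
      exact ((measurable_const.add (Finset.measurable_sum _ fun j _ =>
        measurable_pi_apply j)).const_mul 2).add (measurable_pi_apply p)
    · simp [h]

lemma sum_filter_cons (n M : ℕ) (x : ℝ) (s : Fin n → ℝ) :
    ∑ j ∈ Finset.univ.filter (fun j : Fin (n+1) => (j : ℕ) + 2 < M + 1), Fin.cons x s j
      = (if 2 < M + 1 then x else 0)
        + ∑ j ∈ Finset.univ.filter (fun j : Fin n => (j : ℕ) + 2 < M), s j := by
  rw [Finset.sum_filter, Finset.sum_filter, Fin.sum_univ_succ]
  simp only [Fin.cons_zero, Fin.cons_succ, Fin.val_succ, Fin.val_zero]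
  congr 1
  exact Finset.sum_congr rfl fun j _ => if_congr (by omega) rfl rfl

lemma mem_Eset_cons (n : ℕ) (a b c x : ℝ) (s : Fin n → ℝ) :
    Fin.cons x s ∈ Eset (n + 1) a b c ↔ 2 * a + b ≤ x ∧ s ∈ Eset n (a + b) c x := by
  constructor
  · intro h
    refine ⟨by simpa using (h 0).1 rfl, fun m => ⟨fun hm => ?_, fun hm => ?_, fun p hp => ?_⟩⟩
    · have := (h m.succ).2.1 (by simp [Fin.val_succ, hm])
      simpa using this
    · have := (h m.succ).2.2 0 (by simp [Fin.val_succ, hm])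
      rw [Fin.cons_zero, Fin.cons_succ, Fin.val_succ, sum_filter_cons] at this
      rw [if_neg (by omega)] at this
      have hempty : (Finset.univ.filter (fun j : Fin n => (j : ℕ) + 2 < (m:ℕ))) = ∅ := by
        refine Finset.filter_eq_empty_iff.2 fun j _ => by omega
      rw [hempty, Finset.sum_empty] at this
      linarith
    · have := (h m.succ).2.2 p.succ (by simp [Fin.val_succ]; omega)
      rw [Fin.cons_succ, Fin.cons_succ, Fin.val_succ, sum_filter_cons] at this
      rw [if_pos (by omega)] at this
      linarith
  · rintro ⟨hx, hs⟩ m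
    induction m using Fin.cases with
    | zero =>
      refine ⟨fun _ => by simpa using hx, fun h => by simp at h, fun p hp => by simp at hp⟩
    | succ m =>
      refine ⟨fun h => by simp [Fin.val_succ] at h, fun h => ?_, fun p hp => ?_⟩
      · have hm : (m : ℕ) = 0 := by simpa [Fin.val_succ] using h
        have := (hs m).1 hm
        simpa using this
      · rw [Fin.val_succ] at hp
        induction p using Fin.cases with
        | zero =>
          have hm : (m : ℕ) = 1 := by simpa using hp.symm
          have := (hs m).2.1 hm
          rw [Fin.cons_zero, Fin.cons_succ, Fin.val_succ, sum_filter_cons, if_neg (by omega)]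
          have hempty : (Finset.univ.filter (fun j : Fin n => (j : ℕ) + 2 < (m:ℕ))) = ∅ := by
            refine Finset.filter_eq_empty_iff.2 fun j _ => by omega
          rw [hempty, Finset.sum_empty]
          linarith
        | succ p =>
          have hp' : (p : ℕ) + 2 = (m : ℕ) := by simp [Fin.val_succ] at hp; omega
          have := (hs m).2.2 p hp'
          rw [Fin.cons_succ, Fin.cons_succ, Fin.val_succ, sum_filter_cons, if_pos (by omega)]
          linarith

lemma lint_exp (k A : ℝ) (hk : 0 < k) :
    ∫⁻ x in Set.Ici A, ENNReal.ofReal (Real.exp (-(k * x)))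
      = ENNReal.ofReal (Real.exp (-(k * A)) / k) := by
  rw [← MeasureTheory.ofReal_integral_eq_lintegral_ofReal]
  · congr 1
    rw [MeasureTheory.integral_Ici_eq_integral_Ioi]
    have h := integral_comp_mul_left_Ioi (fun y => Real.exp (-y)) A hk
    simp only [smul_eq_mul] at h
    rw [h, integral_exp_neg_Ioi]
    rw [div_eq_inv_mul]
  · show IntegrableOn (fun x => Real.exp (-(k * x))) (Ici A) volume
    rw [integrableOn_Ici_iff_integrableOn_Ioi]
    simpa only [neg_mul] using exp_neg_integrableOn_Ioi A hk
  · exact Filter.Eventually.of_forall fun x => (Real.exp_pos _).le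

lemma T_ge_one (S T R : ℕ → ℕ) (hS2 : S 2 = 2) (hT2 : T 2 = 1) (hT1 : T 1 = 1)
    (hS : ∀ k, 3 ≤ k → S k = R (k - 1) + T (k - 1))
    (hT : ∀ k, 3 ≤ k → T k = S (k - 1)) :
    ∀ k, 1 ≤ k → 1 ≤ T k := by
  intro k
  induction k using Nat.strong_induction_on with
  | _ k IH =>
    intro hk
    match k, hk with
    | 1, _ => omega
    | 2, _ => omega
    | (m+3), _ => ?_
    rw [hT (m+3) (by omega)]
    show 1 ≤ S (m + 2)
    rcases Nat.eq_or_lt_of_le (show 2 ≤ m + 2 by omega) with h | h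
    · rw [← h, hS2]; omega
    · rw [hS (m+2) (by omega)]
      show 1 ≤ R (m + 1) + T (m + 1)
      have := IH (m+1) (by omega) (by omega)
      omega

lemma key_lintegral (R S T : ℕ → ℕ)
    (hR2 : R 2 = 3) (hS2 : S 2 = 2) (hT2 : T 2 = 1) (hT1 : T 1 = 1)
    (hR : ∀ k, 3 ≤ k → R k = R (k - 1) + 2 * T (k - 1))
    (hS : ∀ k, 3 ≤ k → S k = R (k - 1) + T (k - 1))
    (hT : ∀ k, 3 ≤ k → T k = S (k - 1))
    (i : ℕ) (hi : 1 ≤ i) :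
    ∀ a b c : ℝ, 0 ≤ a → 0 ≤ b → 0 ≤ c →
    (∫⁻ t in Eset i a b c, ENNReal.ofReal (Real.exp (-(∑ j, t j))))
      = ENNReal.ofReal ((∏ k ∈ Finset.Icc 1 i, (1 / (T k : ℝ))) *
          Real.exp (-(((R (i + 1) : ℝ) - 1) * a + ((S (i + 1) : ℝ) - 1) * b +
            ((T (i + 1) : ℝ) - 1) * c))) := by
  induction i, hi using Nat.le_induction with
  | base =>
    intro a b c ha hb hc
    have hE1 : Eset 1 a b c = {t : Fin 1 → ℝ | 2 * a + b ≤ t 0} := by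
      ext t
      constructor
      · intro h; exact (h 0).1 rfl
      · intro h m
        have hm0 : m = 0 := Subsingleton.elim m 0
        subst hm0
        exact ⟨fun _ => h, fun hm => by simp at hm, fun p hp => by
          have := p.isLt; omega⟩
    have mp : MeasurePreserving (MeasurableEquiv.funUnique (Fin 1) ℝ).symm volume volume :=
      (volume_preserving_funUnique (Fin 1) ℝ).symm
    have measf : Measurable fun t : Fin 1 → ℝ => ENNReal.ofReal (Real.exp (-(∑ j, t j))) := by
      fun_prop
    have hg : Measurable ((Eset 1 a b c).indicator
        fun t => ENNReal.ofReal (Real.exp (-(∑ j, t j)))) :=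
      measf.indicator (measurableSet_Eset _ _ _ _)
    rw [← lintegral_indicator (measurableSet_Eset 1 a b c), ← mp.lintegral_comp hg]
    have hpt : ∀ x : ℝ, (Eset 1 a b c).indicator
        (fun t => ENNReal.ofReal (Real.exp (-(∑ j, t j))))
        ((MeasurableEquiv.funUnique (Fin 1) ℝ).symm x)
        = (Set.Ici (2 * a + b)).indicator (fun x => ENNReal.ofReal (Real.exp (-(1 * x)))) x := by
      intro x
      have hx0 : (MeasurableEquiv.funUnique (Fin 1) ℝ).symm x = fun _ : Fin 1 => x := rfl
      rw [hx0]
      by_cases hx : 2 * a + b ≤ x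
      · rw [Set.indicator_of_mem (by rw [hE1]; exact hx),
          Set.indicator_of_mem (Set.mem_Ici.mpr hx)]
        simp [Fin.sum_univ_one]
      · rw [Set.indicator_of_notMem (by rw [hE1]; exact hx),
          Set.indicator_of_notMem (by simpa using hx)]
    rw [lintegral_congr hpt, lintegral_indicator measurableSet_Ici, lint_exp 1 _ one_pos]
    rw [hR2, hS2, hT2]
    have : Finset.Icc 1 1 = {1} := Finset.Icc_self 1
    rw [this, Finset.prod_singleton, hT1]
    norm_num
  | succ n hn IH =>
    intro a b c ha hb hc
    have hk1 : (1 : ℝ) ≤ (T (n + 1) : ℝ) := by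
      exact_mod_cast T_ge_one S T R hS2 hT2 hT1 hS hT (n + 1) (by omega)
    have hk0 : (0 : ℝ) < (T (n + 1) : ℝ) := by linarith
    have hCn : (0 : ℝ) ≤ ∏ k ∈ Finset.Icc 1 n, (1 / (T k : ℝ)) :=
      Finset.prod_nonneg fun k _ => by positivity
    have hK : (0 : ℝ) ≤ (∏ k ∈ Finset.Icc 1 n, (1 / (T k : ℝ))) *
        Real.exp (-(((R (n + 1) : ℝ) - 1) * (a + b) + ((S (n + 1) : ℝ) - 1) * c)) :=
      mul_nonneg hCn (Real.exp_pos _).le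
    have measf : Measurable fun t : Fin (n + 1) → ℝ =>
        ENNReal.ofReal (Real.exp (-(∑ j, t j))) := by fun_prop
    have hg : Measurable ((Eset (n + 1) a b c).indicator
        fun t => ENNReal.ofReal (Real.exp (-(∑ j, t j)))) :=
      measf.indicator (measurableSet_Eset _ _ _ _)
    set e := MeasurableEquiv.piFinSuccAbove (fun _ : Fin (n + 1) => ℝ) 0 with he
    have mp : MeasurePreserving e.symm volume volume :=
      (volume_preserving_piFinSuccAbove (fun _ : Fin (n + 1) => ℝ) 0).symm
    have hsymm : ∀ (x : ℝ) (s : Fin n → ℝ), e.symm (x, s) = Fin.cons x s := by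
      intro x s
      have h1 : e.symm (x, s) = Fin.insertNth 0 x s := rfl
      rw [h1, Fin.insertNth_zero']
    have hgz : Measurable fun z : ℝ × (Fin n → ℝ) => (Eset (n + 1) a b c).indicator
        (fun t => ENNReal.ofReal (Real.exp (-(∑ j, t j)))) (e.symm z) :=
      hg.comp e.symm.measurable
    rw [← lintegral_indicator (measurableSet_Eset (n + 1) a b c), ← mp.lintegral_comp hg,
      Measure.volume_eq_prod, lintegral_prod _ hgz.aemeasurable]
    have inner : ∀ x : ℝ, (∫⁻ s : Fin n → ℝ, (Eset (n + 1) a b c).indicator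
        (fun t => ENNReal.ofReal (Real.exp (-(∑ j, t j)))) (e.symm (x, s)))
        = (Set.Ici (2 * a + b)).indicator (fun x => ENNReal.ofReal
            (((∏ k ∈ Finset.Icc 1 n, (1 / (T k : ℝ))) *
              Real.exp (-(((R (n + 1) : ℝ) - 1) * (a + b) + ((S (n + 1) : ℝ) - 1) * c))) *
            Real.exp (-((T (n + 1) : ℝ) * x)))) x := by
      intro x
      by_cases hx : 2 * a + b ≤ x
      · rw [Set.indicator_of_mem (Set.mem_Ici.mpr hx)]
        have h1 : ∀ s : Fin n → ℝ, (Eset (n + 1) a b c).indicator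
            (fun t => ENNReal.ofReal (Real.exp (-(∑ j, t j)))) (e.symm (x, s))
            = (Eset n (a + b) c x).indicator (fun s => ENNReal.ofReal (Real.exp (-x)) *
                ENNReal.ofReal (Real.exp (-(∑ j, s j)))) s := by
          intro s
          rw [hsymm]
          by_cases hs : s ∈ Eset n (a + b) c x
          · rw [Set.indicator_of_mem ((mem_Eset_cons n a b c x s).mpr ⟨hx, hs⟩),
              Set.indicator_of_mem hs, Fin.sum_cons, neg_add, Real.exp_add,
              ENNReal.ofReal_mul (Real.exp_pos _).le]
          · rw [Set.indicator_of_notMem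
              (fun hmem => hs ((mem_Eset_cons n a b c x s).mp hmem).2),
              Set.indicator_of_notMem hs]
        rw [lintegral_congr h1, lintegral_indicator (measurableSet_Eset _ _ _ _),
          lintegral_const_mul' _ _ ENNReal.ofReal_ne_top,
          IH (a + b) c x (by linarith) hc (by linarith),
          ← ENNReal.ofReal_mul (Real.exp_pos _).le]
        congr 1
        have harg : -x + (-(((R (n + 1) : ℝ) - 1) * (a + b) + ((S (n + 1) : ℝ) - 1) * c +
            ((T (n + 1) : ℝ) - 1) * x))
            = -(((R (n + 1) : ℝ) - 1) * (a + b) + ((S (n + 1) : ℝ) - 1) * c) +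
              -((T (n + 1) : ℝ) * x) := by ring
        calc Real.exp (-x) * ((∏ k ∈ Finset.Icc 1 n, (1 / (T k : ℝ))) *
              Real.exp (-(((R (n + 1) : ℝ) - 1) * (a + b) + ((S (n + 1) : ℝ) - 1) * c +
                ((T (n + 1) : ℝ) - 1) * x)))
            = (∏ k ∈ Finset.Icc 1 n, (1 / (T k : ℝ))) * (Real.exp (-x) *
              Real.exp (-(((R (n + 1) : ℝ) - 1) * (a + b) + ((S (n + 1) : ℝ) - 1) * c +
                ((T (n + 1) : ℝ) - 1) * x))) := by ring
          _ = (∏ k ∈ Finset.Icc 1 n, (1 / (T k : ℝ))) *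
              (Real.exp (-(((R (n + 1) : ℝ) - 1) * (a + b) + ((S (n + 1) : ℝ) - 1) * c)) *
                Real.exp (-((T (n + 1) : ℝ) * x))) := by
              rw [← Real.exp_add, harg, Real.exp_add]
          _ = _ := by ring
      · rw [Set.indicator_of_notMem (by simpa using hx)]
        have h0 : ∀ s : Fin n → ℝ, (Eset (n + 1) a b c).indicator
            (fun t => ENNReal.ofReal (Real.exp (-(∑ j, t j)))) (e.symm (x, s)) = 0 := by
          intro s
          rw [hsymm]
          exact Set.indicator_of_notMem
            (fun hmem => hx ((mem_Eset_cons n a b c x s).mp hmem).1) _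
        rw [lintegral_congr h0, lintegral_zero]
    rw [lintegral_congr inner, lintegral_indicator measurableSet_Ici]
    simp only [ENNReal.ofReal_mul hK]
    rw [lintegral_const_mul' _ _ ENNReal.ofReal_ne_top, lint_exp _ _ hk0,
      ← ENNReal.ofReal_mul hK]
    congr 1
    have hR' : R (n + 2) = R (n + 1) + 2 * T (n + 1) := hR (n + 2) (by omega)
    have hS' : S (n + 2) = R (n + 1) + T (n + 1) := hS (n + 2) (by omega)
    have hT' : T (n + 2) = S (n + 1) := hT (n + 2) (by omega)
    rw [Finset.prod_Icc_succ_top (by omega : 1 ≤ n + 1), hR', hS', hT']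
    push_cast
    have hexp : Real.exp (-(((R (n + 1) : ℝ) - 1) * (a + b) + ((S (n + 1) : ℝ) - 1) * c)) *
        Real.exp (-((T (n + 1) : ℝ) * (2 * a + b)))
        = Real.exp (-((((R (n + 1) : ℝ) + 2 * (T (n + 1) : ℝ)) - 1) * a +
            (((R (n + 1) : ℝ) + (T (n + 1) : ℝ)) - 1) * b + (((S (n + 1) : ℝ)) - 1) * c)) := by
      rw [← Real.exp_add]
      congr 1
      ring
    calc (∏ k ∈ Finset.Icc 1 n, (1 / (T k : ℝ))) *
          Real.exp (-(((R (n + 1) : ℝ) - 1) * (a + b) + ((S (n + 1) : ℝ) - 1) * c)) *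
          (Real.exp (-((T (n + 1) : ℝ) * (2 * a + b))) / (T (n + 1) : ℝ))
        = (∏ k ∈ Finset.Icc 1 n, (1 / (T k : ℝ))) * (1 / (T (n + 1) : ℝ)) *
          (Real.exp (-(((R (n + 1) : ℝ) - 1) * (a + b) + ((S (n + 1) : ℝ) - 1) * c)) *
            Real.exp (-((T (n + 1) : ℝ) * (2 * a + b)))) := by ring
      _ = _ := by rw [hexp]


/-- Closed form of the iterated integral in the quadrilateral case.  Let `(R k)`, `(S k)`,
`(T k)` satisfy `R 2 = 3`, `S 2 = 2`, `T 2 = 1`, `T 1 = 1`, and the coupled recurrences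
`R k = R (k-1) + 2 T (k-1)`, `S k = R (k-1) + T (k-1)`, `T k = S (k-1)` for `k ≥ 3`.
For `i ≥ 1` and `a, b, c ≥ 0`, with `E ⊆ ℝ^i` the set of `t` satisfying
`t₁ ≥ 2a + b`, `t₂ ≥ 2(a+b) + c`, `t₃ ≥ 2(a+b+c) + t₁`, and
`t_j ≥ 2(a+b+c+t₁+⋯+t_{j-3}) + t_{j-2}` for `4 ≤ j ≤ i` (written with 0-based indices
`m = j - 1`), we have
`∫_E exp(-(t₁+⋯+t_i)) dt
  = (∏_{k=1}^i 1/T_k) · exp(-((R_{i+1}-1)a + (S_{i+1}-1)b + (T_{i+1}-1)c))`. -/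
theorem iterated_integral_no_quadrilateral (R S T : ℕ → ℕ)
    (hR2 : R 2 = 3) (hS2 : S 2 = 2) (hT2 : T 2 = 1) (hT1 : T 1 = 1)
    (hR : ∀ k, 3 ≤ k → R k = R (k - 1) + 2 * T (k - 1))
    (hS : ∀ k, 3 ≤ k → S k = R (k - 1) + T (k - 1))
    (hT : ∀ k, 3 ≤ k → T k = S (k - 1))
    (i : ℕ) (hi : 1 ≤ i) (a b c : ℝ) (ha : 0 ≤ a) (hb : 0 ≤ b) (hc : 0 ≤ c) :
    (∫ t in {t : Fin i → ℝ | ∀ m : Fin i,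
        ((m : ℕ) = 0 → 2 * a + b ≤ t m) ∧
        ((m : ℕ) = 1 → 2 * (a + b) + c ≤ t m) ∧
        (∀ p : Fin i, (p : ℕ) + 2 = (m : ℕ) →
          2 * (a + b + c +
              ∑ j ∈ Finset.univ.filter (fun j : Fin i => (j : ℕ) + 2 < (m : ℕ)), t j) +
            t p ≤ t m)},
      Real.exp (-(∑ j, t j))) =
    (∏ k ∈ Finset.Icc 1 i, (1 / (T k : ℝ))) *
      Real.exp (-(((R (i + 1) : ℝ) - 1) * a + ((S (i + 1) : ℝ) - 1) * b +
        ((T (i + 1) : ℝ) - 1) * c)) := by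
  have hE : {t : Fin i → ℝ | ∀ m : Fin i,
        ((m : ℕ) = 0 → 2 * a + b ≤ t m) ∧
        ((m : ℕ) = 1 → 2 * (a + b) + c ≤ t m) ∧
        (∀ p : Fin i, (p : ℕ) + 2 = (m : ℕ) →
          2 * (a + b + c +
              ∑ j ∈ Finset.univ.filter (fun j : Fin i => (j : ℕ) + 2 < (m : ℕ)), t j) +
            t p ≤ t m)} = Eset i a b c := rfl
  rw [hE]
  rw [MeasureTheory.integral_eq_lintegral_of_nonneg_ae
    (Filter.Eventually.of_forall fun t => (Real.exp_pos _).le)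
    (Continuous.aestronglyMeasurable (by fun_prop))]
  rw [key_lintegral R S T hR2 hS2 hT2 hT1 hR hS hT i hi a b c ha hb hc]
  exact ENNReal.toReal_ofReal (mul_nonneg
    (Finset.prod_nonneg fun k _ => by positivity) (Real.exp_pos _).le)

end
end

section
/- Let n ≥ 1 and let μ be the Lebesgue (product) measure on the cube [0,1]^n, which is the joint law of n independent Uniform[0,1] stick lengths. Then the measure of the set of points x ∈ [0,1]^n such that the n coordinates cannot form an n-gon — i.e., there exists an index i with x_i ≥ ∑_{j ≠ i} x_j — equals 1/(n−1)!. Equivalently, the probability that the n sticks can form an n-gon is 1 − 1/(n−1)!. -/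
open MeasureTheory

lemma simplex_meas (k : ℕ) (t : ℝ) :
    MeasurableSet {y : Fin k → ℝ | (∀ j, 0 ≤ y j) ∧ ∑ j, y j ≤ t} := by
  have : {y : Fin k → ℝ | (∀ j, 0 ≤ y j) ∧ ∑ j, y j ≤ t} =
      (⋂ j, {y : Fin k → ℝ | 0 ≤ y j}) ∩ {y : Fin k → ℝ | ∑ j, y j ≤ t} := by
    ext y; simp [Set.mem_iInter]
  rw [this]
  exact (MeasurableSet.iInter fun j =>
      measurableSet_le measurable_const (measurable_pi_apply j)).inter
    (measurableSet_le (Finset.measurable_sum _ fun j _ => measurable_pi_apply j)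
      measurable_const)

lemma simplex_vol (k : ℕ) : ∀ t : ℝ, 0 ≤ t →
    volume {y : Fin k → ℝ | (∀ j, 0 ≤ y j) ∧ ∑ j, y j ≤ t} =
      ENNReal.ofReal (t ^ k / k.factorial) := by
  induction k with
  | zero =>
    intro t ht
    have : {y : Fin 0 → ℝ | (∀ j, 0 ≤ y j) ∧ ∑ j, y j ≤ t} = Set.univ := by
      ext y; simp [ht, Fin.elim0]
    rw [this, show (volume : Measure (Fin 0 → ℝ)) = Measure.pi fun _ => volume from volume_pi,
      Measure.pi_univ]
    simp
  | succ k ih =>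
    intro t ht
    have hmp := measurePreserving_piFinSuccAbove (fun _ : Fin (k+1) => (volume : Measure ℝ)) 0
    set e := MeasurableEquiv.piFinSuccAbove (fun _ : Fin (k+1) => ℝ) 0 with he
    set T : Set (ℝ × (Fin k → ℝ)) :=
      {p | 0 ≤ p.1 ∧ (∀ j, 0 ≤ p.2 j) ∧ p.1 + ∑ j, p.2 j ≤ t} with hT
    have hTm : MeasurableSet T := by
      have : T = {p : ℝ × (Fin k → ℝ) | 0 ≤ p.1} ∩
          ((⋂ j, {p : ℝ × (Fin k → ℝ) | 0 ≤ p.2 j}) ∩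
            {p : ℝ × (Fin k → ℝ) | p.1 + ∑ j, p.2 j ≤ t}) := by
        ext p; simp [hT, Set.mem_iInter, and_assoc]
      rw [this]
      exact (measurableSet_le measurable_const measurable_fst).inter
        (((MeasurableSet.iInter fun j => measurableSet_le measurable_const
            ((measurable_pi_apply j).comp measurable_snd)).inter
          (measurableSet_le (measurable_fst.add
            (Finset.measurable_sum _ fun j _ => (measurable_pi_apply j).comp measurable_snd))
            measurable_const)))
    have hpre : {y : Fin (k+1) → ℝ | (∀ j, 0 ≤ y j) ∧ ∑ j, y j ≤ t} = e ⁻¹' T := by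
      ext y
      simp only [Set.mem_preimage, hT, Set.mem_setOf_eq, he,
        MeasurableEquiv.piFinSuccAbove, MeasurableEquiv.coe_mk, Equiv.symm_symm]
      rw [Fin.forall_fin_succ, Fin.sum_univ_succ]
      constructor
      · rintro ⟨⟨h0, hs⟩, hsum⟩
        exact ⟨h0, fun j => hs j, hsum⟩
      · rintro ⟨h0, hs, hsum⟩
        exact ⟨⟨h0, fun j => hs j⟩, hsum⟩
    have key : (Measure.pi fun _ : Fin (k+1) => (volume : Measure ℝ)) (⇑e ⁻¹' T) =
        ((volume : Measure ℝ).prod (Measure.pi fun _ : Fin k => (volume : Measure ℝ))) T :=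
      hmp.measure_preimage hTm.nullMeasurableSet
    rw [hpre, show (volume : Measure (Fin (k+1) → ℝ)) = Measure.pi fun _ => volume from volume_pi,
      key, show (Measure.pi fun _ : Fin k => (volume : Measure ℝ)) = volume from volume_pi.symm,
      Measure.prod_apply hTm]
    have hslice : ∀ a : ℝ, (volume : Measure (Fin k → ℝ)) (Prod.mk a ⁻¹' T) =
        Set.indicator (Set.Icc 0 t) (fun a => ENNReal.ofReal ((t - a) ^ k / k.factorial)) a := by
      intro a
      by_cases ha : a ∈ Set.Icc 0 t
      · rw [Set.indicator_of_mem ha]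
        have : Prod.mk a ⁻¹' T = {y : Fin k → ℝ | (∀ j, 0 ≤ y j) ∧ ∑ j, y j ≤ t - a} := by
          ext y
          simp only [Set.mem_preimage, hT, Set.mem_setOf_eq]
          constructor
          · rintro ⟨_, hs, hsum⟩; exact ⟨hs, by linarith⟩
          · rintro ⟨hs, hsum⟩; exact ⟨ha.1, hs, by linarith⟩
        rw [this, ih _ (by linarith [ha.2])]
      · rw [Set.indicator_of_notMem ha]
        simp only [Set.mem_Icc, not_and_or, not_le] at ha
        have : Prod.mk a ⁻¹' T = (∅ : Set (Fin k → ℝ)) := by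
          ext y
          simp only [Set.mem_preimage, hT, Set.mem_setOf_eq, Set.mem_empty_iff_false,
            iff_false, not_and]
          intro h0 hs
          rcases ha with ha | ha
          · linarith
          · have : 0 ≤ ∑ j, y j := Finset.sum_nonneg fun j _ => hs j
            linarith
        rw [this]; simp
    simp_rw [hslice]
    rw [lintegral_indicator measurableSet_Icc]
    rw [← ofReal_integral_eq_lintegral_ofReal]
    · congr 1
      rw [MeasureTheory.integral_Icc_eq_integral_Ioc, ← intervalIntegral.integral_of_le ht]
      rw [intervalIntegral.integral_comp_sub_left (fun x : ℝ => x ^ k / (k.factorial : ℝ)) t]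
      simp only [sub_self, sub_zero]
      rw [intervalIntegral.integral_div, integral_pow]
      rw [pow_succ, Nat.factorial_succ]
      push_cast
      field_simp
      simp
    · exact (Continuous.integrableOn_Icc (by continuity))
    · filter_upwards [ae_restrict_mem measurableSet_Icc] with a ha
      exact div_nonneg (pow_nonneg (by linarith [ha.2]) _) (by positivity)

lemma erase_sum_eq {n : ℕ} (i : Fin (n+1)) (x : Fin (n+1) → ℝ) :
    ∑ j ∈ Finset.univ.erase i, x j = ∑ j : Fin n, x (i.succAbove j) := by
  have h1 : x i + ∑ j ∈ Finset.univ.erase i, x j = ∑ j, x j :=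
    Finset.add_sum_erase _ _ (Finset.mem_univ i)
  have h2 : ∑ j, x j = x i + ∑ j : Fin n, x (i.succAbove j) := Fin.sum_univ_succAbove x i
  linarith

lemma Ai_meas {n : ℕ} (i : Fin n) :
    MeasurableSet {x : Fin n → ℝ | (∀ j, x j ∈ Set.Icc (0:ℝ) 1) ∧
      (∑ j ∈ Finset.univ.erase i, x j) ≤ x i} := by
  have : {x : Fin n → ℝ | (∀ j, x j ∈ Set.Icc (0:ℝ) 1) ∧
      (∑ j ∈ Finset.univ.erase i, x j) ≤ x i} =
      (⋂ j, {x : Fin n → ℝ | x j ∈ Set.Icc (0:ℝ) 1}) ∩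
        {x : Fin n → ℝ | (∑ j ∈ Finset.univ.erase i, x j) ≤ x i} := by
    ext x; simp [Set.mem_iInter]
  rw [this]
  exact (MeasurableSet.iInter fun j =>
      (measurable_pi_apply j) measurableSet_Icc).inter
    (measurableSet_le (Finset.measurable_sum _ fun j _ => measurable_pi_apply j)
      (measurable_pi_apply i))

lemma Ai_vol {n : ℕ} (i : Fin (n+1)) :
    volume {x : Fin (n+1) → ℝ | (∀ j, x j ∈ Set.Icc (0:ℝ) 1) ∧
      (∑ j ∈ Finset.univ.erase i, x j) ≤ x i} =
    ENNReal.ofReal (1 / (n+1).factorial) := by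
  have hmp := measurePreserving_piFinSuccAbove (fun _ : Fin (n+1) => (volume : Measure ℝ)) i
  set e := MeasurableEquiv.piFinSuccAbove (fun _ : Fin (n+1) => ℝ) i with he
  set T : Set (ℝ × (Fin n → ℝ)) :=
    {p | p.1 ∈ Set.Icc (0:ℝ) 1 ∧ (∀ j, 0 ≤ p.2 j) ∧ ∑ j, p.2 j ≤ p.1} with hT
  have hTm : MeasurableSet T := by
    have : T = {p : ℝ × (Fin n → ℝ) | p.1 ∈ Set.Icc (0:ℝ) 1} ∩
        ((⋂ j, {p : ℝ × (Fin n → ℝ) | 0 ≤ p.2 j}) ∩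
          {p : ℝ × (Fin n → ℝ) | ∑ j, p.2 j ≤ p.1}) := by
      ext p; simp [hT, Set.mem_iInter, and_assoc]
    rw [this]
    exact (measurable_fst measurableSet_Icc).inter
      ((MeasurableSet.iInter fun j => measurableSet_le measurable_const
          ((measurable_pi_apply j).comp measurable_snd)).inter
        (measurableSet_le
          (Finset.measurable_sum _ fun j _ => (measurable_pi_apply j).comp measurable_snd)
          measurable_fst))
  have hpre : {x : Fin (n+1) → ℝ | (∀ j, x j ∈ Set.Icc (0:ℝ) 1) ∧
      (∑ j ∈ Finset.univ.erase i, x j) ≤ x i} = ⇑e ⁻¹' T := by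
    ext x
    simp only [Set.mem_preimage, hT, Set.mem_setOf_eq, he,
      MeasurableEquiv.piFinSuccAbove, MeasurableEquiv.coe_mk, Equiv.symm_symm]
    rw [erase_sum_eq i x, Fin.forall_iff_succAbove i]
    constructor
    · rintro ⟨⟨h0, hs⟩, hsum⟩
      exact ⟨h0, fun j => (hs j).1, hsum⟩
    · rintro ⟨h0, hs, hsum⟩
      refine ⟨⟨h0, fun j => ?_⟩, hsum⟩
      have hj : (0:ℝ) ≤ x (i.succAbove j) := hs j
      have hle : x (i.succAbove j) ≤ ∑ j, x (i.succAbove j) :=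
        Finset.single_le_sum (fun j _ => by simpa using hs j) (Finset.mem_univ j)
      exact ⟨hj, le_trans hle (le_trans hsum h0.2)⟩
  have key : (Measure.pi fun _ : Fin (n+1) => (volume : Measure ℝ)) (⇑e ⁻¹' T) =
      ((volume : Measure ℝ).prod (Measure.pi fun _ : Fin n => (volume : Measure ℝ))) T :=
    hmp.measure_preimage hTm.nullMeasurableSet
  rw [hpre, show (volume : Measure (Fin (n+1) → ℝ)) = Measure.pi fun _ => volume from volume_pi,
    key, show (Measure.pi fun _ : Fin n => (volume : Measure ℝ)) = volume from volume_pi.symm,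
    Measure.prod_apply hTm]
  have hslice : ∀ a : ℝ, (volume : Measure (Fin n → ℝ)) (Prod.mk a ⁻¹' T) =
      Set.indicator (Set.Icc 0 1) (fun a => ENNReal.ofReal (a ^ n / n.factorial)) a := by
    intro a
    by_cases ha : a ∈ Set.Icc (0:ℝ) 1
    · rw [Set.indicator_of_mem ha]
      have : Prod.mk a ⁻¹' T = {y : Fin n → ℝ | (∀ j, 0 ≤ y j) ∧ ∑ j, y j ≤ a} := by
        ext y; simp only [Set.mem_preimage, hT, Set.mem_setOf_eq]; tauto
      rw [this, simplex_vol n a ha.1]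
    · rw [Set.indicator_of_notMem ha]
      have : Prod.mk a ⁻¹' T = (∅ : Set (Fin n → ℝ)) := by
        ext y
        simp only [Set.mem_preimage, hT, Set.mem_setOf_eq, Set.mem_empty_iff_false,
          iff_false, not_and]
        intro h0; exact absurd h0 ha
      rw [this]; simp
  simp_rw [hslice]
  rw [lintegral_indicator measurableSet_Icc, ← ofReal_integral_eq_lintegral_ofReal]
  · congr 1
    rw [MeasureTheory.integral_Icc_eq_integral_Ioc,
      ← intervalIntegral.integral_of_le (zero_le_one' ℝ),
      intervalIntegral.integral_div, integral_pow]
    rw [Nat.factorial_succ]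
    push_cast
    field_simp
    simp
  · exact (Continuous.integrableOn_Icc (by continuity))
  · filter_upwards [ae_restrict_mem measurableSet_Icc] with a ha
    exact div_nonneg (pow_nonneg ha.1 _) (by positivity)

lemma diag_null {n : ℕ} (i k : Fin n) (h : i ≠ k) :
    volume {x : Fin n → ℝ | x i = x k} = 0 := by
  set f : (Fin n → ℝ) →ₗ[ℝ] ℝ := (LinearMap.proj i : (Fin n → ℝ) →ₗ[ℝ] ℝ) - (LinearMap.proj k : (Fin n → ℝ) →ₗ[ℝ] ℝ) with hf
  have hset : {x : Fin n → ℝ | x i = x k} = ↑(LinearMap.ker f) := by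
    ext x
    simp only [Set.mem_setOf_eq, SetLike.mem_coe, LinearMap.mem_ker, hf,
      LinearMap.sub_apply, LinearMap.proj_apply, sub_eq_zero]
  rw [hset]
  apply Measure.addHaar_submodule
  intro htop
  have hx : (Pi.single i 1 : Fin n → ℝ) ∈ LinearMap.ker f := htop ▸ Submodule.mem_top
  rw [LinearMap.mem_ker, hf, LinearMap.sub_apply, LinearMap.proj_apply,
    LinearMap.proj_apply, Pi.single_eq_same, Pi.single_eq_of_ne (Ne.symm h)] at hx
  norm_num at hx


/-- If `n ≥ 1` real numbers are chosen uniformly from `[0,1]`, the probability that they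
cannot form an `n`-gon (some coordinate is at least the sum of all the others) is
`1/(n-1)!`; equivalently, the probability that they can form an `n`-gon (each coordinate
is strictly less than the sum of the others) is `1 - 1/(n-1)!`. -/
theorem no_ngon_prob_eq_inv_factorial (n : ℕ) (hn : 1 ≤ n) :
    volume {x : Fin n → ℝ | (∀ i, x i ∈ Set.Icc (0 : ℝ) 1) ∧
        ∃ i, (∑ j ∈ Finset.univ.erase i, x j) ≤ x i} =
      1 / (Nat.factorial (n - 1) : ENNReal) ∧
    volume {x : Fin n → ℝ | (∀ i, x i ∈ Set.Icc (0 : ℝ) 1) ∧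
        ∀ i, x i < ∑ j ∈ Finset.univ.erase i, x j} =
      1 - 1 / (Nat.factorial (n - 1) : ENNReal) := by
  obtain ⟨m, rfl⟩ : ∃ m, n = m + 1 := ⟨n - 1, (Nat.succ_pred_eq_of_pos hn).symm⟩
  set A : Fin (m+1) → Set (Fin (m+1) → ℝ) := fun i =>
    {x : Fin (m+1) → ℝ | (∀ j, x j ∈ Set.Icc (0:ℝ) 1) ∧
      (∑ j ∈ Finset.univ.erase i, x j) ≤ x i} with hA
  have hbad : {x : Fin (m+1) → ℝ | (∀ i, x i ∈ Set.Icc (0 : ℝ) 1) ∧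
      ∃ i, (∑ j ∈ Finset.univ.erase i, x j) ≤ x i} = ⋃ i, A i := by
    ext x; simp only [Set.mem_setOf_eq, Set.mem_iUnion, hA]; tauto
  have hdisj : Pairwise (Function.onFun (AEDisjoint volume) A) := by
    intro i k hik
    have hsub : A i ∩ A k ⊆ {x : Fin (m+1) → ℝ | x i = x k} := by
      rintro x ⟨⟨hc, hi⟩, _, hk⟩
      have hkmem : k ∈ Finset.univ.erase i := Finset.mem_erase.2 ⟨hik.symm, Finset.mem_univ k⟩
      have himem : i ∈ Finset.univ.erase k := Finset.mem_erase.2 ⟨hik, Finset.mem_univ i⟩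
      have e1 : x k + ∑ j ∈ (Finset.univ.erase i).erase k, x j =
          ∑ j ∈ Finset.univ.erase i, x j := Finset.add_sum_erase _ _ hkmem
      have e2 : x i + ∑ j ∈ (Finset.univ.erase k).erase i, x j =
          ∑ j ∈ Finset.univ.erase k, x j := Finset.add_sum_erase _ _ himem
      rw [Finset.erase_right_comm] at e2
      have hS : 0 ≤ ∑ j ∈ (Finset.univ.erase i).erase k, x j :=
        Finset.sum_nonneg fun j _ => (hc j).1
      show x i = x k
      linarith
    exact measure_mono_null hsub (diag_null i k hik)
  have hAm : ∀ i, MeasurableSet (A i) := fun i => Ai_meas i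
  have hbadvol : volume (⋃ i, A i) = 1 / (Nat.factorial m : ENNReal) := by
    rw [measure_iUnion₀ hdisj fun i => (hAm i).nullMeasurableSet]
    have : ∀ i : Fin (m+1), volume (A i) = ENNReal.ofReal (1 / (m+1).factorial) :=
      fun i => Ai_vol i
    rw [tsum_congr this, tsum_fintype]
    rw [Finset.sum_const, Finset.card_univ, Fintype.card_fin, nsmul_eq_mul]
    rw [show ((m+1 : ℕ) : ENNReal) = ENNReal.ofReal ((m+1 : ℕ) : ℝ) from
      (ENNReal.ofReal_natCast _).symm, ← ENNReal.ofReal_mul (by positivity)]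
    have hreal : ((m+1:ℕ):ℝ) * (1 / ((m+1).factorial : ℝ)) = 1 / (m.factorial : ℝ) := by
      rw [Nat.factorial_succ]
      have h1 : (m.factorial : ℝ) ≠ 0 := Nat.cast_ne_zero.2 m.factorial_ne_zero
      push_cast
      field_simp
    rw [hreal, ENNReal.ofReal_div_of_pos (by positivity), ENNReal.ofReal_one,
      ENNReal.ofReal_natCast]
  constructor
  · rw [show m + 1 - 1 = m from rfl, hbad, hbadvol]
  · have hgood : {x : Fin (m+1) → ℝ | (∀ i, x i ∈ Set.Icc (0 : ℝ) 1) ∧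
        ∀ i, x i < ∑ j ∈ Finset.univ.erase i, x j} =
        {x : Fin (m+1) → ℝ | ∀ i, x i ∈ Set.Icc (0 : ℝ) 1} \ (⋃ i, A i) := by
      ext x
      simp only [Set.mem_setOf_eq, Set.mem_diff, Set.mem_iUnion, hA, not_exists]
      constructor
      · rintro ⟨hc, hlt⟩
        exact ⟨hc, fun i ⟨_, hle⟩ => absurd hle (not_le.2 (hlt i))⟩
      · rintro ⟨hc, hno⟩
        refine ⟨hc, fun i => not_le.1 fun hle => hno i ⟨hc, hle⟩⟩
    have hcube : volume {x : Fin (m+1) → ℝ | ∀ i, x i ∈ Set.Icc (0 : ℝ) 1} = 1 := by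
      have : {x : Fin (m+1) → ℝ | ∀ i, x i ∈ Set.Icc (0 : ℝ) 1} =
          Set.pi Set.univ fun _ : Fin (m+1) => Set.Icc (0:ℝ) 1 := by
        ext x; simp [Set.mem_pi, Pi.le_def, forall_and]
      rw [this, volume_pi_pi]
      simp [Real.volume_Icc]
    have hsub : (⋃ i, A i) ⊆ {x : Fin (m+1) → ℝ | ∀ i, x i ∈ Set.Icc (0 : ℝ) 1} := by
      rintro x hx
      obtain ⟨i, hc, -⟩ := Set.mem_iUnion.1 hx
      exact hc
    have hfin : volume (⋃ i, A i) ≠ ⊤ := by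
      rw [hbadvol]
      simp [ENNReal.div_eq_top, Nat.factorial_ne_zero]
    rw [hgood, measure_diff hsub ((MeasurableSet.iUnion hAm).nullMeasurableSet) hfin,
      hcube, hbadvol]
    norm_num
end
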